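/- arXiv:2603.20398 — 8 statements merged into one kernel-verified Lean document; each statement's English description precedes it below -/
import Mathlib

section
/- Let γ ∈ {Büchi, co-Büchi} and let (G, k, β) be a γ-coverage game with k ≥ |β|. Then Disruptor has a disrupting strategy in (G, k, β) if and only if there exists an objective α ∈ β such that Player 2 has a winning strategy in the two-player game (G, α). -/
open scoped Classical

universe u

/-- A strategy: maps the strict history (the play so far, excluding the current
vertex) and the current vertex to a next vertex. -/
abbrev Strat (V : Type u) := List V → V → V

/-- A two-player game graph `G = (V₁, V₂, v₀, E)`. -/
structure GameGraph (V : Type u) where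
  V1 : Set V
  V2 : Set V
  init : V
  E : V → V → Prop

namespace GameGraph

variable {V : Type u}

/-- `V₁` and `V₂` are disjoint, together cover all vertices, and `E` is total. -/
def WellFormed (G : GameGraph V) : Prop :=
  Disjoint G.V1 G.V2 ∧ G.V1 ∪ G.V2 = Set.univ ∧ ∀ v, ∃ u, G.E v u

/-- `f` is a Player-1 strategy: at every history ending in a Player-1 vertex,
it chooses an `E`-successor. -/
def IsStrategy1 (G : GameGraph V) (f : Strat V) : Prop :=
  ∀ (h : List V) (v : V), v ∈ G.V1 → G.E v (f h v)

/-- `f` is a Player-2 strategy. -/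
def IsStrategy2 (G : GameGraph V) (f : Strat V) : Prop :=
  ∀ (h : List V) (v : V), v ∈ G.V2 → G.E v (f h v)

/-- The pair (strict history, current vertex) after `n` steps from `v`, when the
players move according to `f1` and `f2`. -/
noncomputable def run (G : GameGraph V) (f1 f2 : Strat V) (v : V) : ℕ → List V × V
  | 0 => ([], v)
  | n + 1 =>
      let p := run G f1 f2 v n
      (p.1 ++ [p.2], if p.2 ∈ G.V1 then f1 p.1 p.2 else f2 p.1 p.2)

/-- The play from `v` generated by `f1` and `f2`. -/
noncomputable def outcomeFrom (G : GameGraph V) (f1 f2 : Strat V) (v : V) (n : ℕ) : V :=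
  (G.run f1 f2 v n).2

/-- The play from the initial vertex generated by `f1` and `f2`. -/
noncomputable def outcome (G : GameGraph V) (f1 f2 : Strat V) : ℕ → V :=
  G.outcomeFrom f1 f2 G.init

/-- `Gᵛ`: the same game graph with initial vertex `v`. -/
def withInit (G : GameGraph V) (v : V) : GameGraph V := { G with init := v }

end GameGraph

variable {V : Type u}

/-- The set of vertices visited infinitely often along a play. -/
def infSet (ρ : ℕ → V) : Set V := { u | ∀ n, ∃ m, n ≤ m ∧ ρ m = u }

/-- The two objective types: Büchi and co-Büchi. -/
inductive ObjKind : Type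
  | buchi
  | cobuchi

/-- Satisfaction of a `γ` objective `α` by a play `ρ`. -/
def SatObj (γ : ObjKind) (ρ : ℕ → V) (α : Set V) : Prop :=
  match γ with
  | .buchi => (infSet ρ ∩ α).Nonempty
  | .cobuchi => infSet ρ ∩ α = ∅

/-- `F` is a covering strategy in the `γ`-coverage game `(G, k, β)`: against every
Player-2 strategy, every objective of `β` is satisfied by the play of some agent. -/
def IsCovering (G : GameGraph V) (γ : ObjKind) (k : ℕ) (β : Finset (Set V))
    (F : Fin k → Strat V) : Prop :=
  ∀ f2, G.IsStrategy2 f2 → ∀ α ∈ β, ∃ i, SatObj γ (G.outcome (F i) f2) α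

/-- Coverer has a covering strategy in the `γ`-coverage game `(G, k, β)`. -/
def CovererWins (G : GameGraph V) (γ : ObjKind) (k : ℕ) (β : Finset (Set V)) : Prop :=
  ∃ F : Fin k → Strat V, (∀ i, G.IsStrategy1 (F i)) ∧ IsCovering G γ k β F

/-- `f2` is a disrupting strategy in the `γ`-coverage game `(G, k, β)`: against every
Coverer strategy, some objective of `β` is satisfied by none of the agents' plays. -/
def IsDisrupting (G : GameGraph V) (γ : ObjKind) (k : ℕ) (β : Finset (Set V))
    (f2 : Strat V) : Prop :=
  ∀ F : Fin k → Strat V, (∀ i, G.IsStrategy1 (F i)) →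
    ∃ α ∈ β, ∀ i, ¬ SatObj γ (G.outcome (F i) f2) α

/-- Disruptor has a disrupting strategy in the `γ`-coverage game `(G, k, β)`. -/
def DisruptorWins (G : GameGraph V) (γ : ObjKind) (k : ℕ) (β : Finset (Set V)) : Prop :=
  ∃ f2, G.IsStrategy2 f2 ∧ IsDisrupting G γ k β f2

/-- Player 1 wins the two-player `γ`-game `(G, α)`. -/
def P1WinsGame (G : GameGraph V) (γ : ObjKind) (α : Set V) : Prop :=
  ∃ f1, G.IsStrategy1 f1 ∧ ∀ f2, G.IsStrategy2 f2 → SatObj γ (G.outcome f1 f2) α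

/-- Player 2 wins the two-player `γ`-game `(G, α)`. -/
def P2WinsGame (G : GameGraph V) (γ : ObjKind) (α : Set V) : Prop :=
  ∃ f2, G.IsStrategy2 f2 ∧ ∀ f1, G.IsStrategy1 f1 → ¬ SatObj γ (G.outcome f1 f2) α

/-- for a γ-coverage game (G, k, β) with k ≥ |β|, Disruptor has a
disrupting strategy iff for some objective α ∈ β, Player 2 wins the game (G, α). -/
theorem stmt1 {V : Type u} [Fintype V] (γ : ObjKind) (G : GameGraph V)
    (hG : G.WellFormed) (k : ℕ) (hk1 : 1 ≤ k) (β : Finset (Set V)) (hk : β.card ≤ k) :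
    DisruptorWins G γ k β ↔ ∃ α ∈ β, P2WinsGame G γ α := by
  obtain ⟨hdisj, hcov, htot⟩ := hG
  -- default strategy
  let d : Strat V := fun _ v => Classical.choose (htot v)
  have hd1 : G.IsStrategy1 d := fun h v _ => Classical.choose_spec (htot v)
  constructor
  · rintro ⟨f2, hf2, hdis⟩
    by_contra hno
    push_neg at hno
    have hch : ∀ α ∈ β, ∃ f1, G.IsStrategy1 f1 ∧ SatObj γ (G.outcome f1 f2) α := by
      intro α hα
      have h := hno α hα
      unfold P2WinsGame at h
      push_neg at h
      obtain ⟨f1, h1, h2⟩ := h f2 hf2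
      exact ⟨f1, h1, h2⟩
    choose g hg1 hg2 using hch
    let g' : Set V → Strat V := fun α => if h : α ∈ β then g α h else d
    have hg'1 : ∀ α, G.IsStrategy1 (g' α) := by
      intro α
      by_cases h : α ∈ β
      · simpa [g', h] using hg1 α h
      · simpa [g', h] using hd1
    set L := β.toList with hL
    let F : Fin k → Strat V := fun i =>
      if h : (i : ℕ) < L.length then g' (L.get ⟨i, h⟩) else d
    have hF1 : ∀ i, G.IsStrategy1 (F i) := by
      intro i
      by_cases h : (i : ℕ) < L.length
      · simpa [F, h] using hg'1 (L.get ⟨i, h⟩)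
      · simpa [F, h] using hd1
    obtain ⟨α, hα, hnone⟩ := hdis F hF1
    have hαL : α ∈ L := by simpa [hL] using (Finset.mem_toList).mpr hα
    obtain ⟨j, hj⟩ := List.mem_iff_get.mp hαL
    have hjk : (j : ℕ) < k := lt_of_lt_of_le (by simpa [hL, Finset.length_toList] using j.2) hk
    have hFi : F ⟨j, hjk⟩ = g α hα := by
      have hjl : ((⟨j, hjk⟩ : Fin k) : ℕ) < L.length := j.2
      simp only [F, dif_pos hjl]
      have : L.get ⟨(⟨(j : ℕ), hjk⟩ : Fin k), hjl⟩ = α := by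
        simpa using hj
      rw [this]
      simp [g', hα]
    exact hnone ⟨j, hjk⟩ (by rw [hFi]; exact hg2 α hα)
  · rintro ⟨α, hα, f2, hf2, hwin⟩
    exact ⟨f2, hf2, fun F hF => ⟨α, hα, fun i => hwin (F i) (hF i)⟩⟩
end

section
/- Let γ ∈ {Büchi, co-Büchi} and let (G, k, β) be a γ-coverage game with k ≥ |β|. Then the game is determined: exactly one of the following holds — Coverer has a covering strategy in (G, k, β), or Disruptor has a disrupting strategy in (G, k, β). -/
open scoped Classical

universe u

variable {V : Type u}

set_option linter.unusedSectionVars false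
set_option linter.unnecessarySimpa false
set_option maxHeartbeats 1000000

namespace CovDet
variable {V : Type u} [Fintype V]

/-- iterates of a monotone set map from ∅ form an increasing chain -/
lemma iter_mono_succ {f : Set V → Set V} (hf : Monotone f) (n : ℕ) :
    f^[n] ∅ ⊆ f^[n+1] ∅ := by
  induction n with
  | zero => simp
  | succ n ih =>
      rw [Function.iterate_succ_apply', Function.iterate_succ_apply']
      exact hf ih

lemma iter_mono {f : Set V → Set V} (hf : Monotone f) {m n : ℕ} (h : m ≤ n) :
    f^[m] ∅ ⊆ f^[n] ∅ := by
  induction n with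
  | zero => simpa [Nat.le_zero.mp h]
  | succ n ih =>
      rcases Nat.lt_or_ge m (n+1) with h' | h'
      · exact (ih (Nat.lt_succ_iff.mp h')).trans (iter_mono_succ hf n)
      · simp [Nat.le_antisymm h h']

lemma iter_stab {f : Set V → Set V} {i n : ℕ} (hsi : f^[i+1] ∅ = f^[i] ∅)
    (h : i ≤ n) : f^[n] ∅ = f^[i] ∅ := by
  induction n with
  | zero => simp [Nat.le_zero.mp h]
  | succ n ih =>
      rcases Nat.lt_or_ge i (n+1) with h' | h'
      · rw [Function.iterate_succ_apply', ih (Nat.lt_succ_iff.mp h')]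
        have := hsi
        rwa [Function.iterate_succ_apply'] at this
      · simp [Nat.le_antisymm h h']

lemma exists_stab {f : Set V → Set V} (hf : Monotone f) :
    ∃ i ≤ Fintype.card V, f^[i+1] ∅ = f^[i] ∅ := by
  by_contra hc
  push_neg at hc
  have key : ∀ n ≤ Fintype.card V + 1, n ≤ (f^[n] (∅ : Set V)).ncard := by
    intro n hn
    induction n with
    | zero => simp
    | succ n ih =>
        have h1 : f^[n] (∅ : Set V) ⊂ f^[n+1] ∅ :=
          (iter_mono_succ hf n).ssubset_of_ne (Ne.symm (hc n (by omega)))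
        have := Set.ncard_lt_ncard h1 (Set.toFinite _)
        have := ih (by omega)
        omega
  have h2 := key (Fintype.card V + 1) le_rfl
  have h3 : (f^[Fintype.card V + 1] (∅ : Set V)).ncard ≤ Fintype.card V := by
    have := Set.ncard_le_ncard (Set.subset_univ (f^[Fintype.card V + 1] (∅ : Set V)))
      (Set.toFinite _)
    simpa [Set.ncard_univ, Nat.card_eq_fintype_card] using this
  omega

/-- least fixed point by iteration -/
noncomputable def natLfp (f : Set V → Set V) : Set V := f^[Fintype.card V] ∅

lemma natLfp_fixed {f : Set V → Set V} (hf : Monotone f) : f (natLfp f) = natLfp f := by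
  obtain ⟨i, hi, hsi⟩ := exists_stab hf
  have h1 : natLfp f = f^[i] ∅ := iter_stab hsi hi
  rw [natLfp] at h1 ⊢
  rw [h1]
  have := hsi
  rwa [Function.iterate_succ_apply'] at this

lemma iter_subset_natLfp {f : Set V → Set V} (hf : Monotone f) (n : ℕ) :
    f^[n] ∅ ⊆ natLfp f := by
  obtain ⟨i, hi, hsi⟩ := exists_stab hf
  have h1 : natLfp f = f^[i] ∅ := iter_stab hsi hi
  rcases Nat.lt_or_ge n i with h | h
  · rw [natLfp]
    exact iter_mono hf (h.le.trans hi)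
  · rw [h1, ← iter_stab hsi h]

lemma natLfp_le {f : Set V → Set V} (hf : Monotone f) {Z : Set V} (hZ : f Z ⊆ Z) :
    natLfp f ⊆ Z := by
  have : ∀ n, f^[n] ∅ ⊆ Z := by
    intro n
    induction n with
    | zero => simp
    | succ n ih => rw [Function.iterate_succ_apply']; exact (hf ih).trans hZ
  exact this _

lemma natLfp_mono {f g : Set V → Set V} (hg : Monotone g) (h : ∀ S, f S ⊆ g S) :
    natLfp f ⊆ natLfp g := by
  have : ∀ n, f^[n] ∅ ⊆ natLfp g := by
    intro n
    induction n with
    | zero => simp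
    | succ n ih =>
        rw [Function.iterate_succ_apply']
        exact (h _).trans ((hg ih).trans (natLfp_fixed hg).subset)
  exact this _

section Game
variable (G : GameGraph V) (α : Set V)

/-- Player-1 controlled predecessor. -/
def pre1 (S : Set V) : Set V :=
  {v | (v ∈ G.V1 ∧ ∃ u, G.E v u ∧ u ∈ S) ∨ (v ∉ G.V1 ∧ ∀ u, G.E v u → u ∈ S)}

/-- Player-2 controlled predecessor. -/
def pre2 (S : Set V) : Set V :=
  {v | (v ∉ G.V1 ∧ ∃ u, G.E v u ∧ u ∈ S) ∨ (v ∈ G.V1 ∧ ∀ u, G.E v u → u ∈ S)}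

lemma pre1_mono : Monotone (pre1 G) := by
  intro S T h v hv
  rcases hv with ⟨h1, u, hu1, hu2⟩ | ⟨h1, h2⟩
  · exact Or.inl ⟨h1, u, hu1, h hu2⟩
  · exact Or.inr ⟨h1, fun u hu => h (h2 u hu)⟩

lemma pre2_mono : Monotone (pre2 G) := by
  intro S T h v hv
  rcases hv with ⟨h1, u, hu1, hu2⟩ | ⟨h1, h2⟩
  · exact Or.inl ⟨h1, u, hu1, h hu2⟩
  · exact Or.inr ⟨h1, fun u hu => h (h2 u hu)⟩

lemma pre1_compl (S : Set V) : (pre1 G S)ᶜ = pre2 G Sᶜ := by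
  ext v
  by_cases hv : v ∈ G.V1 <;>
    simp [pre1, pre2, hv, not_or, -Set.mem_compl_iff, Set.mem_compl_iff] <;>
    push_neg <;> tauto

/-- Inner map: one step of the Büchi fixpoint, X ↦ (α ∩ pre1 Y) ∪ pre1 X. -/
def gmap (Y X : Set V) : Set V := (α ∩ pre1 G Y) ∪ pre1 G X

lemma gmap_mono (Y : Set V) : Monotone (gmap G α Y) := by
  intro S T h
  exact Set.union_subset_union_right _ (pre1_mono G h)

/-- A Y = lfp X. (α ∩ pre1 Y) ∪ pre1 X -/
noncomputable def Amap (Y : Set V) : Set V := natLfp (gmap G α Y)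

lemma Amap_fixed (Y : Set V) : gmap G α Y (Amap G α Y) = Amap G α Y :=
  natLfp_fixed (gmap_mono G α Y)

lemma Amap_mono : Monotone (Amap G α) := by
  intro S T h
  refine natLfp_mono (gmap_mono G α T) (fun X => ?_)
  exact Set.union_subset_union_left _ (Set.inter_subset_inter_right _ (pre1_mono G h))

/-- dual of Amap -/
noncomputable def A'map (Y : Set V) : Set V := (Amap G α Yᶜ)ᶜ

lemma A'map_mono : Monotone (A'map G α) := by
  intro S T h
  exact Set.compl_subset_compl.mpr (Amap_mono G α (Set.compl_subset_compl.mpr h))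

/-- the Disruptor's winning region for a single Büchi objective -/
noncomputable def Wc : Set V := natLfp (A'map G α)

/-- the Coverer's (Büchi player's) winning region -/
noncomputable def Wset : Set V := (Wc G α)ᶜ

lemma Wset_fixed : Amap G α (Wset G α) = Wset G α := by
  have h : A'map G α (Wc G α) = Wc G α := natLfp_fixed (A'map_mono G α)
  rw [A'map] at h
  have h2 := congrArg compl h
  rw [compl_compl] at h2
  exact h2

/-- the fixed-point equation satisfied by A' Z -/
lemma A'map_eq (Z : Set V) :
    A'map G α Z = (αᶜ ∪ pre2 G Z) ∩ pre2 G (A'map G α Z) := by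
  have h := Amap_fixed G α Zᶜ
  rw [gmap] at h
  have := congrArg compl h
  rw [Set.compl_union, Set.compl_inter, pre1_compl, pre1_compl, compl_compl] at this
  rw [A'map]
  exact this.symm

/-- inner rank for Player 1's strategy on W -/
noncomputable def irank (v : V) : ℕ := sInf {n | v ∈ (gmap G α (Wset G α))^[n] ∅}

/-- outer rank for Player 2's strategy on Wᶜ -/
noncomputable def orank (v : V) : ℕ := sInf {n | v ∈ (A'map G α)^[n] ∅}

lemma irank_spec {v : V} (hv : v ∈ Wset G α) :
    v ∈ (gmap G α (Wset G α))^[irank G α v] ∅ ∧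
    ∀ m < irank G α v, v ∉ (gmap G α (Wset G α))^[m] ∅ := by
  have hne : {n | v ∈ (gmap G α (Wset G α))^[n] ∅}.Nonempty := by
    refine ⟨Fintype.card V, ?_⟩
    have : v ∈ natLfp (gmap G α (Wset G α)) := by
      rw [show natLfp (gmap G α (Wset G α)) = Amap G α (Wset G α) from rfl, Wset_fixed]
      exact hv
    exact this
  exact ⟨Nat.sInf_mem hne, fun m hm => Nat.notMem_of_lt_sInf hm⟩

lemma iter_sub_Wset (n : ℕ) : (gmap G α (Wset G α))^[n] ∅ ⊆ Wset G α := by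
  have := iter_subset_natLfp (gmap_mono G α (Wset G α)) n
  rwa [show natLfp (gmap G α (Wset G α)) = Amap G α (Wset G α) from rfl, Wset_fixed] at this

lemma irank_le {u : V} {m : ℕ} (hu : u ∈ (gmap G α (Wset G α))^[m] ∅) : irank G α u ≤ m :=
  Nat.sInf_le hu

/-- Claim C1: from a P1 vertex in W, P1 can move within W, decreasing rank unless in α -/
lemma claimC1 {v : V} (hv : v ∈ Wset G α) (h1 : v ∈ G.V1) :
    ∃ u, G.E v u ∧ u ∈ Wset G α ∧ (v ∈ α ∨ irank G α u < irank G α v) := by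
  obtain ⟨hmem, hmin⟩ := irank_spec G α hv
  rcases Nat.exists_eq_succ_of_ne_zero (n := irank G α v) (by
    intro h0; rw [h0] at hmem; exact hmem) with ⟨m, hm⟩
  rw [hm, Function.iterate_succ_apply'] at hmem
  rcases hmem with ⟨hva, hvp⟩ | hvp
  · -- v ∈ α ∩ pre1 W
    rcases hvp with ⟨_, u, hu1, hu2⟩ | ⟨h1', _⟩
    · exact ⟨u, hu1, hu2, Or.inl hva⟩
    · exact absurd h1 h1'
  · rcases hvp with ⟨_, u, hu1, hu2⟩ | ⟨h1', _⟩
    · refine ⟨u, hu1, iter_sub_Wset G α m hu2, Or.inr ?_⟩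
      have := irank_le G α hu2
      omega
    · exact absurd h1 h1'

/-- Claim C2: from a P2 vertex in W, all moves stay in W, decreasing rank unless in α -/
lemma claimC2 {v : V} (hv : v ∈ Wset G α) (h1 : v ∉ G.V1) (u : V) (hu : G.E v u) :
    u ∈ Wset G α ∧ (v ∈ α ∨ irank G α u < irank G α v) := by
  obtain ⟨hmem, hmin⟩ := irank_spec G α hv
  rcases Nat.exists_eq_succ_of_ne_zero (n := irank G α v) (by
    intro h0; rw [h0] at hmem; exact hmem) with ⟨m, hm⟩
  rw [hm, Function.iterate_succ_apply'] at hmem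
  rcases hmem with ⟨hva, hvp⟩ | hvp
  · rcases hvp with ⟨h1', _⟩ | ⟨_, hall⟩
    · exact absurd h1' h1
    · exact ⟨hall u hu, Or.inl hva⟩
  · rcases hvp with ⟨h1', _⟩ | ⟨_, hall⟩
    · exact absurd h1' h1
    · have h2 := hall u hu
      refine ⟨iter_sub_Wset G α m h2, Or.inr ?_⟩
      have := irank_le G α h2
      omega

lemma orank_spec {v : V} (hv : v ∈ Wc G α) :
    v ∈ (A'map G α)^[orank G α v] ∅ ∧
    ∀ m < orank G α v, v ∉ (A'map G α)^[m] ∅ := by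
  have hne : {n | v ∈ (A'map G α)^[n] ∅}.Nonempty := ⟨Fintype.card V, hv⟩
  exact ⟨Nat.sInf_mem hne, fun m hm => Nat.notMem_of_lt_sInf hm⟩

lemma iter_sub_Wc (n : ℕ) : (A'map G α)^[n] ∅ ⊆ Wc G α :=
  iter_subset_natLfp (A'map_mono G α) n

lemma orank_le {u : V} {m : ℕ} (hu : u ∈ (A'map G α)^[m] ∅) : orank G α u ≤ m :=
  Nat.sInf_le hu

/-- Claim D: from a P2 vertex in Wc, P2 can move within Wc, not increasing orank,
strictly decreasing it if the current vertex is in α -/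
lemma claimD {v : V} (hv : v ∈ Wc G α) (h1 : v ∉ G.V1) :
    ∃ u, G.E v u ∧ u ∈ Wc G α ∧ orank G α u ≤ orank G α v ∧
      (v ∈ α → orank G α u < orank G α v) := by
  obtain ⟨hmem, hmin⟩ := orank_spec G α hv
  rcases Nat.exists_eq_succ_of_ne_zero (n := orank G α v) (by
    intro h0; rw [h0] at hmem; exact hmem) with ⟨m, hm⟩
  have hmem' := hmem
  rw [hm, Function.iterate_succ_apply'] at hmem'
  have heq := A'map_eq G α ((A'map G α)^[m] ∅)
  rw [heq] at hmem'
  obtain ⟨hv1, hv2⟩ := hmem'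
  by_cases hva : v ∈ α
  · -- use pre2 of previous stage
    rcases hv1 with hva' | hvp
    · exact absurd hva hva'
    · rcases hvp with ⟨_, u, hu1, hu2⟩ | ⟨h1', _⟩
      · refine ⟨u, hu1, iter_sub_Wc G α m hu2, ?_, ?_⟩ <;>
        · have := orank_le G α hu2; omega
      · exact absurd h1' h1
  · -- use pre2 of current stage
    rcases hv2 with ⟨_, u, hu1, hu2⟩ | ⟨h1', _⟩
    · rw [← Function.iterate_succ_apply' (A'map G α) m ∅, ← hm] at hu2
      refine ⟨u, hu1, iter_sub_Wc G α _ hu2, ?_, fun h => absurd h hva⟩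
      exact orank_le G α hu2
    · exact absurd h1' h1

/-- Claim D2: from a P1 vertex in Wc, all moves stay in Wc -/
lemma claimD2 {v : V} (hv : v ∈ Wc G α) (h1 : v ∈ G.V1) (u : V) (hu : G.E v u) :
    u ∈ Wc G α ∧ orank G α u ≤ orank G α v ∧
      (v ∈ α → orank G α u < orank G α v) := by
  obtain ⟨hmem, hmin⟩ := orank_spec G α hv
  rcases Nat.exists_eq_succ_of_ne_zero (n := orank G α v) (by
    intro h0; rw [h0] at hmem; exact hmem) with ⟨m, hm⟩
  have hmem' := hmem
  rw [hm, Function.iterate_succ_apply'] at hmem'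
  have heq := A'map_eq G α ((A'map G α)^[m] ∅)
  rw [heq] at hmem'
  obtain ⟨hv1, hv2⟩ := hmem'
  by_cases hva : v ∈ α
  · rcases hv1 with hva' | hvp
    · exact absurd hva hva'
    · rcases hvp with ⟨h1', _⟩ | ⟨_, hall⟩
      · exact absurd h1 h1'
      · have h2 := hall u hu
        refine ⟨iter_sub_Wc G α m h2, ?_, ?_⟩ <;>
        · have := orank_le G α h2; omega
  · rcases hv2 with ⟨h1', _⟩ | ⟨_, hall⟩
    · exact absurd h1 h1'
    · have h2 := hall u hu
      rw [← Function.iterate_succ_apply' (A'map G α) m ∅, ← hm] at h2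
      exact ⟨iter_sub_Wc G α _ h2, orank_le G α h2, fun h => absurd h hva⟩

end Game

section Strat
variable (G : GameGraph V) (α : Set V) (hG : G.WellFormed)

/-- a default valid move -/
noncomputable def dmove (hG : G.WellFormed) (v : V) : V := Classical.choose (hG.2.2 v)

lemma dmove_spec (v : V) : G.E v (dmove G hG v) := Classical.choose_spec (hG.2.2 v)

/-- Player 1's positional Büchi strategy -/
noncomputable def f1W : Strat V := fun _ v =>
  if h : v ∈ Wset G α ∧ v ∈ G.V1 then Classical.choose (claimC1 G α h.1 h.2)
  else dmove G hG v

lemma f1W_strat : G.IsStrategy1 (f1W G α hG) := by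
  intro h v hv
  rw [f1W]
  by_cases hw : v ∈ Wset G α ∧ v ∈ G.V1
  · rw [dif_pos hw]; exact (Classical.choose_spec (claimC1 G α hw.1 hw.2)).1
  · rw [dif_neg hw]; exact dmove_spec G hG v

/-- Player 2's positional co-Büchi (disrupting) strategy -/
noncomputable def f2W : Strat V := fun _ v =>
  if h : v ∈ Wc G α ∧ v ∉ G.V1 then Classical.choose (claimD G α h.1 h.2)
  else dmove G hG v

lemma f2W_strat : G.IsStrategy2 (f2W G α hG) := by
  intro h v hv
  rw [f2W]
  by_cases hw : v ∈ Wc G α ∧ v ∉ G.V1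
  · rw [dif_pos hw]; exact (Classical.choose_spec (claimD G α hw.1 hw.2)).1
  · rw [dif_neg hw]; exact dmove_spec G hG v

include hG in
lemma mem_V2_iff {v : V} : v ∈ G.V2 ↔ v ∉ G.V1 := by
  constructor
  · intro h2 h1
    exact Set.disjoint_left.mp hG.1 h1 h2
  · intro h1
    have := hG.2.1
    have hv : v ∈ G.V1 ∪ G.V2 := by rw [this]; trivial
    rcases hv with h | h
    · exact absurd h h1
    · exact h

/-- Büchi side: playing f1W from a vertex in W, the play stays in W and
decreases irank or visits α at each step -/
lemma f1W_invariant (f2 : Strat V) (hf2 : G.IsStrategy2 f2) {v0 : V} (h0 : v0 ∈ Wset G α) :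
    ∀ n, G.outcomeFrom (f1W G α hG) f2 v0 n ∈ Wset G α ∧
      (G.outcomeFrom (f1W G α hG) f2 v0 n ∈ α ∨
        irank G α (G.outcomeFrom (f1W G α hG) f2 v0 (n+1)) <
          irank G α (G.outcomeFrom (f1W G α hG) f2 v0 n)) ∧
      G.outcomeFrom (f1W G α hG) f2 v0 (n+1) ∈ Wset G α := by
  have step : ∀ n, G.outcomeFrom (f1W G α hG) f2 v0 n ∈ Wset G α →
      (G.outcomeFrom (f1W G α hG) f2 v0 n ∈ α ∨
        irank G α (G.outcomeFrom (f1W G α hG) f2 v0 (n+1)) <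
          irank G α (G.outcomeFrom (f1W G α hG) f2 v0 n)) ∧
      G.outcomeFrom (f1W G α hG) f2 v0 (n+1) ∈ Wset G α := by
    intro n hn
    set p := G.run (f1W G α hG) f2 v0 n with hp
    have hsucc : G.outcomeFrom (f1W G α hG) f2 v0 (n+1) =
        (if p.2 ∈ G.V1 then f1W G α hG p.1 p.2 else f2 p.1 p.2) := rfl
    have hcur : G.outcomeFrom (f1W G α hG) f2 v0 n = p.2 := rfl
    rw [hcur] at hn ⊢
    rw [hsucc]
    by_cases h1 : p.2 ∈ G.V1
    · rw [if_pos h1, f1W, dif_pos ⟨hn, h1⟩]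
      obtain ⟨_, hw, hr⟩ := Classical.choose_spec (claimC1 G α hn h1)
      exact ⟨by tauto, hw⟩
    · rw [if_neg h1]
      have hE : G.E p.2 (f2 p.1 p.2) := hf2 p.1 p.2 ((mem_V2_iff G hG).mpr h1)
      obtain ⟨hw, hr⟩ := claimC2 G α hn h1 _ hE
      exact ⟨by tauto, hw⟩
  intro n
  induction n with
  | zero =>
      have h := step 0 h0
      exact ⟨h0, h.1, h.2⟩
  | succ n ih =>
      have h := step (n+1) ih.2.2
      exact ⟨ih.2.2, h.1, h.2⟩

/-- from any position, the play visits α again -/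
lemma f1W_buchi (f2 : Strat V) (hf2 : G.IsStrategy2 f2) {v0 : V} (h0 : v0 ∈ Wset G α) :
    ∀ n, ∃ m, n ≤ m ∧ G.outcomeFrom (f1W G α hG) f2 v0 m ∈ α := by
  intro n
  set ρ := G.outcomeFrom (f1W G α hG) f2 v0 with hρ
  by_contra hc
  push_neg at hc
  -- then irank strictly decreases forever from n
  have dec : ∀ j, irank G α (ρ (n + j + 1)) < irank G α (ρ (n + j)) := by
    intro j
    have h := f1W_invariant G α hG f2 hf2 h0 (n + j)
    rcases h.2.1 with h | h
    · exact absurd h (hc (n+j) (by omega))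
    · exact h
  have : ∀ j, irank G α (ρ (n + j)) + j ≤ irank G α (ρ n) := by
    intro j
    induction j with
    | zero => simp
    | succ j ih =>
        have := dec j
        have h2 : n + (j+1) = n + j + 1 := by omega
        rw [h2]
        omega
  have h3 := this (irank G α (ρ n) + 1)
  omega

/-- co-Büchi side: playing f2W from Wc, orank never increases and strictly
decreases on α-visits -/
lemma f2W_invariant (f1 : Strat V) (hf1 : G.IsStrategy1 f1) {v0 : V} (h0 : v0 ∈ Wc G α) :
    ∀ n, G.outcomeFrom f1 (f2W G α hG) v0 n ∈ Wc G α ∧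
      orank G α (G.outcomeFrom f1 (f2W G α hG) v0 (n+1)) ≤
        orank G α (G.outcomeFrom f1 (f2W G α hG) v0 n) ∧
      (G.outcomeFrom f1 (f2W G α hG) v0 n ∈ α →
        orank G α (G.outcomeFrom f1 (f2W G α hG) v0 (n+1)) <
          orank G α (G.outcomeFrom f1 (f2W G α hG) v0 n)) ∧
      G.outcomeFrom f1 (f2W G α hG) v0 (n+1) ∈ Wc G α := by
  have step : ∀ n, G.outcomeFrom f1 (f2W G α hG) v0 n ∈ Wc G α →
      orank G α (G.outcomeFrom f1 (f2W G α hG) v0 (n+1)) ≤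
        orank G α (G.outcomeFrom f1 (f2W G α hG) v0 n) ∧
      (G.outcomeFrom f1 (f2W G α hG) v0 n ∈ α →
        orank G α (G.outcomeFrom f1 (f2W G α hG) v0 (n+1)) <
          orank G α (G.outcomeFrom f1 (f2W G α hG) v0 n)) ∧
      G.outcomeFrom f1 (f2W G α hG) v0 (n+1) ∈ Wc G α := by
    intro n hn
    set p := G.run f1 (f2W G α hG) v0 n with hp
    have hsucc : G.outcomeFrom f1 (f2W G α hG) v0 (n+1) =
        (if p.2 ∈ G.V1 then f1 p.1 p.2 else f2W G α hG p.1 p.2) := rfl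
    have hcur : G.outcomeFrom f1 (f2W G α hG) v0 n = p.2 := rfl
    rw [hcur] at hn ⊢
    rw [hsucc]
    by_cases h1 : p.2 ∈ G.V1
    · rw [if_pos h1]
      have hE : G.E p.2 (f1 p.1 p.2) := hf1 p.1 p.2 h1
      obtain ⟨hw, hr1, hr2⟩ := claimD2 G α hn h1 _ hE
      exact ⟨hr1, hr2, hw⟩
    · rw [if_neg h1, f2W, dif_pos ⟨hn, h1⟩]
      obtain ⟨_, hw, hr1, hr2⟩ := Classical.choose_spec (claimD G α hn h1)
      exact ⟨hr1, hr2, hw⟩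
  intro n
  induction n with
  | zero =>
      have h := step 0 h0
      exact ⟨h0, h⟩
  | succ n ih =>
      have h := step (n+1) ih.2.2.2
      exact ⟨ih.2.2.2, h⟩

/-- the play visits α only finitely often -/
lemma f2W_cobuchi (f1 : Strat V) (hf1 : G.IsStrategy1 f1) {v0 : V} (h0 : v0 ∈ Wc G α) :
    ∃ N, ∀ m, N ≤ m → G.outcomeFrom f1 (f2W G α hG) v0 m ∉ α := by
  set ρ := G.outcomeFrom f1 (f2W G α hG) v0 with hρ
  set s := fun n => orank G α (ρ n) with hs
  have inv := f2W_invariant G α hG f1 hf1 h0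
  -- counting: s n + #α-visits before n ≤ s 0
  have count : ∀ n, s n + ((Finset.range n).filter (fun m => ρ m ∈ α)).card ≤ s 0 := by
    intro n
    induction n with
    | zero => simp
    | succ n ih =>
        rw [Finset.range_add_one, Finset.filter_insert]
        by_cases hα : ρ n ∈ α
        · rw [if_pos hα, Finset.card_insert_of_notMem (by simp)]
          have h5 : s (n+1) < s n := (inv n).2.2.1 hα
          omega
        · rw [if_neg hα]
          have h5 : s (n+1) ≤ s n := (inv n).2.1
          omega
  -- so the set of α-visit times is finite
  by_contra hc
  push_neg at hc
  -- build s 0 + 1 many α-visits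
  have grow : ∀ k, ∃ n, k ≤ ((Finset.range n).filter (fun m => ρ m ∈ α)).card := by
    intro k
    induction k with
    | zero => exact ⟨0, by simp⟩
    | succ k ih =>
        obtain ⟨n, hn⟩ := ih
        obtain ⟨m, hm1, hm2⟩ := hc n
        refine ⟨m + 1, ?_⟩
        have hsub : (Finset.range n).filter (fun j => ρ j ∈ α) ⊆
            (Finset.range m).filter (fun j => ρ j ∈ α) :=
          Finset.filter_subset_filter _ (Finset.range_subset_range.mpr hm1)
        have hlt : ((Finset.range m).filter (fun j => ρ j ∈ α)).card <
            ((Finset.range (m+1)).filter (fun j => ρ j ∈ α)).card := by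
          rw [Finset.range_add_one, Finset.filter_insert, if_pos hm2,
            Finset.card_insert_of_notMem (by simp)]
          omega
        have := Finset.card_le_card hsub
        omega
  obtain ⟨n, hn⟩ := grow (s 0 + 1)
  have := count n
  omega

end Strat

section Det
variable (G : GameGraph V) (α : Set V)

/-- pigeonhole: if α is visited infinitely often, some vertex of α is in infSet -/
lemma infSet_of_io {ρ : ℕ → V} (h : ∀ n, ∃ m, n ≤ m ∧ ρ m ∈ α) :
    (infSet ρ ∩ α).Nonempty := by
  by_contra hc
  rw [Set.not_nonempty_iff_eq_empty] at hc
  -- every u ∈ α is visited finitely often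
  have hfin : ∀ u ∈ α, ({m | ρ m = u}).Finite := by
    intro u hu
    by_contra hinf
    have : u ∈ infSet ρ ∩ α := by
      refine ⟨fun n => ?_, hu⟩
      by_contra hb
      push_neg at hb
      have : {m | ρ m = u} ⊆ Set.Iio n := by
        intro m hm
        by_contra hmn
        simp only [Set.mem_Iio, not_lt] at hmn
        exact (hb m hmn) hm
      exact hinf (Set.Finite.subset (Set.finite_Iio n) this)
    rw [hc] at this
    exact this
  have hsub : {m | ρ m ∈ α} ⊆ ⋃ u ∈ α, {m | ρ m = u} := by
    intro m hm
    exact Set.mem_biUnion hm rfl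
  have hfin2 : ({m | ρ m ∈ α}).Finite :=
    Set.Finite.subset (Set.Finite.biUnion (Set.toFinite α) hfin) hsub
  obtain ⟨b, hb⟩ := hfin2.bddAbove
  obtain ⟨m, hm1, hm2⟩ := h (b + 1)
  have := hb hm2
  omega

/-- determinacy of the single-objective Büchi game -/
theorem buchi_determined (hG : G.WellFormed) :
    (∃ f1, G.IsStrategy1 f1 ∧ ∀ f2, G.IsStrategy2 f2 →
      (infSet (G.outcome f1 f2) ∩ α).Nonempty)
    ∨ (∃ f2, G.IsStrategy2 f2 ∧ ∀ f1, G.IsStrategy1 f1 →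
      infSet (G.outcome f1 f2) ∩ α = ∅) := by
  by_cases h0 : G.init ∈ Wset G α
  · left
    refine ⟨f1W G α hG, f1W_strat G α hG, fun f2 hf2 => ?_⟩
    exact infSet_of_io α (f1W_buchi G α hG f2 hf2 h0)
  · right
    have h0' : G.init ∈ Wc G α := by
      rw [Wset] at h0
      simpa using h0
    refine ⟨f2W G α hG, f2W_strat G α hG, fun f1 hf1 => ?_⟩
    obtain ⟨N, hN⟩ := f2W_cobuchi G α hG f1 hf1 h0'
    ext u
    simp only [Set.mem_inter_iff, Set.mem_empty_iff_false, iff_false, not_and]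
    intro hinf hα
    obtain ⟨m, hm1, hm2⟩ := hinf N
    refine hN m hm1 ?_
    show G.outcome f1 (f2W G α hG) m ∈ α
    rw [hm2]
    exact hα

/-- the role-swapped game -/
def swapG : GameGraph V := ⟨G.V2, G.V1, G.init, G.E⟩

lemma swap_wf (hG : G.WellFormed) : (swapG G).WellFormed :=
  ⟨hG.1.symm, by rw [show (swapG G).V1 ∪ (swapG G).V2 = G.V2 ∪ G.V1 from rfl,
    Set.union_comm]; exact hG.2.1, hG.2.2⟩

lemma swap_run (hG : G.WellFormed) (f1 f2 : Strat V) (v : V) (n : ℕ) :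
    (swapG G).run f2 f1 v n = G.run f1 f2 v n := by
  induction n with
  | zero => rfl
  | succ n ih =>
      rw [GameGraph.run, GameGraph.run, ih]
      set p := G.run f1 f2 v n with hp
      by_cases h1 : p.2 ∈ G.V1
      · have h2 : p.2 ∉ (swapG G).V1 := by
          rw [show (swapG G).V1 = G.V2 from rfl]
          exact fun h => (mem_V2_iff G hG).mp h h1
        simp only [if_pos h1, if_neg h2]
      · have h2 : p.2 ∈ (swapG G).V1 := (mem_V2_iff G hG).mpr h1
        simp only [if_neg h1, if_pos h2]

lemma swap_outcome (hG : G.WellFormed) (f1 f2 : Strat V) :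
    (swapG G).outcome f2 f1 = G.outcome f1 f2 := by
  funext n
  rw [GameGraph.outcome, GameGraph.outcome, GameGraph.outcomeFrom, GameGraph.outcomeFrom,
    show (swapG G).init = G.init from rfl, swap_run G hG]

lemma swap_strat1 (f : Strat V) : (swapG G).IsStrategy1 f ↔ G.IsStrategy2 f := Iff.rfl
lemma swap_strat2 (f : Strat V) : (swapG G).IsStrategy2 f ↔ G.IsStrategy1 f := Iff.rfl

/-- determinacy of the single-objective co-Büchi game -/
theorem cobuchi_determined (hG : G.WellFormed) :
    (∃ f1, G.IsStrategy1 f1 ∧ ∀ f2, G.IsStrategy2 f2 →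
      infSet (G.outcome f1 f2) ∩ α = ∅)
    ∨ (∃ f2, G.IsStrategy2 f2 ∧ ∀ f1, G.IsStrategy1 f1 →
      (infSet (G.outcome f1 f2) ∩ α).Nonempty) := by
  rcases buchi_determined (swapG G) α (swap_wf G hG) with ⟨g, hg, hwin⟩ | ⟨g, hg, hwin⟩
  · right
    refine ⟨g, (swap_strat1 G g).mp hg, fun f1 hf1 => ?_⟩
    have := hwin f1 ((swap_strat2 G f1).mpr hf1)
    rwa [swap_outcome G hG f1 g] at this
  · left
    refine ⟨g, (swap_strat2 G g).mp hg, fun f2 hf2 => ?_⟩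
    have := hwin f2 ((swap_strat1 G f2).mpr hf2)
    rwa [swap_outcome G hG g f2] at this

/-- determinacy of the single-objective γ game -/
theorem single_determined (γ : ObjKind) (hG : G.WellFormed) :
    (∃ f1, G.IsStrategy1 f1 ∧ ∀ f2, G.IsStrategy2 f2 → SatObj γ (G.outcome f1 f2) α)
    ∨ (∃ f2, G.IsStrategy2 f2 ∧ ∀ f1, G.IsStrategy1 f1 →
        ¬ SatObj γ (G.outcome f1 f2) α) := by
  cases γ with
  | buchi =>
      rcases buchi_determined G α hG with ⟨f1, h1, h2⟩ | ⟨f2, h1, h2⟩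
      · exact Or.inl ⟨f1, h1, h2⟩
      · refine Or.inr ⟨f2, h1, fun f1 hf1 => ?_⟩
        rw [SatObj, Set.not_nonempty_iff_eq_empty]
        exact h2 f1 hf1
  | cobuchi =>
      rcases cobuchi_determined G α hG with ⟨f1, h1, h2⟩ | ⟨f2, h1, h2⟩
      · exact Or.inl ⟨f1, h1, h2⟩
      · refine Or.inr ⟨f2, h1, fun f1 hf1 => ?_⟩
        exact Set.nonempty_iff_ne_empty.mp (h2 f1 hf1)

end Det
end CovDet

/-- a γ-coverage game (G, k, β) with k ≥ |β| is determined: exactly one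
of the two players has a covering / disrupting strategy. -/
theorem stmt2 {V : Type u} [Fintype V] (γ : ObjKind) (G : GameGraph V)
    (hG : G.WellFormed) (k : ℕ) (hk1 : 1 ≤ k) (β : Finset (Set V)) (hk : β.card ≤ k) :
    Xor' (CovererWins G γ k β) (DisruptorWins G γ k β) := by
  classical
  -- the two outcomes are mutually exclusive
  have notboth : CovererWins G γ k β → DisruptorWins G γ k β → False := by
    rintro ⟨F, hF, hcov⟩ ⟨f2, hf2, hdis⟩
    obtain ⟨α, hα, hnone⟩ := hdis F hF
    obtain ⟨i, hi⟩ := hcov f2 hf2 α hα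
    exact hnone i hi
  by_cases hall : ∀ α ∈ β, ∃ f1, G.IsStrategy1 f1 ∧
      ∀ f2, G.IsStrategy2 f2 → SatObj γ (G.outcome f1 f2) α
  · -- Coverer wins
    have hcov : CovererWins G γ k β := by
      choose s hs1 hs2 using hall
      have hcard : Fintype.card ↥β ≤ Fintype.card (Fin k) := by
        rw [Fintype.card_coe, Fintype.card_fin]; exact hk
      obtain ⟨e⟩ := Function.Embedding.nonempty_of_card_le hcard
      set fdef : Strat V := fun _ v => CovDet.dmove G hG v with hfdef
      have hfdef1 : G.IsStrategy1 fdef := fun h v _ => CovDet.dmove_spec G hG v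
      set F : Fin k → Strat V := fun i =>
        if h : ∃ a : ↥β, e a = i then s (Classical.choose h).1 (Classical.choose h).2
        else fdef with hF
      refine ⟨F, fun i => ?_, fun f2 hf2 α hα => ?_⟩
      · rw [hF]
        by_cases h : ∃ a : ↥β, e a = i
        · simp only [dif_pos h]
          exact hs1 _ _
        · simp only [dif_neg h]
          exact hfdef1
      · refine ⟨e ⟨α, hα⟩, ?_⟩
        have h : ∃ a : ↥β, e a = e ⟨α, hα⟩ := ⟨⟨α, hα⟩, rfl⟩
        have hch : Classical.choose h = ⟨α, hα⟩ := e.injective (Classical.choose_spec h)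
        have hFi : F (e ⟨α, hα⟩) = s α hα := by
          rw [hF]
          simp only [dif_pos h]
          rw [hch]
        rw [hFi]
        exact hs2 α hα f2 hf2
    exact Or.inl ⟨hcov, fun hdis => notboth hcov hdis⟩
  · -- some objective is won by Disruptor
    obtain ⟨α, hα, hno⟩ : ∃ α ∈ β, ¬ ∃ f1, G.IsStrategy1 f1 ∧
        ∀ f2, G.IsStrategy2 f2 → SatObj γ (G.outcome f1 f2) α := by
      by_contra hc
      push_neg at hc
      exact hall fun α hα => hc α hα
    rcases CovDet.single_determined G α γ hG with ⟨f1, h1, h2⟩ | ⟨f2, h1, h2⟩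
    · exact absurd (⟨f1, h1, h2⟩ : ∃ f1, G.IsStrategy1 f1 ∧
        ∀ f2, G.IsStrategy2 f2 → SatObj γ (G.outcome f1 f2) α) hno
    · have hdis : DisruptorWins G γ k β :=
        ⟨f2, h1, fun F hF => ⟨α, hα, fun i => h2 (F i) (hF i)⟩⟩
      exact Or.inr ⟨hdis, fun hcov => notboth hcov hdis⟩
end

section
/- There exists a Büchi coverage game (G, 2, β) with exactly three objectives (|β| = 3) that is undetermined: Coverer has no covering strategy in (G, 2, β), and Disruptor has no disrupting strategy in (G, 2, β). -/
open scoped Classical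

universe u

variable {V : Type u}

namespace Stmt3Aux

inductive Vx : Type
  | s | a | b | xa | ya | xb | yb
  deriving DecidableEq

instance : Fintype Vx :=
  ⟨{Vx.s, Vx.a, Vx.b, Vx.xa, Vx.ya, Vx.xb, Vx.yb}, fun x => by cases x <;> simp⟩

def Ed : Vx → Vx → Bool
  | .s, .a => true
  | .s, .b => true
  | .a, .xa => true
  | .a, .ya => true
  | .b, .xb => true
  | .b, .yb => true
  | .xa, .xa => true
  | .ya, .ya => true
  | .xb, .xb => true
  | .yb, .yb => true
  | _, _ => false

def Gm : GameGraph Vx where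
  V1 := {v | v ≠ Vx.a}
  V2 := {Vx.a}
  init := Vx.s
  E := fun v u => Ed v u = true

def isSink (c : Vx) : Prop := c = .xa ∨ c = .ya ∨ c = .xb ∨ c = .yb

instance : DecidablePred isSink := fun c => by unfold isSink; infer_instance

lemma sink_step : ∀ c u : Vx, isSink c → Ed c u = true → u = c := by decide
lemma sink_ne_a : ∀ c : Vx, isSink c → c ≠ Vx.a := by decide
lemma succ_s : ∀ u : Vx, Ed Vx.s u = true → u = Vx.a ∨ u = Vx.b := by decide
lemma succ_a : ∀ u : Vx, Ed Vx.a u = true → u = Vx.xa ∨ u = Vx.ya := by decide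
lemma succ_b : ∀ u : Vx, Ed Vx.b u = true → u = Vx.xb ∨ u = Vx.yb := by decide

lemma mem_V1 (v : Vx) : v ∈ Gm.V1 ↔ v ≠ Vx.a := Iff.rfl

lemma run_succ (f1 f2 : Strat Vx) (v : Vx) (n : ℕ) :
    Gm.run f1 f2 v (n+1) =
      ((Gm.run f1 f2 v n).1 ++ [(Gm.run f1 f2 v n).2],
        if (Gm.run f1 f2 v n).2 ∈ Gm.V1 then f1 (Gm.run f1 f2 v n).1 (Gm.run f1 f2 v n).2
        else f2 (Gm.run f1 f2 v n).1 (Gm.run f1 f2 v n).2) := rfl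

lemma run_sink (f1 f2 : Strat Vx) (h1 : Gm.IsStrategy1 f1) (c : Vx) (hc : isSink c)
    (n : ℕ) (hn : (Gm.run f1 f2 Vx.s n).2 = c) :
    ∀ m, n ≤ m → (Gm.run f1 f2 Vx.s m).2 = c := by
  intro m hm
  induction m with
  | zero =>
      have h0 : n = 0 := Nat.le_zero.mp hm
      subst h0; exact hn
  | succ m ih =>
      rcases Nat.lt_or_ge m n with h | h
      · have h0 : n = m + 1 := by omega
        subst h0; exact hn
      · have hm' := ih h
        have hstep : (Gm.run f1 f2 Vx.s (m+1)).2 =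
            if (Gm.run f1 f2 Vx.s m).2 ∈ Gm.V1
            then f1 (Gm.run f1 f2 Vx.s m).1 (Gm.run f1 f2 Vx.s m).2
            else f2 (Gm.run f1 f2 Vx.s m).1 (Gm.run f1 f2 Vx.s m).2 := rfl
        rw [hstep, hm', if_pos ((mem_V1 _).2 (sink_ne_a c hc))]
        exact sink_step c _ hc (h1 (Gm.run f1 f2 Vx.s m).1 c ((mem_V1 _).2 (sink_ne_a c hc)))

lemma run_one (f1 f2 : Strat Vx) :
    Gm.run f1 f2 Vx.s 1 = ([Vx.s], f1 [] Vx.s) := by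
  rw [show (1:ℕ) = 0 + 1 from rfl, run_succ]
  simp [mem_V1, GameGraph.run]

lemma run_two_a (f1 f2 : Strat Vx) (ha : f1 [] Vx.s = Vx.a) :
    Gm.run f1 f2 Vx.s 2 = ([Vx.s, Vx.a], f2 [Vx.s] Vx.a) := by
  rw [show (2:ℕ) = 1 + 1 from rfl, run_succ, run_one, ha]
  simp [mem_V1]

lemma run_two_b (f1 f2 : Strat Vx) (hb : f1 [] Vx.s = Vx.b) :
    Gm.run f1 f2 Vx.s 2 = ([Vx.s, Vx.b], f1 [Vx.s] Vx.b) := by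
  rw [show (2:ℕ) = 1 + 1 from rfl, run_succ, run_one, hb]
  simp [mem_V1]

lemma outcome_a (f1 f2 : Strat Vx) (h1 : Gm.IsStrategy1 f1)
    (hs : isSink (f2 [Vx.s] Vx.a)) (ha : f1 [] Vx.s = Vx.a) :
    ∀ m, 2 ≤ m → Gm.outcome f1 f2 m = f2 [Vx.s] Vx.a := by
  intro m hm
  exact run_sink f1 f2 h1 _ hs 2 (by rw [run_two_a f1 f2 ha]) m hm

lemma outcome_b (f1 f2 : Strat Vx) (h1 : Gm.IsStrategy1 f1) (hb : f1 [] Vx.s = Vx.b) :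
    ∀ m, 2 ≤ m → Gm.outcome f1 f2 m = f1 [Vx.s] Vx.b := by
  have he : isSink (f1 [Vx.s] Vx.b) := by
    rcases succ_b _ (h1 [Vx.s] Vx.b ((mem_V1 _).2 (by decide))) with h | h <;> rw [h] <;> decide
  intro m hm
  exact run_sink f1 f2 h1 _ he 2 (by rw [run_two_b f1 f2 hb]) m hm

lemma sat_const {ρ : ℕ → Vx} {N : ℕ} {c : Vx} (h : ∀ m, N ≤ m → ρ m = c) (α : Set Vx) :
    SatObj ObjKind.buchi ρ α ↔ c ∈ α := by
  constructor
  · rintro ⟨u, hu, huα⟩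
    obtain ⟨m, hm, he⟩ := hu N
    have : u = c := by rw [← he, h m hm]
    exact this ▸ huα
  · intro hc
    exact ⟨c, fun n => ⟨max n N, le_max_left _ _, h _ (le_max_right _ _)⟩, hc⟩

def A1 : Set Vx := {Vx.xa, Vx.xb}
def A2 : Set Vx := {Vx.ya, Vx.yb}
def A3 : Set Vx := {Vx.xa, Vx.ya}

noncomputable def B : Finset (Set Vx) := {A1, A2, A3}

lemma A12 : A1 ≠ A2 := by
  intro h
  have : Vx.xa ∈ A2 := h ▸ (by simp [A1])
  simp [A2] at this

lemma A13 : A1 ≠ A3 := by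
  intro h
  have : Vx.xb ∈ A3 := h ▸ (by simp [A1])
  simp [A3] at this

lemma A23 : A2 ≠ A3 := by
  intro h
  have : Vx.yb ∈ A3 := h ▸ (by simp [A2])
  simp [A3] at this

lemma cardB : B.card = 3 := by
  rw [show B = insert A1 (insert A2 {A3}) from rfl,
    Finset.card_insert_of_notMem (by simp [A12, A13]),
    Finset.card_insert_of_notMem (by simp [A23]), Finset.card_singleton]

/-- Disruptor's response strategy choosing `d` at `a`. -/
def resp (d : Vx) : Strat Vx := fun _ v => if v = Vx.a then d else v

lemma resp_strat (d : Vx) (hd : Ed Vx.a d = true) : Gm.IsStrategy2 (resp d) := by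
  intro h v hv
  have hva : v = Vx.a := hv
  subst hva
  show Ed Vx.a (if Vx.a = Vx.a then d else Vx.a) = true
  rw [if_pos rfl]; exact hd

lemma resp_val (d : Vx) : resp d [Vx.s] Vx.a = d := if_pos rfl

end Stmt3Aux

namespace Stmt3Aux

def g0 : Strat Vx := fun _ v =>
  match v with
  | .s => .a
  | .a => .xa
  | .b => .xb
  | v => v

def g1 (e : Vx) : Strat Vx := fun _ v =>
  match v with
  | .s => .b
  | .b => e
  | .a => .xa
  | v => v

lemma g0_strat : Gm.IsStrategy1 g0 := by
  intro h v _
  cases v <;> (show Ed _ _ = true; rfl)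

lemma g1_strat (e : Vx) (he : Ed Vx.b e = true) : Gm.IsStrategy1 (g1 e) := by
  intro h v _
  cases v <;> (show Ed _ _ = true) <;> first | rfl | exact he

noncomputable def FF (e : Vx) : Fin 2 → Strat Vx := fun i => if i = 0 then g0 else g1 e

lemma FF0 (e : Vx) : FF e 0 = g0 := if_pos rfl

lemma FF1 (e : Vx) : FF e 1 = g1 e := if_neg (by decide)

lemma FF_strat (e : Vx) (he : Ed Vx.b e = true) : ∀ i, Gm.IsStrategy1 (FF e i) := by
  intro i
  by_cases h : i = 0
  · rw [show FF e i = g0 from if_pos h]; exact g0_strat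
  · rw [show FF e i = g1 e from if_neg h]; exact g1_strat e he

lemma refute (F : Fin 2 → Strat Vx)
    (d : Vx) (hd2 : Ed Vx.a d = true) (α : Set Vx) (hα : α ∈ B)
    (c0 c1 : Vx)
    (h0 : ∀ m, 2 ≤ m → Gm.outcome (F 0) (resp d) m = c0)
    (h1 : ∀ m, 2 ≤ m → Gm.outcome (F 1) (resp d) m = c1)
    (hc0 : c0 ∉ α) (hc1 : c1 ∉ α)
    (hcov : IsCovering Gm ObjKind.buchi 2 B F) : False := by
  obtain ⟨i, hsat⟩ := hcov (resp d) (resp_strat d hd2) α hα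
  fin_cases i
  · exact hc0 ((sat_const h0 α).1 hsat)
  · exact hc1 ((sat_const h1 α).1 hsat)

end Stmt3Aux


open Stmt3Aux in
/-- there is an undetermined Büchi coverage game with two agents and
exactly three objectives. -/
theorem stmt3 :
    ∃ (V : Type) (G : GameGraph V) (β : Finset (Set V)),
      Finite V ∧ G.WellFormed ∧ β.card = 3 ∧
      ¬ CovererWins G ObjKind.buchi 2 β ∧ ¬ DisruptorWins G ObjKind.buchi 2 β := by
  refine ⟨Vx, Gm, B, Finite.of_fintype _, ⟨?_, ?_, ?_⟩, cardB, ?_, ?_⟩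
  · rw [Set.disjoint_left]
    intro v hv hv2
    exact hv hv2
  · apply Set.eq_univ_of_forall
    intro v
    rcases eq_or_ne v Vx.a with h | h
    · exact Or.inr h
    · exact Or.inl h
  · show ∀ v, ∃ u, Ed v u = true
    decide
  · -- ¬ CovererWins
    rintro ⟨F, hF, hcov⟩
    have hc : ∀ i, F i [] Vx.s = Vx.a ∨ F i [] Vx.s = Vx.b :=
      fun i => succ_s _ (hF i [] Vx.s ((mem_V1 _).2 (by decide)))
    have heb : ∀ i, F i [Vx.s] Vx.b = Vx.xb ∨ F i [Vx.s] Vx.b = Vx.yb :=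
      fun i => succ_b _ (hF i [Vx.s] Vx.b ((mem_V1 _).2 (by decide)))
    have key_a : ∀ (i : Fin 2) (d : Vx), isSink d → F i [] Vx.s = Vx.a →
        ∀ m, 2 ≤ m → Gm.outcome (F i) (resp d) m = d := by
      intro i d hsink ha m hm
      have h := outcome_a (F i) (resp d) (hF i) (by rw [resp_val]; exact hsink) ha m hm
      rwa [resp_val] at h
    have key_b : ∀ (i : Fin 2) (d : Vx), F i [] Vx.s = Vx.b →
        ∀ m, 2 ≤ m → Gm.outcome (F i) (resp d) m = F i [Vx.s] Vx.b :=
      fun i d hb => outcome_b (F i) (resp d) (hF i) hb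
    rcases hc 0 with h0a | h0b <;> rcases hc 1 with h1a | h1b
    · -- both a : use d = xa, objective A2 is missed
      exact refute F Vx.xa (by decide) A2 (by simp [B]) _ _
        (key_a 0 Vx.xa (by decide) h0a) (key_a 1 Vx.xa (by decide) h1a)
        (by simp [A2]) (by simp [A2]) hcov
    · -- 0 ↦ a, 1 ↦ b
      rcases heb 1 with he | he
      · -- e = xb : take d = xa, objective A2 missed
        exact refute F Vx.xa (by decide) A2 (by simp [B]) _ _
          (key_a 0 Vx.xa (by decide) h0a) (key_b 1 Vx.xa h1b)
          (by simp [A2]) (by rw [he]; simp [A2]) hcov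
      · -- e = yb : take d = ya, objective A1 missed
        exact refute F Vx.ya (by decide) A1 (by simp [B]) _ _
          (key_a 0 Vx.ya (by decide) h0a) (key_b 1 Vx.ya h1b)
          (by simp [A1]) (by rw [he]; simp [A1]) hcov
    · -- 0 ↦ b, 1 ↦ a
      rcases heb 0 with he | he
      · exact refute F Vx.xa (by decide) A2 (by simp [B]) _ _
          (key_b 0 Vx.xa h0b) (key_a 1 Vx.xa (by decide) h1a)
          (by rw [he]; simp [A2]) (by simp [A2]) hcov
      · exact refute F Vx.ya (by decide) A1 (by simp [B]) _ _
          (key_b 0 Vx.ya h0b) (key_a 1 Vx.ya (by decide) h1a)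
          (by rw [he]; simp [A1]) (by simp [A1]) hcov
    · -- both b : objective A3 missed
      refine refute F Vx.xa (by decide) A3 (by simp [B]) _ _
        (key_b 0 Vx.xa h0b) (key_b 1 Vx.xa h1b) ?_ ?_ hcov
      · rcases heb 0 with he | he <;> rw [he] <;> simp [A3]
      · rcases heb 1 with he | he <;> rw [he] <;> simp [A3]
  · -- ¬ DisruptorWins
    rintro ⟨f2, h2, hdis⟩
    have hd : Ed Vx.a (f2 [Vx.s] Vx.a) = true := h2 [Vx.s] Vx.a rfl
    rcases succ_a _ hd with hdx | hdy
    · -- d = xa : play (a-branch, b-branch with yb)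
      obtain ⟨α, hαB, hnone⟩ := hdis (FF Vx.yb) (FF_strat Vx.yb (by decide))
      have hn0 := hnone 0
      have hn1 := hnone 1
      rw [FF0] at hn0
      rw [FF1] at hn1
      have h0 : ∀ m, 2 ≤ m → Gm.outcome g0 f2 m = f2 [Vx.s] Vx.a :=
        outcome_a g0 f2 g0_strat (by rw [hdx]; decide) rfl
      have h1 : ∀ m, 2 ≤ m → Gm.outcome (g1 Vx.yb) f2 m = Vx.yb :=
        outcome_b (g1 Vx.yb) f2 (g1_strat Vx.yb (by decide)) rfl
      simp only [B, Finset.mem_insert, Finset.mem_singleton] at hαB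
      rcases hαB with h | h | h <;> subst h
      · exact hn0 ((sat_const h0 A1).2 (by rw [hdx]; simp [A1]))
      · exact hn1 ((sat_const h1 A2).2 (by simp [A2]))
      · exact hn0 ((sat_const h0 A3).2 (by rw [hdx]; simp [A3]))
    · -- d = ya : play (a-branch, b-branch with xb)
      obtain ⟨α, hαB, hnone⟩ := hdis (FF Vx.xb) (FF_strat Vx.xb (by decide))
      have hn0 := hnone 0
      have hn1 := hnone 1
      rw [FF0] at hn0
      rw [FF1] at hn1
      have h0 : ∀ m, 2 ≤ m → Gm.outcome g0 f2 m = f2 [Vx.s] Vx.a :=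
        outcome_a g0 f2 g0_strat (by rw [hdy]; decide) rfl
      have h1 : ∀ m, 2 ≤ m → Gm.outcome (g1 Vx.xb) f2 m = Vx.xb :=
        outcome_b (g1 Vx.xb) f2 (g1_strat Vx.xb (by decide)) rfl
      simp only [B, Finset.mem_insert, Finset.mem_singleton] at hαB
      rcases hαB with h | h | h <;> subst h
      · exact hn1 ((sat_const h1 A1).2 (by simp [A1]))
      · exact hn0 ((sat_const h0 A2).2 (by rw [hdy]; simp [A2]))
      · exact hn0 ((sat_const h0 A3).2 (by rw [hdy]; simp [A3]))
end

section
/- For every γ ∈ {Büchi, co-Büchi} and every k ≥ 2, there exists a γ-coverage game (G, k, β) with |β| = k+1 such that Coverer has a covering strategy in (G, k, β), but for every l with 2 ≤ l ≤ k, β is not (k,l)-decomposable in the initial vertex v₀ of G. -/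
open scoped Classical

universe u

variable {V : Type u}

/-- `β` is `(k,l)`-decomposable in `v`: there are pairwise disjoint sets
`β₁, …, β_l` with union `β` and a partition `A₁, …, A_l` of the `k` agents into
nonempty sets such that for every `i`, Coverer has a covering strategy in the
`γ`-coverage game `(Gᵛ, |Aᵢ|, βᵢ)`. -/
def Decomposable (G : GameGraph V) (γ : ObjKind) (k : ℕ) (β : Finset (Set V))
    (v : V) (l : ℕ) : Prop :=
  ∃ (bs : Fin l → Finset (Set V)) (As : Fin l → Finset (Fin k)),
    (∀ i j, i ≠ j → Disjoint (bs i) (bs j)) ∧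
    Finset.univ.biUnion bs = β ∧
    (∀ i, (As i).Nonempty) ∧
    (∀ i j, i ≠ j → Disjoint (As i) (As j)) ∧
    Finset.univ.biUnion As = Finset.univ ∧
    ∀ i, CovererWins (G.withInit v) γ (As i).card (bs i)

/-! ### Auxiliary construction -/

namespace Stmt6Aux

variable (k : ℕ)

/-- Vertex set: `none` is the initial vertex, `some (inl j)` the branch vertex,
`some (inr (j,p))` the absorbing cell vertices. -/
abbrev GV := Option (Fin (k+1) ⊕ Fin (k+1) × Fin (k+1))

def branchv (j : Fin (k+1)) : GV k := some (Sum.inl j)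
def cellv (j p : Fin (k+1)) : GV k := some (Sum.inr (j, p))

def myE : GV k → GV k → Prop
  | none, some (Sum.inl _) => True
  | some (Sum.inl j), some (Sum.inr c) => c.1 = j
  | some (Sum.inr c), some (Sum.inr c') => c' = c
  | _, _ => False

def myG : GameGraph (GV k) where
  V1 := {v | v ≠ none}
  V2 := {none}
  init := none
  E := myE k

lemma E_none {u : GV k} (h : myE k none u) : ∃ j, u = branchv k j := by
  match u with
  | none => exact absurd h (by simp [myE])
  | some (Sum.inl j) => exact ⟨j, rfl⟩
  | some (Sum.inr c) => exact absurd h (by simp [myE])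

lemma E_branch {j : Fin (k+1)} {u : GV k} (h : myE k (branchv k j) u) :
    ∃ p, u = cellv k j p := by
  match u with
  | none => exact absurd h (by simp [branchv, myE])
  | some (Sum.inl j') => exact absurd h (by simp [branchv, myE])
  | some (Sum.inr c) =>
      obtain ⟨j', p⟩ := c
      have : j' = j := h
      exact ⟨p, by simp [cellv, this]⟩

lemma E_cell {j p : Fin (k+1)} {u : GV k} (h : myE k (cellv k j p) u) :
    u = cellv k j p := by
  match u with
  | none => exact absurd h (by simp [cellv, myE])
  | some (Sum.inl j') => exact absurd h (by simp [cellv, myE])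
  | some (Sum.inr c) =>
      have : c = (j, p) := h
      simp [cellv, this]

def obj (γ : ObjKind) (q : Fin (k+1)) : Set (GV k) :=
  match γ with
  | .buchi => {v | ∃ j p, v = cellv k j p ∧ (j = q ∨ p = q)}
  | .cobuchi => {v | ∃ j p, v = cellv k j p ∧ (j ≠ q ∧ p ≠ q)}

lemma cellv_inj {j p j' p' : Fin (k+1)} (h : cellv k j p = cellv k j' p') :
    j = j' ∧ p = p' := by
  simpa [cellv, Prod.ext_iff] using h

lemma cell_mem_obj_buchi {j p q : Fin (k+1)} :
    cellv k j p ∈ obj k .buchi q ↔ (j = q ∨ p = q) := by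
  constructor
  · rintro ⟨j', p', he, hc⟩
    obtain ⟨rfl, rfl⟩ := cellv_inj k he
    exact hc
  · intro hc; exact ⟨j, p, rfl, hc⟩

lemma cell_mem_obj_cobuchi {j p q : Fin (k+1)} :
    cellv k j p ∈ obj k .cobuchi q ↔ (j ≠ q ∧ p ≠ q) := by
  constructor
  · rintro ⟨j', p', he, hc⟩
    obtain ⟨rfl, rfl⟩ := cellv_inj k he
    exact hc
  · intro hc; exact ⟨j, p, rfl, hc⟩

lemma obj_inj (γ : ObjKind) : Function.Injective (obj k γ) := by
  intro q q' h
  by_contra hne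
  cases γ with
  | buchi =>
      have h1 : cellv k q q ∈ obj k .buchi q := (cell_mem_obj_buchi k).2 (Or.inl rfl)
      rw [h] at h1
      rcases (cell_mem_obj_buchi k).1 h1 with h2 | h2 <;> exact hne h2
  | cobuchi =>
      have h1 : cellv k q q ∈ obj k .cobuchi q' :=
        (cell_mem_obj_cobuchi k).2 ⟨hne, hne⟩
      rw [← h] at h1
      exact ((cell_mem_obj_cobuchi k).1 h1).1 rfl

/-- Satisfaction for a play whose infinity set is a single cell. -/
lemma sat_iff (γ : ObjKind) (ρ : ℕ → GV k) (j p q : Fin (k+1))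
    (h : infSet ρ = {cellv k j p}) :
    SatObj γ ρ (obj k γ q) ↔ (j = q ∨ p = q) := by
  cases γ with
  | buchi =>
      show (infSet ρ ∩ obj k .buchi q).Nonempty ↔ _
      rw [h]
      constructor
      · rintro ⟨u, hu1, hu2⟩
        rw [Set.mem_singleton_iff] at hu1
        subst hu1
        exact (cell_mem_obj_buchi k).1 hu2
      · intro hc
        exact ⟨cellv k j p, rfl, (cell_mem_obj_buchi k).2 hc⟩
  | cobuchi =>
      show infSet ρ ∩ obj k .cobuchi q = ∅ ↔ _
      rw [h]
      constructor
      · intro he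
        by_contra hc
        push_neg at hc
        have : cellv k j p ∈ ({cellv k j p} : Set (GV k)) ∩ obj k .cobuchi q :=
          ⟨rfl, (cell_mem_obj_cobuchi k).2 hc⟩
        rw [he] at this
        exact this
      · intro hc
        ext u
        simp only [Set.mem_inter_iff, Set.mem_singleton_iff, Set.mem_empty_iff_false,
          iff_false, not_and]
        rintro rfl hu
        rcases (cell_mem_obj_cobuchi k).1 hu with ⟨h1, h2⟩
        rcases hc with h3 | h3 <;> [exact h1 h3; exact h2 h3]

lemma infSet_of_eventually {W : Type} (ρ : ℕ → W) (c : W)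
    (h : ∀ n, 2 ≤ n → ρ n = c) : infSet ρ = {c} := by
  ext u
  constructor
  · intro hu
    obtain ⟨m, hm1, hm2⟩ := hu 2
    rw [Set.mem_singleton_iff, ← hm2, h m hm1]
  · rintro rfl n
    exact ⟨max n 2, le_max_left _ _, h _ (le_max_right _ _)⟩

/-- Structure of any play of the game. -/
lemma outcome_eq (f1 f2 : Strat (GV k)) (h1 : (myG k).IsStrategy1 f1)
    (h2 : (myG k).IsStrategy2 f2) :
    ∃ j, f2 [] none = branchv k j ∧
    ∃ p, f1 [none] (branchv k j) = cellv k j p ∧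
      ∀ n, 2 ≤ n → (myG k).outcome f1 f2 n = cellv k j p := by
  have hstep : ∀ n, (myG k).run f1 f2 none (n+1) =
      (((myG k).run f1 f2 none n).1 ++ [((myG k).run f1 f2 none n).2],
        if ((myG k).run f1 f2 none n).2 ∈ (myG k).V1 then
          f1 ((myG k).run f1 f2 none n).1 ((myG k).run f1 f2 none n).2
        else f2 ((myG k).run f1 f2 none n).1 ((myG k).run f1 f2 none n).2) := by
    intro n; rfl
  have hr0 : (myG k).run f1 f2 none 0 = ([], none) := rfl
  have hnV1 : (none : GV k) ∉ (myG k).V1 := by simp [myG]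
  have hr1 : (myG k).run f1 f2 none 1 = ([none], f2 [] none) := by
    rw [hstep 0, hr0]
    simp only [if_neg hnV1]
    rfl
  obtain ⟨j, hj⟩ := E_none k (h2 [] none rfl)
  have hbV1 : branchv k j ∈ (myG k).V1 := by simp [myG, branchv]
  obtain ⟨p, hp⟩ := E_branch k (h1 [none] (branchv k j) hbV1)
  refine ⟨j, hj, p, hp, ?_⟩
  have hr2 : ((myG k).run f1 f2 none 2).2 = cellv k j p := by
    rw [hstep 1, hr1, hj]
    simp only [if_pos hbV1]
    exact hp
  have key : ∀ n, 2 ≤ n → ((myG k).run f1 f2 none n).2 = cellv k j p := by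
    intro n hn
    induction n with
    | zero => omega
    | succ m ih =>
        rcases Nat.lt_or_ge m 2 with hm | hm
        · interval_cases m
          · omega
          · exact hr2
        · have ihm := ih hm
          have hcV1 : ((myG k).run f1 f2 none m).2 ∈ (myG k).V1 := by
            rw [ihm]; simp [myG, cellv]
          rw [hstep m]
          simp only [if_pos hcV1]
          have := h1 ((myG k).run f1 f2 none m).1 ((myG k).run f1 f2 none m).2 hcV1
          rw [ihm] at this ⊢
          exact E_cell k this
  exact key

/-- The key lower bound: `m` agents cannot cover a sub-family `b` of more than
`m` objectives if `m < k`. -/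
lemma no_cover (γ : ObjKind) (m : ℕ) (b : Finset (Set (GV k)))
    (hb : b ⊆ Finset.image (obj k γ) Finset.univ)
    (hcard : m + 1 ≤ b.card) (hm : m + 1 ≤ k) :
    ¬ CovererWins (myG k) γ m b := by
  rintro ⟨F, hF1, hFcov⟩
  -- choose the disruptor's branch
  have hjex : ∃ j : Fin (k+1), obj k γ j ∉ b ∨ b.card = k + 1 := by
    by_cases h : ∃ j : Fin (k+1), obj k γ j ∉ b
    · obtain ⟨j, hj⟩ := h; exact ⟨j, Or.inl hj⟩
    · push_neg at h
      refine ⟨0, Or.inr ?_⟩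
      have h1 : Finset.image (obj k γ) Finset.univ ⊆ b := by
        intro α hα
        rw [Finset.mem_image] at hα
        obtain ⟨q, _, rfl⟩ := hα
        exact h q
      have := Finset.Subset.antisymm hb h1
      rw [this, Finset.card_image_of_injective _ (obj_inj k γ), Finset.card_univ,
        Fintype.card_fin]
  obtain ⟨j, hj⟩ := hjex
  set f2 : Strat (GV k) := fun _ _ => branchv k j with hf2def
  have hf2 : (myG k).IsStrategy2 f2 := by
    intro h v hv
    have : v = none := hv
    subst this
    trivial
  -- each agent's play ends in some cell `(j, P i)`
  have hplays : ∀ i : Fin m, ∃ p, ∀ n, 2 ≤ n →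
      (myG k).outcome (F i) f2 n = cellv k j p := by
    intro i
    obtain ⟨j', hj', p, _, hall⟩ := outcome_eq k (F i) f2 (hF1 i) hf2
    have : branchv k j = branchv k j' := hj'
    have hjj : j = j' := by simpa [branchv] using this
    exact ⟨p, by rw [hjj]; exact hall⟩
  choose P hP using hplays
  -- every objective in `b` other than `obj j` is of the form `obj (P i)`
  have hsub : b.erase (obj k γ j) ⊆ Finset.univ.image fun i => obj k γ (P i) := by
    intro α hα
    rw [Finset.mem_erase] at hα
    obtain ⟨hne, hαb⟩ := hα
    obtain ⟨q, _, rfl⟩ := Finset.mem_image.1 (hb hαb)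
    obtain ⟨i, hi⟩ := hFcov f2 hf2 _ hαb
    have hinf : infSet ((myG k).outcome (F i) f2) = {cellv k j (P i)} :=
      infSet_of_eventually _ _ (hP i)
    have hsat := (sat_iff k γ _ j (P i) q hinf).1 hi
    have hqj : q ≠ j := fun h => hne (by rw [h])
    rcases hsat with h | h
    · exact absurd h.symm hqj
    · exact Finset.mem_image.2 ⟨i, Finset.mem_univ _, by rw [h]⟩
  have hle : (b.erase (obj k γ j)).card ≤ m := by
    calc (b.erase (obj k γ j)).card ≤ (Finset.univ.image fun i => obj k γ (P i)).card :=
          Finset.card_le_card hsub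
      _ ≤ (Finset.univ : Finset (Fin m)).card := Finset.card_image_le
      _ = m := by rw [Finset.card_univ, Fintype.card_fin]
  rcases hj with hj | hj
  · rw [Finset.erase_eq_of_notMem hj] at hle
    omega
  · have h2 : b.card - 1 ≤ m := by
      by_cases hmem : obj k γ j ∈ b
      · rw [Finset.card_erase_of_mem hmem] at hle; exact hle
      · rw [Finset.erase_eq_of_notMem hmem] at hle; omega
    omega

end Stmt6Aux

/-- for every γ and k ≥ 2 there is a γ-coverage game (G, k, β) with
|β| = k + 1 in which Coverer wins, but β is not (k,l)-decomposable in the initial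
vertex for any 2 ≤ l ≤ k. -/
theorem stmt6 (γ : ObjKind) (k : ℕ) (hk : 2 ≤ k) :
    ∃ (V : Type) (G : GameGraph V) (β : Finset (Set V)),
      Finite V ∧ G.WellFormed ∧ β.card = k + 1 ∧
      CovererWins G γ k β ∧
      ∀ l, 2 ≤ l → l ≤ k → ¬ Decomposable G γ k β G.init l := by
  classical
  open Stmt6Aux in
  refine ⟨GV k, myG k, Finset.image (obj k γ) Finset.univ, inferInstance, ?_, ?_, ?_, ?_⟩
  · -- well-formedness
    refine ⟨?_, ?_, ?_⟩
    · rw [Set.disjoint_iff]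
      rintro v ⟨hv1, hv2⟩
      exact hv1 hv2
    · ext v
      simp only [Set.mem_union, Set.mem_univ, iff_true]
      by_cases h : v = none
      · exact Or.inr h
      · exact Or.inl h
    · intro v
      match v with
      | none => exact ⟨branchv k 0, trivial⟩
      | some (Sum.inl j) => exact ⟨cellv k j 0, rfl⟩
      | some (Sum.inr c) => exact ⟨some (Sum.inr c), rfl⟩
  · rw [Finset.card_image_of_injective _ (obj_inj k γ), Finset.card_univ, Fintype.card_fin]
  · -- Coverer wins with k agents
    refine ⟨fun i _ v => match v with
      | none => branchv k 0
      | some (Sum.inl j) => cellv k j (j.succAbove i)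
      | some (Sum.inr c) => some (Sum.inr c), ?_, ?_⟩
    · intro i h v hv
      match v with
      | none => exact absurd rfl hv
      | some (Sum.inl j) => exact rfl
      | some (Sum.inr c) => exact rfl
    · intro f2 hf2 α hα
      obtain ⟨q, _, rfl⟩ := Finset.mem_image.1 hα
      -- extract the branch chosen by f2
      obtain ⟨j, hj⟩ := E_none k (hf2 [] none rfl)
      -- choose the agent
      have hagent : ∃ i : Fin k, j = q ∨ j.succAbove i = q := by
        by_cases hqj : q = j
        · exact ⟨⟨0, by omega⟩, Or.inl hqj.symm⟩
        · obtain ⟨i, hi⟩ := Fin.exists_succAbove_eq (Ne.symm (fun h => hqj h.symm))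
          exact ⟨i, Or.inr hi⟩
      obtain ⟨i, hi⟩ := hagent
      refine ⟨i, ?_⟩
      set f1 : Strat (GV k) := fun _ v => match v with
        | none => branchv k 0
        | some (Sum.inl j) => cellv k j (j.succAbove i)
        | some (Sum.inr c) => some (Sum.inr c) with hf1def
      have hf1 : (myG k).IsStrategy1 f1 := by
        intro h v hv
        match v with
        | none => exact absurd rfl hv
        | some (Sum.inl j) => exact rfl
        | some (Sum.inr c) => exact rfl
      obtain ⟨j', hj', p, hp, hall⟩ := outcome_eq k f1 f2 hf1 hf2
      have hjj : j' = j := by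
        rw [hj] at hj'
        simpa [branchv] using hj'.symm
      rw [hjj] at hp hall
      have hpval : p = j.succAbove i := by
        have : cellv k j (j.succAbove i) = cellv k j p := hp
        exact ((cellv_inj k this).2).symm
      rw [hpval] at hall
      have hinf : infSet ((myG k).outcome f1 f2) = {cellv k j (j.succAbove i)} :=
        infSet_of_eventually _ _ hall
      exact (sat_iff k γ _ j (j.succAbove i) q hinf).2 hi
  · -- non-decomposability
    intro l hl2 hlk hdec
    obtain ⟨bs, As, hbdisj, hbU, hAne, hAdisj, hAU, hwin⟩ := hdec
    have hbsum : ∑ i : Fin l, (bs i).card = k + 1 := by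
      rw [← Finset.card_biUnion (fun x _ y _ hxy => hbdisj x y hxy), hbU,
        Finset.card_image_of_injective _ (obj_inj k γ), Finset.card_univ, Fintype.card_fin]
    have hAsum : ∑ i : Fin l, (As i).card = k := by
      rw [← Finset.card_biUnion (fun x _ y _ hxy => hAdisj x y hxy), hAU,
        Finset.card_univ, Fintype.card_fin]
    -- some part has more objectives than agents
    have hex : ∃ i : Fin l, (As i).card + 1 ≤ (bs i).card := by
      by_contra h
      push_neg at h
      have : ∑ i : Fin l, (bs i).card ≤ ∑ i : Fin l, (As i).card :=
        Finset.sum_le_sum fun i _ => by have := h i; omega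
      omega
    obtain ⟨i, hi⟩ := hex
    -- that part has at most k - 1 agents
    have hmk : (As i).card + 1 ≤ k := by
      have h0l : (0 : ℕ) < l := by omega
      have h1l : (1 : ℕ) < l := by omega
      set i' : Fin l := if i = ⟨0, h0l⟩ then ⟨1, h1l⟩ else ⟨0, h0l⟩ with hi'def
      have hne : i ≠ i' := by
        by_cases h : i = ⟨0, h0l⟩ <;> simp [hi'def, h, Fin.ext_iff]
      have hdisj := hAdisj i i' hne
      have hcard : (As i).card + (As i').card = (As i ∪ As i').card :=
        (Finset.card_union_of_disjoint hdisj).symm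
      have hle : (As i ∪ As i').card ≤ k := by
        calc (As i ∪ As i').card ≤ (Finset.univ : Finset (Fin k)).card :=
              Finset.card_le_card (Finset.subset_univ _)
          _ = k := by rw [Finset.card_univ, Fintype.card_fin]
      have hpos : 1 ≤ (As i').card := Finset.card_pos.2 (hAne i')
      omega
    have hbsubβ : bs i ⊆ Finset.image (obj k γ) Finset.univ := by
      rw [← hbU]
      exact Finset.subset_biUnion_of_mem bs (Finset.mem_univ i)
    exact no_cover k γ ((As i).card) (bs i) hbsubβ hi hmk (hwin i)
end

section
/- For every γ ∈ {Büchi, co-Büchi}, every k ≥ 2, and every l with 1 ≤ l < k, there exists a γ-coverage game (G, k, β) such that β is (k,l)-decomposable in the initial vertex v₀ of G but β is not (k,l+1)-decomposable in v₀. -/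
open scoped Classical

universe u

variable {V : Type u}

namespace Stmt7Aux

/-! The construction: a game with one Disruptor vertex `none` (owned by
Player 2) from which Disruptor picks `uv d` for `d : ZMod n`; from `uv d`
an agent can go to the absorbing vertices `wp d`, `ws i` (for `i ≠ d`) or
`sv j`.  Bundle objective `i` is (in the Büchi case) the set of absorbing
vertices covering index `i`: `ws i` together with `wp d` for `i ∈ {d, d+1}`.
Singleton objective `j` is `{sv j}`. -/

variable (n L : ℕ)

abbrev Vt := Option ((Fin 3 × ZMod n) ⊕ Fin L)

def uv (d : ZMod n) : Vt n L := some (.inl (0, d))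
def wp (d : ZMod n) : Vt n L := some (.inl (1, d))
def ws (i : ZMod n) : Vt n L := some (.inl (2, i))
def sv (j : Fin L) : Vt n L := some (.inr j)

def succs : Vt n L → Set (Vt n L)
  | none => {y | ∃ d, y = uv n L d}
  | some (.inl (t, d)) =>
      if t = 0 then
        {y | y = wp n L d ∨ (∃ i, i ≠ d ∧ y = ws n L i) ∨ (∃ j, y = sv n L j)}
      else {some (.inl (t, d))}
  | some (.inr j) => {some (.inr j)}

def G : GameGraph (Vt n L) where
  V1 := {x | x ≠ none}
  V2 := {none}
  init := none
  E x y := y ∈ succs n L x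

lemma succs_none : succs n L none = {y | ∃ d, y = uv n L d} := rfl

lemma succs_uv (d : ZMod n) :
    succs n L (uv n L d) =
      {y | y = wp n L d ∨ (∃ i, i ≠ d ∧ y = ws n L i) ∨ (∃ j, y = sv n L j)} := by
  simp [succs, uv]

lemma succs_wp (d : ZMod n) : succs n L (wp n L d) = {wp n L d} := by
  simp [succs, wp]

lemma succs_ws (i : ZMod n) : succs n L (ws n L i) = {ws n L i} := by
  simp [succs, ws]

lemma succs_sv (j : Fin L) : succs n L (sv n L j) = {sv n L j} := by
  simp [succs, sv]

@[simp] lemma uv_ne_none (d : ZMod n) : uv n L d ≠ none := by simp [uv]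
@[simp] lemma wp_ne_none (d : ZMod n) : wp n L d ≠ none := by simp [wp]
@[simp] lemma ws_ne_none (i : ZMod n) : ws n L i ≠ none := by simp [ws]
@[simp] lemma sv_ne_none (j : Fin L) : sv n L j ≠ none := by simp [sv]
@[simp] lemma uv_inj {d d' : ZMod n} : uv n L d = uv n L d' ↔ d = d' := by simp [uv]
@[simp] lemma wp_inj {d d' : ZMod n} : wp n L d = wp n L d' ↔ d = d' := by simp [wp]
@[simp] lemma ws_inj {i i' : ZMod n} : ws n L i = ws n L i' ↔ i = i' := by simp [ws]
@[simp] lemma sv_inj {j j' : Fin L} : sv n L j = sv n L j' ↔ j = j' := by simp [sv]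
@[simp] lemma wp_ne_ws (d i : ZMod n) : wp n L d ≠ ws n L i := by simp [wp, ws]
@[simp] lemma ws_ne_wp (d i : ZMod n) : ws n L i ≠ wp n L d := by simp [wp, ws]
@[simp] lemma wp_ne_sv (d : ZMod n) (j : Fin L) : wp n L d ≠ sv n L j := by simp [wp, sv]
@[simp] lemma sv_ne_wp (d : ZMod n) (j : Fin L) : sv n L j ≠ wp n L d := by simp [wp, sv]
@[simp] lemma ws_ne_sv (i : ZMod n) (j : Fin L) : ws n L i ≠ sv n L j := by simp [ws, sv]
@[simp] lemma sv_ne_ws (i : ZMod n) (j : Fin L) : sv n L j ≠ ws n L i := by simp [ws, sv]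
@[simp] lemma uv_ne_wp (d d' : ZMod n) : uv n L d ≠ wp n L d' := by simp [uv, wp]
@[simp] lemma uv_ne_ws (d i : ZMod n) : uv n L d ≠ ws n L i := by simp [uv, ws]
@[simp] lemma uv_ne_sv (d : ZMod n) (j : Fin L) : uv n L d ≠ sv n L j := by simp [uv, sv]

/-- The base sets of the objectives. -/
def Bset (i : ZMod n) : Set (Vt n L) :=
  {x | x = ws n L i ∨ ∃ d, x = wp n L d ∧ (i = d ∨ i = d + 1)}

def Sset (j : Fin L) : Set (Vt n L) := {sv n L j}

/-- For co-Büchi we use the complement set. -/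
def obj (γ : ObjKind) (X : Set (Vt n L)) : Set (Vt n L) :=
  match γ with
  | .buchi => X
  | .cobuchi => Xᶜ

lemma obj_injective (γ : ObjKind) : Function.Injective (obj n L γ) := by
  cases γ
  · exact fun _ _ h => h
  · exact fun _ _ h => compl_injective h

@[simp] lemma mem_Bset_ws {i i' : ZMod n} : ws n L i' ∈ Bset n L i ↔ i = i' := by
  simp [Bset, eq_comm]

@[simp] lemma mem_Bset_wp {d i : ZMod n} : wp n L d ∈ Bset n L i ↔ i = d ∨ i = d + 1 := by
  simp [Bset]

@[simp] lemma not_mem_Bset_sv (j : Fin L) (i : ZMod n) : sv n L j ∉ Bset n L i := by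
  simp [Bset]

@[simp] lemma mem_Sset_sv {j j' : Fin L} : sv n L j' ∈ Sset n L j ↔ j' = j := by
  simp [Sset]

@[simp] lemma not_mem_Sset_wp (d : ZMod n) (j : Fin L) : wp n L d ∉ Sset n L j := by
  simp [Sset]

@[simp] lemma not_mem_Sset_ws (i : ZMod n) (j : Fin L) : ws n L i ∉ Sset n L j := by
  simp [Sset]

lemma Bset_injective : Function.Injective (Bset n L) := by
  intro i i' h
  have : ws n L i' ∈ Bset n L i := h ▸ (mem_Bset_ws n L).2 rfl
  exact ((mem_Bset_ws n L).1 this).symm ▸ rfl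

lemma Bset_ne_Sset (i : ZMod n) (j : Fin L) : Bset n L i ≠ Sset n L j := by
  intro h
  have : ws n L i ∈ Sset n L j := h ▸ (mem_Bset_ws n L).2 rfl
  simp at this

lemma Sset_injective : Function.Injective (Sset n L) := by
  intro j j' h
  have : sv n L j' ∈ Sset n L j := h ▸ (mem_Sset_sv n L).2 rfl
  exact ((mem_Sset_sv n L).1 this).symm

/-- The wellformedness of the game graph. -/
lemma G_wf : (G n L).WellFormed := by
  refine ⟨?_, ?_, ?_⟩
  · rw [Set.disjoint_left]
    rintro x hx rfl
    exact hx rfl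
  · ext x; simp [G]; tauto
  · intro v
    match v with
    | none => exact ⟨uv n L 0, ⟨0, rfl⟩⟩
    | some (.inl (t, d)) =>
        by_cases ht : t = 0
        · subst ht
          refine ⟨wp n L d, ?_⟩
          show wp n L d ∈ succs n L (uv n L d)
          rw [succs_uv]; left; rfl
        · exact ⟨some (.inl (t, d)), by
            show _ ∈ succs n L _
            simp [succs, ht]⟩
    | some (.inr j) => exact ⟨some (.inr j), by show _ ∈ succs n L _; simp [succs]⟩

/-- Structure of every play: step 1 is Disruptor's choice `uv d`, step 2 is the
agent's reply, which is an absorbing vertex where the play stays forever. -/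
lemma play_spec (f1 f2 : Strat (Vt n L)) (h1 : (G n L).IsStrategy1 f1)
    (h2 : (G n L).IsStrategy2 f2) (d : ZMod n) (hd : f2 [] none = uv n L d) :
    ((G n L).outcome f1 f2) 1 = uv n L d ∧
    ((G n L).outcome f1 f2) 2 = f1 [none] (uv n L d) ∧
    ((G n L).outcome f1 f2) 2 ∈ succs n L (uv n L d) ∧
    ∀ N, 2 ≤ N → ((G n L).outcome f1 f2) N = ((G n L).outcome f1 f2) 2 := by
  have hrun0 : (G n L).run f1 f2 none 0 = ([], none) := rfl
  have hnV1 : (none : Vt n L) ∉ (G n L).V1 := by simp [G]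
  have hrun1 : (G n L).run f1 f2 none 1 = ([none], uv n L d) := by
    rw [show (1:ℕ) = 0 + 1 from rfl, GameGraph.run, hrun0]
    simp [hnV1, hd]
  have huV1 : uv n L d ∈ (G n L).V1 := by simp [G]
  have hrun2 : (G n L).run f1 f2 none 2 = ([none, uv n L d], f1 [none] (uv n L d)) := by
    rw [show (2:ℕ) = 1 + 1 from rfl, GameGraph.run, hrun1]
    simp [huV1]
  have ho1 : ((G n L).outcome f1 f2) 1 = uv n L d := by
    show ((G n L).run f1 f2 (G n L).init 1).2 = uv n L d
    rw [show (G n L).init = none from rfl, hrun1]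
  have ho2 : ((G n L).outcome f1 f2) 2 = f1 [none] (uv n L d) := by
    show ((G n L).run f1 f2 (G n L).init 2).2 = _
    rw [show (G n L).init = none from rfl, hrun2]
  have hmem : ((G n L).outcome f1 f2) 2 ∈ succs n L (uv n L d) := by
    rw [ho2]; exact h1 [none] (uv n L d) huV1
  -- absorbing
  have habs : ∀ w ∈ succs n L (uv n L d), succs n L w = {w} ∧ w ≠ none := by
    intro w hw
    rw [succs_uv] at hw
    rcases hw with rfl | ⟨i, _, rfl⟩ | ⟨j, rfl⟩
    · exact ⟨succs_wp n L d, by simp⟩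
    · exact ⟨succs_ws n L i, by simp⟩
    · exact ⟨succs_sv n L j, by simp⟩
  refine ⟨ho1, ho2, hmem, ?_⟩
  intro N hN
  obtain ⟨M, rfl⟩ : ∃ M, N = M + 2 := ⟨N - 2, by omega⟩
  clear hN
  induction M with
  | zero => rfl
  | succ M ih =>
      have hcur : ((G n L).run f1 f2 none (M + 2)).2 = ((G n L).outcome f1 f2) 2 := ih
      obtain ⟨hsucc, hne⟩ := habs _ (hcur ▸ hmem)
      have hV1 : ((G n L).run f1 f2 none (M + 2)).2 ∈ (G n L).V1 := hne
      have hstep := h1 ((G n L).run f1 f2 none (M + 2)).1 ((G n L).run f1 f2 none (M + 2)).2 hV1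
      rw [show (G n L).E = fun x y => y ∈ succs n L x from rfl] at hstep
      simp only [hsucc, Set.mem_singleton_iff] at hstep
      show ((G n L).run f1 f2 none (M + 2 + 1)).2 = _
      rw [GameGraph.run]
      simp only [if_pos hV1]
      exact hstep.trans hcur

lemma infSet_eq (ρ : ℕ → Vt n L) (h : ∀ N, 2 ≤ N → ρ N = ρ 2) :
    infSet ρ = {ρ 2} := by
  ext u
  constructor
  · intro hu
    obtain ⟨m, hm, he⟩ := hu 2
    rw [Set.mem_singleton_iff, ← he, h m hm]
  · rintro rfl N
    exact ⟨max N 2, le_max_left _ _, h _ (le_max_right _ _)⟩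

lemma sat_iff (γ : ObjKind) (ρ : ℕ → Vt n L) (h : ∀ N, 2 ≤ N → ρ N = ρ 2)
    (X : Set (Vt n L)) : SatObj γ ρ (obj n L γ X) ↔ ρ 2 ∈ X := by
  have hi := infSet_eq n L ρ h
  cases γ
  · simp [SatObj, obj, hi, Set.singleton_inter_nonempty]
  · simp [SatObj, obj, hi, Set.singleton_inter_eq_empty]

/-! ### General lemmas about `CovererWins` -/

lemma covererWins_subset {V : Type u} {G : GameGraph V} {γ : ObjKind} {a : ℕ}
    {S S' : Finset (Set V)} (hsub : S' ⊆ S) (h : CovererWins G γ a S) :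
    CovererWins G γ a S' := by
  obtain ⟨F, h1, h2⟩ := h
  exact ⟨F, h1, fun f2 hf2 α hα => h2 f2 hf2 α (hsub hα)⟩

lemma covererWins_mono {V : Type u} {G : GameGraph V} {γ : ObjKind} {a b : ℕ}
    {S : Finset (Set V)} (ha : 0 < a) (hab : a ≤ b) (h : CovererWins G γ a S) :
    CovererWins G γ b S := by
  obtain ⟨F, h1, h2⟩ := h
  set emb : Fin b → Fin a := fun i => if hi : (i : ℕ) < a then ⟨i, hi⟩ else ⟨0, ha⟩ with hemb
  refine ⟨fun i => F (emb i), fun i => h1 _, ?_⟩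
  intro f2 hf2 α hα
  obtain ⟨i, hi⟩ := h2 f2 hf2 α hα
  refine ⟨⟨(i : ℕ), lt_of_lt_of_le i.2 hab⟩, ?_⟩
  have he : emb ⟨(i : ℕ), lt_of_lt_of_le i.2 hab⟩ = i := by
    have hia : (i : ℕ) < a := i.2
    simp [hemb, hia]
  show SatObj γ (G.outcome (F (emb ⟨(i : ℕ), lt_of_lt_of_le i.2 hab⟩)) f2) α
  rw [he]
  exact hi

/-! ### Agent strategies -/

section Strat
variable (n L : ℕ)

/-- The strategy that at `uv d` moves to `g d` and otherwise stays put. -/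
def stratTo (g : ZMod n → Vt n L) : Strat (Vt n L) := fun _ v =>
  match v with
  | some (.inl (t, d)) => if t = 0 then g d else some (.inl (t, d))
  | w => w

lemma stratTo_eval (g : ZMod n → Vt n L) (h : List (Vt n L)) (d : ZMod n) :
    stratTo n L g h (uv n L d) = g d := by
  simp [stratTo, uv]

lemma stratTo_is1 (g : ZMod n → Vt n L) (hg : ∀ d, g d ∈ succs n L (uv n L d)) :
    (G n L).IsStrategy1 (stratTo n L g) := by
  intro h v hv
  show stratTo n L g h v ∈ succs n L v
  match v with
  | none => exact absurd rfl hv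
  | some (.inl (t, d)) =>
      by_cases ht : t = 0
      · subst ht
        have he : stratTo n L g h (some (.inl (0, d))) = g d := by simp [stratTo]
        rw [he]
        exact hg d
      · have he : stratTo n L g h (some (.inl (t, d))) = some (.inl (t, d)) := by
          simp [stratTo, ht]
        rw [he]
        simp [succs, ht]
  | some (.inr j) =>
      have he : stratTo n L g h (some (.inr j)) = some (.inr j) := by simp [stratTo]
      rw [he]; simp [succs]

/-- Extract Disruptor's first move. -/
lemma disruptor_first (f2 : Strat (Vt n L)) (hf2 : (G n L).IsStrategy2 f2) :
    ∃ d, f2 [] none = uv n L d := by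
  have hE := hf2 [] none rfl
  exact (hE : f2 [] none ∈ succs n L none)

end Strat

/-! ### The objectives -/

section Beta
variable (n L : ℕ) [NeZero n] (γ : ObjKind)

noncomputable def bundleF : Finset (Set (Vt n L)) :=
  Finset.univ.image fun i : ZMod n => obj n L γ (Bset n L i)

noncomputable def singF : Finset (Set (Vt n L)) :=
  Finset.univ.image fun j : Fin L => obj n L γ (Sset n L j)

noncomputable def beta : Finset (Set (Vt n L)) := bundleF n L γ ∪ singF n L γ

lemma mem_bundleF {α : Set (Vt n L)} :
    α ∈ bundleF n L γ ↔ ∃ i, α = obj n L γ (Bset n L i) := by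
  simp [bundleF, eq_comm]

lemma mem_singF {α : Set (Vt n L)} :
    α ∈ singF n L γ ↔ ∃ j, α = obj n L γ (Sset n L j) := by
  simp [singF, eq_comm]

lemma objB_ne_objS (i : ZMod n) (j : Fin L) :
    obj n L γ (Bset n L i) ≠ obj n L γ (Sset n L j) :=
  fun h => Bset_ne_Sset n L i j (obj_injective n L γ h)

lemma objB_inj : Function.Injective (fun i : ZMod n => obj n L γ (Bset n L i)) :=
  fun _ _ h => Bset_injective n L (obj_injective n L γ h)

lemma objS_inj : Function.Injective (fun j : Fin L => obj n L γ (Sset n L j)) :=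
  fun _ _ h => Sset_injective n L (obj_injective n L γ h)

lemma card_bundleF : (bundleF n L γ).card = n := by
  rw [bundleF, Finset.card_image_of_injective _ (objB_inj n L γ), Finset.card_univ, ZMod.card]

lemma card_singF : (singF n L γ).card = L := by
  rw [singF, Finset.card_image_of_injective _ (objS_inj n L γ), Finset.card_univ,
    Fintype.card_fin]

lemma disj_bundle_sing : Disjoint (bundleF n L γ) (singF n L γ) := by
  rw [Finset.disjoint_left]
  intro α h1 h2
  obtain ⟨i, rfl⟩ := (mem_bundleF n L γ).1 h1
  obtain ⟨j, hj⟩ := (mem_singF n L γ).1 h2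
  exact objB_ne_objS n L γ i j hj

lemma card_beta : (beta n L γ).card = n + L := by
  rw [beta, Finset.card_union_of_disjoint (disj_bundle_sing n L γ), card_bundleF, card_singF]

/-! ### Upper bounds: covering strategies -/

lemma win_single (j : Fin L) : CovererWins (G n L) γ 1 {obj n L γ (Sset n L j)} := by
  have hval : ∀ d : ZMod n, sv n L j ∈ succs n L (uv n L d) := by
    intro d; rw [succs_uv]; exact Or.inr (Or.inr ⟨j, rfl⟩)
  refine ⟨fun _ => stratTo n L (fun _ => sv n L j),
    fun _ => stratTo_is1 n L _ hval, ?_⟩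
  intro f2 hf2 α hα
  rw [Finset.mem_singleton] at hα
  subst hα
  obtain ⟨d, hd⟩ := disruptor_first n L f2 hf2
  obtain ⟨h1', h2', _, h4'⟩ := play_spec n L _ f2 (stratTo_is1 n L _ hval) hf2 d hd
  refine ⟨0, ?_⟩
  rw [sat_iff n L γ _ h4', h2', stratTo_eval]
  exact rfl

lemma win_bundle (m' : ℕ) (hm : n = m' + 1) (hm2 : 1 ≤ m') :
    CovererWins (G n L) γ m' (bundleF n L γ) := by
  set g : Fin m' → ZMod n → Vt n L := fun a d =>
    if (a : ℕ) = 0 then wp n L d else ws n L (d + 1 + ((a : ℕ) : ZMod n)) with hg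
  have hvalid : ∀ a : Fin m', ∀ d : ZMod n, g a d ∈ succs n L (uv n L d) := by
    intro a d
    rw [succs_uv, hg]
    by_cases h0 : (a : ℕ) = 0
    · simp only [h0, if_pos]
      exact Or.inl rfl
    · simp only [h0, if_neg, if_false]
      refine Or.inr (Or.inl ⟨d + 1 + ((a : ℕ) : ZMod n), ?_, rfl⟩)
      intro hEq
      have h1a : d + (1 + ((a : ℕ) : ZMod n)) = d + 0 := by
        rw [add_zero, ← add_assoc]; exact hEq
      have h2a : ((1 + (a : ℕ) : ℕ) : ZMod n) = 0 := by
        push_cast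
        exact add_left_cancel h1a
      rw [ZMod.natCast_eq_zero_iff] at h2a
      have := Nat.le_of_dvd (by omega) h2a
      have := a.2
      omega
  refine ⟨fun a => stratTo n L (g a), fun a => stratTo_is1 n L _ (hvalid a), ?_⟩
  intro f2 hf2 α hα
  obtain ⟨i, rfl⟩ := (mem_bundleF n L γ).1 hα
  obtain ⟨d, hd⟩ := disruptor_first n L f2 hf2
  set c : ℕ := (i - d).val with hcdef
  have hc : ((c : ℕ) : ZMod n) = i - d := ZMod.natCast_zmod_val _
  have hclt : c < n := ZMod.val_lt _
  have sat_of : ∀ a : Fin m', g a d ∈ Bset n L i →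
      SatObj γ ((G n L).outcome (stratTo n L (g a)) f2) (obj n L γ (Bset n L i)) := by
    intro a hmem
    obtain ⟨h1', h2', _, h4'⟩ := play_spec n L _ f2 (stratTo_is1 n L _ (hvalid a)) hf2 d hd
    rw [sat_iff n L γ _ h4', h2', stratTo_eval]
    exact hmem
  by_cases h0 : c = 0
  · refine ⟨⟨0, hm2⟩, sat_of ⟨0, hm2⟩ ?_⟩
    have : g ⟨0, hm2⟩ d = wp n L d := by simp [hg]
    rw [this, mem_Bset_wp]
    left
    have : i - d = 0 := by rw [← hc, h0]; simp
    exact (sub_eq_zero.1 this)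
  · by_cases h1 : c = 1
    · refine ⟨⟨0, hm2⟩, sat_of ⟨0, hm2⟩ ?_⟩
      have : g ⟨0, hm2⟩ d = wp n L d := by simp [hg]
      rw [this, mem_Bset_wp]
      right
      have : i - d = 1 := by rw [← hc, h1]; simp
      rw [sub_eq_iff_eq_add] at this
      rw [this, add_comm]
    · have hc2 : 2 ≤ c := by omega
      have hcm : c - 1 < m' := by omega
      refine ⟨⟨c - 1, hcm⟩, sat_of ⟨c - 1, hcm⟩ ?_⟩
      have hne0 : ((⟨c - 1, hcm⟩ : Fin m') : ℕ) ≠ 0 := by simp; omega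
      have : g ⟨c - 1, hcm⟩ d = ws n L (d + 1 + ((c - 1 : ℕ) : ZMod n)) := by
        simp only [hg, hne0, if_neg, if_false]
      rw [this, mem_Bset_ws]
      have : d + 1 + ((c - 1 : ℕ) : ZMod n) = i := by
        rw [Nat.cast_sub (by omega : 1 ≤ c), hc]
        push_cast
        ring
      rw [this]

end Beta

/-! ### Lower bound: `|S|` agents are needed when a bundle index avoids `S` -/

section Lower
variable (n L : ℕ) [NeZero n] (γ : ObjKind)

lemma lower_bound (a : ℕ) (S : Finset (Set (Vt n L))) (hS : S ⊆ beta n L γ)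
    (d0 : ZMod n)
    (hd0 : obj n L γ (Bset n L d0) ∉ S ∨ obj n L γ (Bset n L (d0 + 1)) ∉ S)
    (h : CovererWins (G n L) γ a S) : S.card ≤ a := by
  rcases Finset.eq_empty_or_nonempty S with rfl | hSne
  · simp
  obtain ⟨F, hF1, hcov⟩ := h
  set f2 : Strat (Vt n L) := fun _ v => if v = none then uv n L d0 else v with hf2def
  have hf2 : (G n L).IsStrategy2 f2 := by
    intro h v hv
    have hv' : v = none := hv
    subst hv'
    show f2 h none ∈ succs n L none
    rw [hf2def]
    exact ⟨d0, by simp⟩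
  have hd : f2 [] none = uv n L d0 := by simp [hf2def]
  have hcov' := hcov f2 hf2
  have hspec : ∀ i : Fin a, ((G n L).outcome (F i) f2) 2 ∈ succs n L (uv n L d0) ∧
      ∀ N, 2 ≤ N → ((G n L).outcome (F i) f2) N = ((G n L).outcome (F i) f2) 2 := by
    intro i
    obtain ⟨_, _, h3, h4⟩ := play_spec n L (F i) f2 (hF1 i) hf2 d0 hd
    exact ⟨h3, h4⟩
  have claim : ∀ i : Fin a, ∀ α₁ ∈ S, ∀ α₂ ∈ S,
      SatObj γ ((G n L).outcome (F i) f2) α₁ →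
      SatObj γ ((G n L).outcome (F i) f2) α₂ → α₁ = α₂ := by
    intro i α₁ h1 α₂ h2 s1 s2
    obtain ⟨hwmem, hconst⟩ := hspec i
    set w := ((G n L).outcome (F i) f2) 2 with hwdef
    have decomp : ∀ α ∈ S, SatObj γ ((G n L).outcome (F i) f2) α →
        (∃ i', α = obj n L γ (Bset n L i') ∧ w ∈ Bset n L i') ∨
        (∃ j, α = obj n L γ (Sset n L j) ∧ w ∈ Sset n L j) := by
      intro α hα hs
      rcases Finset.mem_union.1 (hS hα) with hb | hsg
      · obtain ⟨i', rfl⟩ := (mem_bundleF n L γ).1 hb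
        exact Or.inl ⟨i', rfl, (sat_iff n L γ _ hconst _).1 hs⟩
      · obtain ⟨j, rfl⟩ := (mem_singF n L γ).1 hsg
        exact Or.inr ⟨j, rfl, (sat_iff n L γ _ hconst _).1 hs⟩
    rcases hwmem with hw | ⟨iw, hiwne, hw⟩ | ⟨jw, hw⟩
    · -- w = wp d0
      have get : ∀ α ∈ S, SatObj γ ((G n L).outcome (F i) f2) α →
          α = obj n L γ (Bset n L d0) ∨ α = obj n L γ (Bset n L (d0 + 1)) := by
        intro α hα hs
        rcases decomp α hα hs with ⟨i', rfl, hmem⟩ | ⟨j, rfl, hmem⟩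
        · rw [hw, mem_Bset_wp] at hmem
          rcases hmem with rfl | rfl
          · exact Or.inl rfl
          · exact Or.inr rfl
        · rw [hw] at hmem
          exact absurd hmem (not_mem_Sset_wp n L d0 j)
      rcases hd0 with hex | hex
      · have g1 := (get α₁ h1 s1).resolve_left (fun hh => hex (hh ▸ h1))
        have g2 := (get α₂ h2 s2).resolve_left (fun hh => hex (hh ▸ h2))
        rw [g1, g2]
      · have g1 := (get α₁ h1 s1).resolve_right (fun hh => hex (hh ▸ h1))
        have g2 := (get α₂ h2 s2).resolve_right (fun hh => hex (hh ▸ h2))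
        rw [g1, g2]
    · -- w = ws iw
      have get : ∀ α ∈ S, SatObj γ ((G n L).outcome (F i) f2) α →
          α = obj n L γ (Bset n L iw) := by
        intro α hα hs
        rcases decomp α hα hs with ⟨i', rfl, hmem⟩ | ⟨j, rfl, hmem⟩
        · rw [hw, mem_Bset_ws] at hmem
          rw [hmem]
        · rw [hw] at hmem
          exact absurd hmem (not_mem_Sset_ws n L iw j)
      rw [get α₁ h1 s1, get α₂ h2 s2]
    · -- w = sv jw
      have get : ∀ α ∈ S, SatObj γ ((G n L).outcome (F i) f2) α →
          α = obj n L γ (Sset n L jw) := by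
        intro α hα hs
        rcases decomp α hα hs with ⟨i', rfl, hmem⟩ | ⟨j, rfl, hmem⟩
        · rw [hw] at hmem
          exact absurd hmem (not_mem_Bset_sv n L jw i')
        · rw [hw, mem_Sset_sv] at hmem
          rw [hmem]
      rw [get α₁ h1 s1, get α₂ h2 s2]
  haveI hne : Nonempty (Fin a) := by
    obtain ⟨α0, hα0⟩ := hSne
    obtain ⟨i, _⟩ := hcov' α0 hα0
    exact ⟨i⟩
  set pick : Set (Vt n L) → Fin a := fun α =>
    if h : ∃ i, SatObj γ ((G n L).outcome (F i) f2) α then h.choose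
    else Classical.arbitrary _ with hpick
  have hinj : Set.InjOn pick ↑S := by
    intro α₁ h1 α₂ h2 he
    have e1 : ∃ i, SatObj γ ((G n L).outcome (F i) f2) α₁ := hcov' α₁ h1
    have e2 : ∃ i, SatObj γ ((G n L).outcome (F i) f2) α₂ := hcov' α₂ h2
    rw [hpick] at he
    simp only [dif_pos e1, dif_pos e2] at he
    exact claim e1.choose α₁ h1 α₂ h2 e1.choose_spec (he ▸ e2.choose_spec)
  have hcard := Finset.card_le_card_of_injOn pick
    (fun α _ => Finset.mem_univ (pick α)) hinj
  simpa using hcard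

end Lower

end Stmt7Aux

open Stmt7Aux in
/-- for every γ, k ≥ 2 and 1 ≤ l < k there is a γ-coverage game
(G, k, β) such that β is (k,l)-decomposable but not (k,l+1)-decomposable in the
initial vertex. -/
theorem stmt7 (γ : ObjKind) (k l : ℕ) (hk : 2 ≤ k) (hl1 : 1 ≤ l) (hlk : l < k) :
    ∃ (V : Type) (G : GameGraph V) (β : Finset (Set V)),
      Finite V ∧ G.WellFormed ∧
      Decomposable G γ k β G.init l ∧ ¬ Decomposable G γ k β G.init (l + 1) := by
  classical
  set m : ℕ := k - l + 1 with hm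
  set n : ℕ := m + 1 with hn
  set L : ℕ := l - 1 with hL
  haveI : NeZero n := ⟨by omega⟩
  have hm2 : 2 ≤ m := by omega
  have hInit : (Stmt7Aux.G n L).withInit ((Stmt7Aux.G n L).init) = Stmt7Aux.G n L := rfl
  refine ⟨Vt n L, Stmt7Aux.G n L, beta n L γ, inferInstance, G_wf n L, ?_, ?_⟩
  · -- (k, l)-decomposable
    refine ⟨fun i => if h : (i : ℕ) = 0 then bundleF n L γ
        else {obj n L γ (Sset n L ⟨(i : ℕ) - 1, by have := i.isLt; omega⟩)},
      fun i => if h : (i : ℕ) = 0 then Finset.univ.filter (fun a : Fin k => (a : ℕ) < m)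
        else {(⟨m + ((i : ℕ) - 1), by have := i.isLt; omega⟩ : Fin k)},
      ?_, ?_, ?_, ?_, ?_, ?_⟩
    · -- bs pairwise disjoint
      intro i j hij
      beta_reduce
      by_cases hi : (i : ℕ) = 0 <;> by_cases hj : (j : ℕ) = 0
      · exact absurd (Fin.ext (by omega)) hij
      · rw [dif_pos hi, dif_neg hj, Finset.disjoint_right]
        intro α hα
        rw [Finset.mem_singleton] at hα
        subst hα
        intro hb
        obtain ⟨i', hi'⟩ := (mem_bundleF n L γ).1 hb
        exact objB_ne_objS n L γ i' _ hi'.symm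
      · rw [dif_neg hi, dif_pos hj, Finset.disjoint_left]
        intro α hα
        rw [Finset.mem_singleton] at hα
        subst hα
        intro hb
        obtain ⟨i', hi'⟩ := (mem_bundleF n L γ).1 hb
        exact objB_ne_objS n L γ i' _ hi'.symm
      · rw [dif_neg hi, dif_neg hj, Finset.disjoint_singleton]
        intro heq
        have hidx := objS_inj n L γ heq
        have : (i : ℕ) - 1 = (j : ℕ) - 1 := by
          simpa [Fin.ext_iff] using hidx
        exact hij (Fin.ext (by omega))
    · -- biUnion bs = beta
      ext α
      simp only [Finset.mem_biUnion, Finset.mem_univ, true_and]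
      constructor
      · rintro ⟨i, hi⟩
        beta_reduce at hi
        by_cases h : (i : ℕ) = 0
        · rw [dif_pos h] at hi
          exact Finset.mem_union_left _ hi
        · rw [dif_neg h, Finset.mem_singleton] at hi
          subst hi
          exact Finset.mem_union_right _ ((mem_singF n L γ).2 ⟨_, rfl⟩)
      · intro hα
        rcases Finset.mem_union.1 hα with hb | hs
        · refine ⟨⟨0, by omega⟩, ?_⟩
          beta_reduce
          rw [dif_pos rfl]
          exact hb
        · obtain ⟨j, rfl⟩ := (mem_singF n L γ).1 hs
          refine ⟨⟨(j : ℕ) + 1, by have := j.isLt; omega⟩, ?_⟩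
          beta_reduce
          rw [dif_neg (by simp), Finset.mem_singleton]
          refine congrArg (obj n L γ) (congrArg (Sset n L) (Fin.ext ?_))
          simp
    · -- As nonempty
      intro i
      beta_reduce
      by_cases h : (i : ℕ) = 0
      · rw [dif_pos h]
        exact ⟨⟨0, by omega⟩, Finset.mem_filter.2 ⟨Finset.mem_univ _,
          by show (0 : ℕ) < m; omega⟩⟩
      · rw [dif_neg h]
        exact ⟨_, Finset.mem_singleton_self _⟩
    · -- As pairwise disjoint
      intro i j hij
      beta_reduce
      by_cases hi : (i : ℕ) = 0 <;> by_cases hj : (j : ℕ) = 0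
      · exact absurd (Fin.ext (by omega)) hij
      · rw [dif_pos hi, dif_neg hj, Finset.disjoint_right]
        intro x hx
        rw [Finset.mem_singleton] at hx
        subst hx
        intro hmem
        have := (Finset.mem_filter.1 hmem).2
        simp only [Fin.val_mk] at this
        omega
      · rw [dif_neg hi, dif_pos hj, Finset.disjoint_left]
        intro x hx
        rw [Finset.mem_singleton] at hx
        subst hx
        intro hmem
        have := (Finset.mem_filter.1 hmem).2
        simp only [Fin.val_mk] at this
        omega
      · rw [dif_neg hi, dif_neg hj, Finset.disjoint_singleton]
        intro heq
        have : m + ((i : ℕ) - 1) = m + ((j : ℕ) - 1) := by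
          simpa [Fin.ext_iff] using heq
        exact hij (Fin.ext (by omega))
    · -- biUnion As = univ
      ext x
      simp only [Finset.mem_biUnion, Finset.mem_univ, true_and, iff_true]
      by_cases hx : (x : ℕ) < m
      · refine ⟨⟨0, by omega⟩, ?_⟩
        beta_reduce
        rw [dif_pos rfl]
        exact Finset.mem_filter.2 ⟨Finset.mem_univ _, hx⟩
      · refine ⟨⟨(x : ℕ) - m + 1, by have := x.isLt; omega⟩, ?_⟩
        beta_reduce
        rw [dif_neg (by simp), Finset.mem_singleton]
        rw [Fin.ext_iff]
        simp only [Fin.val_mk]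
        omega
    · -- covering strategies
      intro i
      rw [hInit]
      beta_reduce
      by_cases h : (i : ℕ) = 0
      · rw [dif_pos h, dif_pos h]
        have hcard : m ≤ (Finset.univ.filter (fun a : Fin k => (a : ℕ) < m)).card := by
          have hmk : m ≤ k := by omega
          have h := Finset.card_le_card_of_injOn
            (s := (Finset.univ : Finset (Fin m)))
            (t := Finset.univ.filter (fun a : Fin k => (a : ℕ) < m))
            (fun x => (⟨(x : ℕ), lt_of_lt_of_le x.2 hmk⟩ : Fin k))
            (fun x _ => by
              simp only [Finset.mem_filter, Finset.mem_univ, true_and]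
              simpa using x.2)
            (fun x _ y _ hxy => Fin.ext (by simpa [Fin.ext_iff] using hxy))
          simpa using h
        exact covererWins_mono (show 0 < m by omega) hcard (win_bundle n L γ m hn (by omega))
      · rw [dif_neg h, dif_neg h, Finset.card_singleton]
        exact win_single n L γ _
  · -- not (k, l+1)-decomposable
    rintro ⟨bs, As, hdisj, hunion, hne, hAdisj, hAunion, hwin⟩
    simp only [hInit] at hwin
    have hsum_a : (Finset.univ : Finset (Fin (l + 1))).sum (fun i => (As i).card) = k := by
      have hb : (Finset.univ.biUnion As).card = Finset.univ.sum (fun i => (As i).card) :=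
        Finset.card_biUnion (fun i _ j _ hij => hAdisj i j hij)
      rw [hAunion, Finset.card_univ, Fintype.card_fin] at hb
      omega
    have hsum_c : (Finset.univ : Finset (Fin (l + 1))).sum (fun i => (bs i).card) = k + 1 := by
      have hb : (Finset.univ.biUnion bs).card = Finset.univ.sum (fun i => (bs i).card) :=
        Finset.card_biUnion (fun i _ j _ hij => hdisj i j hij)
      rw [hunion, card_beta] at hb
      omega
    have hsub : ∀ i, bs i ⊆ beta n L γ :=
      fun i => hunion ▸ Finset.subset_biUnion_of_mem bs (Finset.mem_univ i)
    by_cases hA : ∃ i0, ∀ d : ZMod n, obj n L γ (Bset n L d) ∈ bs i0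
    · obtain ⟨i0, hi0⟩ := hA
      have hbsub : bundleF n L γ ⊆ bs i0 := by
        intro α hα
        obtain ⟨i, rfl⟩ := (mem_bundleF n L γ).1 hα
        exact hi0 i
      have hc0 : n ≤ (bs i0).card := by
        calc n = (bundleF n L γ).card := (card_bundleF n L γ).symm
          _ ≤ _ := Finset.card_le_card hbsub
      have he1 : obj n L γ (Bset n L (0 + 1)) ∈ bs i0 := hi0 _
      have ha0 : (bs i0).card - 1 ≤ (As i0).card := by
        have hsub' : (bs i0).erase (obj n L γ (Bset n L (0 + 1))) ⊆ beta n L γ :=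
          fun α hα => hsub i0 (Finset.erase_subset _ _ hα)
        have hw' := covererWins_subset (Finset.erase_subset (obj n L γ (Bset n L (0 + 1))) (bs i0)) (hwin i0)
        have := lower_bound n L γ _ _ hsub' 0 (Or.inr (Finset.notMem_erase _ _)) hw'
        rw [Finset.card_erase_of_mem he1] at this
        exact this
      have hempty : ∃ j0, j0 ≠ i0 ∧ (bs j0).card = 0 := by
        by_contra hcon
        push_neg at hcon
        have h1 : ∀ j ∈ Finset.univ.erase i0, 1 ≤ (bs j).card := by
          intro j hj
          have := hcon j (Finset.ne_of_mem_erase hj)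
          omega
        have h2 : (Finset.univ.erase i0).card ≤
            (Finset.univ.erase i0).sum (fun j => (bs j).card) := by
          calc (Finset.univ.erase i0).card
              = (Finset.univ.erase i0).sum (fun _ => 1) := by
                rw [Finset.sum_const, smul_eq_mul, mul_one]
            _ ≤ _ := Finset.sum_le_sum h1
        have h3 : (bs i0).card + (Finset.univ.erase i0).sum (fun j => (bs j).card) = k + 1 :=
          (Finset.add_sum_erase Finset.univ (fun j => (bs j).card)
            (Finset.mem_univ i0)).trans hsum_c
        have h4 : (Finset.univ.erase i0).card = l := by
          rw [Finset.card_erase_of_mem (Finset.mem_univ i0), Finset.card_univ,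
            Fintype.card_fin]
          omega
        omega
      obtain ⟨j0, hj0ne, hj0c⟩ := hempty
      have ha_j0 : 1 ≤ (As j0).card := Finset.card_pos.2 (hne j0)
      have hrest : ∀ j ∈ (Finset.univ.erase i0).erase j0, (bs j).card ≤ (As j).card := by
        intro j hj
        have hji0 : j ≠ i0 := Finset.ne_of_mem_erase (Finset.mem_of_mem_erase hj)
        have hd : obj n L γ (Bset n L 0) ∉ bs j := by
          intro hmem
          have hdj := hdisj j i0 hji0
          rw [Finset.disjoint_left] at hdj
          exact hdj hmem (hi0 0)
        exact lower_bound n L γ _ _ (hsub j) 0 (Or.inl hd) (hwin j)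
      have hsum_rest : ((Finset.univ.erase i0).erase j0).sum (fun j => (bs j).card) ≤
          ((Finset.univ.erase i0).erase j0).sum (fun j => (As j).card) :=
        Finset.sum_le_sum hrest
      have hj0mem : j0 ∈ Finset.univ.erase i0 :=
        Finset.mem_erase.2 ⟨hj0ne, Finset.mem_univ j0⟩
      have hdeca1 : (As j0).card + ((Finset.univ.erase i0).erase j0).sum
          (fun j => (As j).card) = (Finset.univ.erase i0).sum (fun j => (As j).card) :=
        Finset.add_sum_erase _ (fun j => (As j).card) hj0mem
      have hdeca2 : (As i0).card + (Finset.univ.erase i0).sum (fun j => (As j).card) = k :=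
        (Finset.add_sum_erase Finset.univ (fun j => (As j).card)
          (Finset.mem_univ i0)).trans hsum_a
      have hdecc1 : (bs j0).card + ((Finset.univ.erase i0).erase j0).sum
          (fun j => (bs j).card) = (Finset.univ.erase i0).sum (fun j => (bs j).card) :=
        Finset.add_sum_erase _ (fun j => (bs j).card) hj0mem
      have hdecc2 : (bs i0).card + (Finset.univ.erase i0).sum (fun j => (bs j).card) = k + 1 :=
        (Finset.add_sum_erase Finset.univ (fun j => (bs j).card)
          (Finset.mem_univ i0)).trans hsum_c
      omega
    · push_neg at hA
      have hle : ∀ i ∈ (Finset.univ : Finset (Fin (l + 1))), (bs i).card ≤ (As i).card := by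
        intro i _
        obtain ⟨d, hd⟩ := hA i
        exact lower_bound n L γ _ _ (hsub i) d (Or.inl hd) (hwin i)
      have := Finset.sum_le_sum hle
      omega
end

section
/- Let γ ∈ {Büchi, co-Büchi} and let (G, k, β) be a γ-coverage game. For every vertex v ∈ V₁ and every l ∈ {1,…,k}, if v is a (k,l)-fork for β, then β is (k,l)-decomposable in v. -/
open scoped Classical

universe u

variable {V : Type u}

/-- `v` is a `(k,l)`-fork for `β`: Coverer has a covering strategy in `(Gᵛ, k, β)`
whose set of first moves at `v` consists of exactly `l` distinct vertices. -/
def IsFork (G : GameGraph V) (γ : ObjKind) (k : ℕ) (β : Finset (Set V))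
    (v : V) (l : ℕ) : Prop :=
  ∃ F : Fin k → Strat V,
    (∀ i, (G.withInit v).IsStrategy1 (F i)) ∧ IsCovering (G.withInit v) γ k β F ∧
    (Finset.univ.image fun i => F i [] v).card = l

/-- The "group key" of a history/current-vertex pair: the second vertex of the
play so far (which identifies the group of the agent, since groups split at the
first move from `v`). -/
def gkey : List V → V → V
  | _ :: x :: _, _ => x
  | _, u => u

lemma gkey_append {h : List V} {u : V} (u' : V) {wj : V}
    (hne : h ≠ []) (hk : gkey h u = wj) : gkey (h ++ [u]) u' = wj := by
  cases h with
  | nil => exact absurd rfl hne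
  | cons a t =>
    cases t with
    | nil => exact hk
    | cons b t2 => exact hk

lemma combine_run (G : GameGraph V) (v wj : V) (hv : v ∈ G.V1)
    (f1 f2 f2' : Strat V) (hfm : f1 [] v = wj)
    (hagree : ∀ h u, gkey h u = wj → f2 h u = f2' h u) :
    ∀ n, G.run f1 f2 v n = G.run f1 f2' v n := by
  have H : ∀ n, G.run f1 f2 v n = G.run f1 f2' v n ∧
      (1 ≤ n → gkey (G.run f1 f2' v n).1 (G.run f1 f2' v n).2 = wj ∧
        (G.run f1 f2' v n).1 ≠ []) := by
    intro n
    induction n with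
    | zero => exact ⟨rfl, fun h => absurd h (by norm_num)⟩
    | succ n ih =>
      obtain ⟨heq, hkey⟩ := ih
      rcases Nat.eq_zero_or_pos n with h0 | h1
      · subst h0
        have hr0 : G.run f1 f2 v 0 = ([], v) := rfl
        have hr0' : G.run f1 f2' v 0 = ([], v) := rfl
        have h1 : G.run f1 f2 v 1 = ([v], f1 [] v) := by
          show (let p := G.run f1 f2 v 0;
            (p.1 ++ [p.2], if p.2 ∈ G.V1 then f1 p.1 p.2 else f2 p.1 p.2)) = _
          rw [hr0]; simp [hv]
        have h1' : G.run f1 f2' v 1 = ([v], f1 [] v) := by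
          show (let p := G.run f1 f2' v 0;
            (p.1 ++ [p.2], if p.2 ∈ G.V1 then f1 p.1 p.2 else f2' p.1 p.2)) = _
          rw [hr0']; simp [hv]
        refine ⟨h1.trans h1'.symm, fun _ => ?_⟩
        rw [h1']
        exact ⟨hfm, by simp⟩
      · obtain ⟨hk, hne⟩ := hkey h1
        have heq2 : G.run f1 f2 v (n + 1) = G.run f1 f2' v (n + 1) := by
          show (let p := G.run f1 f2 v n;
            (p.1 ++ [p.2], if p.2 ∈ G.V1 then f1 p.1 p.2 else f2 p.1 p.2)) =
            (let p := G.run f1 f2' v n;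
            (p.1 ++ [p.2], if p.2 ∈ G.V1 then f1 p.1 p.2 else f2' p.1 p.2))
          rw [heq]
          by_cases hp : (G.run f1 f2' v n).2 ∈ G.V1
          · simp [hp]
          · simp [hp]
            exact hagree _ _ hk
        refine ⟨heq2, fun _ => ?_⟩
        have hform : G.run f1 f2' v (n + 1) =
            (let p := G.run f1 f2' v n;
            (p.1 ++ [p.2], if p.2 ∈ G.V1 then f1 p.1 p.2 else f2' p.1 p.2)) := rfl
        rw [hform]
        exact ⟨gkey_append _ hne hk, by simp⟩
  exact fun n => (H n).1

/-- if v ∈ V₁ is a (k,l)-fork for β, then β is (k,l)-decomposable in v. -/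
theorem stmt8 {V : Type u} [Fintype V] (γ : ObjKind) (G : GameGraph V)
    (hG : G.WellFormed) (k : ℕ) (hk : 1 ≤ k) (β : Finset (Set V))
    (v : V) (hv : v ∈ G.V1) (l : ℕ) (hl1 : 1 ≤ l) (hlk : l ≤ k)
    (hfork : IsFork G γ k β v l) :
    Decomposable G γ k β v l := by
  classical
  obtain ⟨F, hF1, hFcov, hcard⟩ := hfork
  set S : Finset V := Finset.univ.image (fun i => F i [] v) with hSdef
  have hScard : S.card = l := hcard
  let e := S.equivFin
  let w : Fin l → V := fun j => ((e.symm (Fin.cast hScard.symm j) : S) : V)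
  have hw_mem : ∀ j, w j ∈ S := fun j => (e.symm (Fin.cast hScard.symm j)).2
  have hw_inj : Function.Injective w := by
    intro j j' h
    have h2 : Fin.cast hScard.symm j = Fin.cast hScard.symm j' :=
      e.symm.injective (Subtype.ext h)
    have h3 := congrArg Fin.val h2
    exact Fin.ext h3
  let As : Fin l → Finset (Fin k) :=
    fun j => Finset.univ.filter (fun i => F i [] v = w j)
  have hAs_mem : ∀ i j, i ∈ As j ↔ F i [] v = w j := by
    intro i j; simp [As]
  have hAs_ne : ∀ j, (As j).Nonempty := by
    intro j
    obtain ⟨i, _, hi⟩ := Finset.mem_image.mp (hw_mem j)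
    exact ⟨i, (hAs_mem i j).mpr hi⟩
  have hAs_disj : ∀ i j, i ≠ j → Disjoint (As i) (As j) := by
    intro i j hij
    rw [Finset.disjoint_left]
    intro a hai haj
    exact hij (hw_inj (((hAs_mem a i).mp hai).symm.trans ((hAs_mem a j).mp haj)))
  have hAs_union : Finset.univ.biUnion As = Finset.univ := by
    apply Finset.eq_univ_of_forall
    intro i
    have hmem : F i [] v ∈ S := Finset.mem_image.mpr ⟨i, Finset.mem_univ i, rfl⟩
    let x : S := ⟨F i [] v, hmem⟩
    refine Finset.mem_biUnion.mpr ⟨Fin.cast hScard (e x), Finset.mem_univ _, ?_⟩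
    refine (hAs_mem i _).mpr ?_
    show F i [] v = ((e.symm (Fin.cast hScard.symm (Fin.cast hScard (e x))) : S) : V)
    have : Fin.cast hScard.symm (Fin.cast hScard (e x)) = e x := rfl
    rw [this, e.symm_apply_apply]
  -- every objective is covered by some single group
  have main : ∀ α ∈ β, ∃ j : Fin l, ∀ f2, (G.withInit v).IsStrategy2 f2 →
      ∃ i ∈ As j, SatObj γ ((G.withInit v).outcome (F i) f2) α := by
    intro α hα
    by_contra hno
    push_neg at hno
    choose f2s hf2s hbad using hno
    let j0 : Fin l := ⟨0, hl1⟩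
    let cmb : Strat V := fun h u =>
      if hx : ∃ j, w j = gkey h u then f2s hx.choose h u else f2s j0 h u
    have hcmb2 : (G.withInit v).IsStrategy2 cmb := by
      intro h u hu
      show G.E u (cmb h u)
      simp only [cmb]
      split
      · exact hf2s _ h u hu
      · exact hf2s j0 h u hu
    obtain ⟨i, hi⟩ := hFcov cmb hcmb2 α hα
    obtain ⟨j, _, hij⟩ := Finset.mem_biUnion.mp
      (hAs_union ▸ Finset.mem_univ i)
    have hiwj : F i [] v = w j := (hAs_mem i j).mp hij
    have hagree : ∀ h u, gkey h u = w j → cmb h u = f2s j h u := by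
      intro h u hk
      have hx : ∃ j', w j' = gkey h u := ⟨j, hk.symm⟩
      simp only [cmb, dif_pos hx]
      have hspec := hx.choose_spec
      have heq : hx.choose = j := hw_inj (hspec.trans hk)
      exact congrArg (fun j' => f2s j' h u) heq
    have hrun := combine_run (G.withInit v) v (w j) hv (F i) cmb (f2s j) hiwj hagree
    have hout : (G.withInit v).outcome (F i) cmb =
        (G.withInit v).outcome (F i) (f2s j) := by
      funext n
      show ((G.withInit v).run (F i) cmb v n).2 = ((G.withInit v).run (F i) (f2s j) v n).2
      rw [hrun n]
    exact hbad j i hij (hout ▸ hi)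
  -- assign each objective to a group
  let g : Set V → Fin l := fun α => if hα : α ∈ β then (main α hα).choose else ⟨0, hl1⟩
  have hg : ∀ α (hα : α ∈ β), ∀ f2, (G.withInit v).IsStrategy2 f2 →
      ∃ i ∈ As (g α), SatObj γ ((G.withInit v).outcome (F i) f2) α := by
    intro α hα
    have : g α = (main α hα).choose := dif_pos hα
    rw [this]
    exact (main α hα).choose_spec
  let bs : Fin l → Finset (Set V) := fun j => β.filter (fun α => g α = j)
  refine ⟨bs, As, ?_, ?_, hAs_ne, hAs_disj, hAs_union, ?_⟩
  · intro i j hij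
    rw [Finset.disjoint_left]
    intro α hαi hαj
    have h1 := (Finset.mem_filter.mp hαi).2
    have h2 := (Finset.mem_filter.mp hαj).2
    exact hij (h1.symm.trans h2)
  · ext α
    simp only [Finset.mem_biUnion, Finset.mem_univ, true_and, bs, Finset.mem_filter]
    constructor
    · rintro ⟨j, hα, _⟩; exact hα
    · intro hα; exact ⟨g α, hα, rfl⟩
  · intro j
    refine ⟨fun m => F (((As j).equivFin).symm m : (As j)), fun m => hF1 _, ?_⟩
    intro f2 hf2 α hα
    obtain ⟨hαβ, hgα⟩ := Finset.mem_filter.mp hα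
    obtain ⟨i, hiA, hsat⟩ := hg α hαβ f2 hf2
    rw [hgα] at hiA
    refine ⟨(As j).equivFin ⟨i, hiA⟩, ?_⟩
    simpa only [Equiv.symm_apply_apply] using hsat
end

section
/- Let γ ∈ {Büchi, co-Büchi}, let (G, k, β) be a γ-coverage game, and let v ∈ V. Then Coverer has a covering strategy in (Gᵛ, k, β) if and only if v ∉ V_avoid, or v ∈ V_avoid and Coverer has a covering strategy in the one-agent γ-coverage game (G_avoidᵛ, 1, β). -/
open scoped Classical

universe u

variable {V : Type u}

/-- `v` is a fork for `β`: it is owned by Player 1 and is a `(k,l)`-fork for some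
`2 ≤ l ≤ k`. -/
def ForkVertex (G : GameGraph V) (γ : ObjKind) (k : ℕ) (β : Finset (Set V))
    (v : V) : Prop :=
  v ∈ G.V1 ∧ ∃ l, 2 ≤ l ∧ l ≤ k ∧ IsFork G γ k β v l

/-- `V_avoid` relative to a target set `T`: the set of vertices from which Player 2
has a strategy guaranteeing that the play never visits `T`. -/
def AvoidSet (G : GameGraph V) (T : Set V) : Set V :=
  {v | ∃ f2, G.IsStrategy2 f2 ∧ ∀ f1, G.IsStrategy1 f1 →
    ∀ n, G.outcomeFrom f1 f2 v n ∉ T}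

/-- The restriction of `G` to the set of vertices `U`. -/
def GameGraph.restrict (G : GameGraph V) (U : Set V) : GameGraph V :=
  ⟨G.V1 ∩ U, G.V2 ∩ U, G.init, fun a b => G.E a b ∧ a ∈ U ∧ b ∈ U⟩

/-! ### Auxiliary development for `stmt9` -/

namespace S9

variable {V : Type u}

open GameGraph List

/-- A default successor (valid when `E` is total). -/
noncomputable def dflt (G : GameGraph V) (x : V) : V :=
  if h : ∃ u, G.E x u then Classical.choose h else x

lemma dflt_spec (G : GameGraph V) (hG : G.WellFormed) (x : V) : G.E x (dflt G x) := by
  have h : ∃ u, G.E x u := hG.2.2 x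
  rw [dflt, dif_pos h]; exact Classical.choose_spec h

lemma mem_V2 {G : GameGraph V} (hG : G.WellFormed) {x : V} (hx : x ∉ G.V1) : x ∈ G.V2 := by
  have := hG.2.1
  have hx2 : x ∈ G.V1 ∪ G.V2 := by rw [this]; trivial
  rcases hx2 with h | h
  · exact absurd h hx
  · exact h

lemma not_V1 {G : GameGraph V} (hG : G.WellFormed) {x : V} (hx : x ∈ G.V2) : x ∉ G.V1 :=
  fun h1 => hG.1.le_bot ⟨h1, hx⟩

/-- Shift a strategy by a history prefix. -/
def shiftS (f : Strat V) (h : List V) : Strat V := fun x w => f (h ++ x) w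

lemma shiftS_strategy1 {G : GameGraph V} {f : Strat V} (hf : G.IsStrategy1 f) (h : List V) :
    G.IsStrategy1 (shiftS f h) := fun x v hv => hf (h ++ x) v hv

lemma shiftS_strategy2 {G : GameGraph V} {f : Strat V} (hf : G.IsStrategy2 f) (h : List V) :
    G.IsStrategy2 (shiftS f h) := fun x v hv => hf (h ++ x) v hv

lemma run_succ (G : GameGraph V) (f1 f2 : Strat V) (v : V) (n : ℕ) :
    G.run f1 f2 v (n + 1) =
      ((G.run f1 f2 v n).1 ++ [(G.run f1 f2 v n).2],
        if (G.run f1 f2 v n).2 ∈ G.V1 then f1 (G.run f1 f2 v n).1 (G.run f1 f2 v n).2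
        else f2 (G.run f1 f2 v n).1 (G.run f1 f2 v n).2) := rfl

lemma outcomeFrom_zero (G : GameGraph V) (f1 f2 : Strat V) (v : V) :
    G.outcomeFrom f1 f2 v 0 = v := rfl

/-- The history component of a run is the list of earlier outcomes. -/
lemma run_fst (G : GameGraph V) (f1 f2 : Strat V) (v : V) (n : ℕ) :
    (G.run f1 f2 v n).1 = (List.range n).map (G.outcomeFrom f1 f2 v) := by
  induction n with
  | zero => rfl
  | succ n ih =>
      rw [run_succ, List.range_succ, List.map_append, ← ih]
      rfl

lemma run_fst_length (G : GameGraph V) (f1 f2 : Strat V) (v : V) (n : ℕ) :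
    (G.run f1 f2 v n).1.length = n := by
  rw [run_fst]; simp

lemma outcomeFrom_succ (G : GameGraph V) (f1 f2 : Strat V) (v : V) (n : ℕ) :
    G.outcomeFrom f1 f2 v (n + 1) =
      if G.outcomeFrom f1 f2 v n ∈ G.V1 then
        f1 ((List.range n).map (G.outcomeFrom f1 f2 v)) (G.outcomeFrom f1 f2 v n)
      else f2 ((List.range n).map (G.outcomeFrom f1 f2 v)) (G.outcomeFrom f1 f2 v n) := by
  show (G.run f1 f2 v (n+1)).2 = _
  rw [run_succ, ← run_fst]
  rfl

/-- Generic congruence for runs of two games with the same moves along the way. -/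
lemma run_congr₂ (G G' : GameGraph V) (f1 f2 f1' f2' : Strat V) (v : V) (n : ℕ)
    (H : ∀ m < n,
      ((G'.run f1' f2' v m).2 ∈ G.V1 ↔ (G'.run f1' f2' v m).2 ∈ G'.V1) ∧
      ((G'.run f1' f2' v m).2 ∈ G.V1 →
        f1 (G'.run f1' f2' v m).1 (G'.run f1' f2' v m).2
          = f1' (G'.run f1' f2' v m).1 (G'.run f1' f2' v m).2) ∧
      ((G'.run f1' f2' v m).2 ∉ G.V1 →
        f2 (G'.run f1' f2' v m).1 (G'.run f1' f2' v m).2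
          = f2' (G'.run f1' f2' v m).1 (G'.run f1' f2' v m).2)) :
    G.run f1 f2 v n = G'.run f1' f2' v n := by
  induction n with
  | zero => rfl
  | succ n ih =>
      have ih' := ih (fun m hm => H m (Nat.lt_succ_of_lt hm))
      obtain ⟨hiff, h1, h2⟩ := H n (Nat.lt_succ_self n)
      rw [run_succ, run_succ, ih']
      by_cases hv : (G'.run f1' f2' v n).2 ∈ G.V1
      · rw [if_pos hv, if_pos (hiff.1 hv), h1 hv]
      · rw [if_neg hv, if_neg (fun hh => hv (hiff.2 hh)), h2 hv]

lemma run_congr (G : GameGraph V) (f1 f2 f1' f2' : Strat V) (v : V) (n : ℕ)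
    (H : ∀ m < n,
      ((G.run f1' f2' v m).2 ∈ G.V1 →
        f1 (G.run f1' f2' v m).1 (G.run f1' f2' v m).2
          = f1' (G.run f1' f2' v m).1 (G.run f1' f2' v m).2) ∧
      ((G.run f1' f2' v m).2 ∉ G.V1 →
        f2 (G.run f1' f2' v m).1 (G.run f1' f2' v m).2
          = f2' (G.run f1' f2' v m).1 (G.run f1' f2' v m).2)) :
    G.run f1 f2 v n = G.run f1' f2' v n :=
  run_congr₂ G G f1 f2 f1' f2' v n (fun m hm => ⟨Iff.rfl, (H m hm).1, (H m hm).2⟩)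

/-- Splitting a run at time `n`. -/
lemma run_shift (G : GameGraph V) (f1 f2 : Strat V) (v : V) (n m : ℕ) :
    G.run f1 f2 v (n + m) =
      ((G.run f1 f2 v n).1 ++
          (G.run (shiftS f1 (G.run f1 f2 v n).1) (shiftS f2 (G.run f1 f2 v n).1)
            (G.run f1 f2 v n).2 m).1,
        (G.run (shiftS f1 (G.run f1 f2 v n).1) (shiftS f2 (G.run f1 f2 v n).1)
            (G.run f1 f2 v n).2 m).2) := by
  induction m with
  | zero => show _ = ((G.run f1 f2 v n).1 ++ ([] : List V), (G.run f1 f2 v n).2)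
            simp
  | succ m ih =>
      have : n + (m + 1) = (n + m) + 1 := rfl
      rw [this, run_succ, ih, run_succ]
      simp [shiftS]

lemma outcomeFrom_shift (G : GameGraph V) (f1 f2 : Strat V) (v : V) (n m : ℕ) :
    G.outcomeFrom f1 f2 v (n + m) =
      G.outcomeFrom (shiftS f1 (G.run f1 f2 v n).1) (shiftS f2 (G.run f1 f2 v n).1)
        (G.run f1 f2 v n).2 m := by
  show (G.run f1 f2 v (n+m)).2 = _
  rw [run_shift]
  rfl

lemma infSet_tail (ρ : ℕ → V) (n : ℕ) : infSet (fun m => ρ (n + m)) = infSet ρ := by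
  ext u
  constructor
  · intro hu N
    obtain ⟨m, hm, he⟩ := hu N
    exact ⟨n + m, le_trans hm (Nat.le_add_left _ _), he⟩
  · intro hu m
    obtain ⟨M, hM, he⟩ := hu (n + m)
    refine ⟨M - n, ?_, ?_⟩
    · omega
    · show ρ (n + (M - n)) = u
      have : n + (M - n) = M := by omega
      rw [this]; exact he

lemma satObj_tail (γ : ObjKind) (ρ : ℕ → V) (α : Set V) (n : ℕ) :
    SatObj γ (fun m => ρ (n + m)) α ↔ SatObj γ ρ α := by
  cases γ <;> simp [SatObj, infSet_tail]

/-! #### First-hit index machinery -/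

noncomputable def fidx (P : V → Prop) (s : List V) : ℕ := s.findIdx fun y => decide (P y)

lemma fidx_eq_of (P : V → Prop) (s : List V) (j : ℕ) (hj : j < s.length)
    (h1 : P s[j]) (h2 : ∀ i (hi : i < j), ¬ P (s[i]'(hi.trans hj))) : fidx P s = j := by
  rw [fidx, List.findIdx_eq hj]
  exact ⟨by simpa using h1, fun i hi => by simpa using h2 i hi⟩

lemma fidx_eq_len (P : V → Prop) (s : List V) (h : ∀ x ∈ s, ¬ P x) : fidx P s = s.length := by
  rw [fidx, List.findIdx_eq_length]
  intro x hx; simpa using h x hx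

lemma fidx_lt_of_mem (P : V → Prop) {s : List V} {x : V} (hx : x ∈ s) (h : P x) :
    fidx P s < s.length := by
  rw [fidx, List.findIdx_lt_length]
  exact ⟨x, hx, by simpa using h⟩

lemma fidx_append_no (P : V → Prop) (l r : List V) (h : ∀ x ∈ l, ¬ P x) :
    fidx P (l ++ r) = l.length + fidx P r := by
  rw [fidx, List.findIdx_append]
  have hl : List.findIdx (fun y => decide (P y)) l = l.length := fidx_eq_len P l h
  rw [hl, if_neg (lt_irrefl _), Nat.add_comm]
  rfl

lemma getD_mapRange (ρ : ℕ → V) {n j : ℕ} (hj : j < n) (d : V) :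
    ((List.range n).map ρ).getD j d = ρ j := by
  rw [List.getD_eq_getElem _ _ (by simpa using hj)]
  simp

lemma fidx_mapRange (P : V → Prop) (ρ : ℕ → V) {n j : ℕ} (hj : j < n) (h1 : P (ρ j))
    (h2 : ∀ i < j, ¬ P (ρ i)) : fidx P ((List.range n).map ρ) = j := by
  refine fidx_eq_of P _ j (by simpa using hj) (by simpa using h1) ?_
  intro i hi
  simpa using h2 i hi

lemma fidx_mapRange_len (P : V → Prop) (ρ : ℕ → V) {n : ℕ} (h : ∀ i < n, ¬ P (ρ i)) :
    fidx P ((List.range n).map ρ) = n := by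
  have := fidx_eq_len P ((List.range n).map ρ) ?_
  · simpa using this
  · intro x hx
    obtain ⟨i, hi, rfl⟩ := by simpa [List.mem_map, List.mem_range] using hx
    exact h i hi

lemma hist_snoc (ρ : ℕ → V) (n : ℕ) :
    (List.range n).map ρ ++ [ρ n] = (List.range (n + 1)).map ρ := by
  rw [List.range_succ, List.map_append]
  rfl

/-! #### Avoid-set closure -/

noncomputable def consStrat (G : GameGraph V) (v w : V) (f : Strat V) : Strat V :=
  fun h x => match h with
  | [] => if x = v then w else dflt G x
  | _ :: t => f t x

lemma consStrat_strategy1 {G : GameGraph V} (hG : G.WellFormed) {v w : V} {f : Strat V}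
    (hE : G.E v w) (hf : G.IsStrategy1 f) : G.IsStrategy1 (consStrat G v w f) := by
  intro h x hx
  cases h with
  | nil =>
      show G.E x (if x = v then w else dflt G x)
      by_cases hxv : x = v
      · subst hxv; rw [if_pos rfl]; exact hE
      · rw [if_neg hxv]; exact dflt_spec G hG x
  | cons a t => exact hf t x hx

lemma consStrat_nil (G : GameGraph V) (v w : V) (f : Strat V) :
    consStrat G v w f [] v = w := if_pos rfl

lemma consStrat_shift (G : GameGraph V) (v w : V) (f : Strat V) :
    shiftS (consStrat G v w f) [v] = f := rfl

lemma avoid_not_mem {G : GameGraph V} (hG : G.WellFormed) {T : Set V} {v : V}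
    (hv : v ∈ AvoidSet G T) : v ∉ T := by
  obtain ⟨f2, hf2, hav⟩ := hv
  exact hav (fun _ x => dflt G x) (fun h x _ => dflt_spec G hG x) 0

lemma avoid_succ_V1 {G : GameGraph V} (hG : G.WellFormed) {T : Set V} {v w : V}
    (hv : v ∈ AvoidSet G T) (hv1 : v ∈ G.V1) (hE : G.E v w) : w ∈ AvoidSet G T := by
  obtain ⟨f2, hf2, hav⟩ := hv
  refine ⟨shiftS f2 [v], shiftS_strategy2 hf2 [v], ?_⟩
  intro f1' hf1' m
  set f1 : Strat V := consStrat G v w f1' with hf1def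
  have h1 : G.run f1 f2 v 1 = ([v], w) := by
    rw [run_succ]
    show (([] : List V) ++ [v], if v ∈ G.V1 then f1 [] v else f2 [] v) = ([v], w)
    rw [if_pos hv1, hf1def, consStrat_nil]
    rfl
  have := hav f1 (consStrat_strategy1 hG hE hf1') (1 + m)
  rw [outcomeFrom_shift G f1 f2 v 1 m, h1] at this
  have hsh : shiftS f1 [v] = f1' := consStrat_shift G v w f1'
  rwa [hsh] at this

lemma avoid_succ_V2 {G : GameGraph V} (hG : G.WellFormed) {T : Set V} {v : V}
    (hv : v ∈ AvoidSet G T) (hv2 : v ∈ G.V2) :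
    ∃ w, G.E v w ∧ w ∈ AvoidSet G T := by
  obtain ⟨f2, hf2, hav⟩ := hv
  refine ⟨f2 [] v, hf2 [] v hv2, shiftS f2 [v], shiftS_strategy2 hf2 [v], ?_⟩
  intro f1' hf1' m
  set f1 : Strat V := consStrat G v (dflt G v) f1' with hf1def
  have h1 : G.run f1 f2 v 1 = ([v], f2 [] v) := by
    rw [run_succ]
    show (([] : List V) ++ [v], if v ∈ G.V1 then f1 [] v else f2 [] v) = ([v], f2 [] v)
    rw [if_neg (not_V1 hG hv2)]
    rfl
  have := hav f1 (consStrat_strategy1 hG (dflt_spec G hG v) hf1') (1 + m)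
  rw [outcomeFrom_shift G f1 f2 v 1 m, h1] at this
  have hsh : shiftS f1 [v] = f1' := consStrat_shift G v _ f1'
  rwa [hsh] at this

/-! #### Attractor -/

def AttrN (G : GameGraph V) (T : Set V) : ℕ → Set V
  | 0 => T
  | n + 1 => AttrN G T n ∪ {x | x ∈ G.V1 ∧ ∃ w, G.E x w ∧ w ∈ AttrN G T n} ∪
      {x | x ∈ G.V2 ∧ ∀ w, G.E x w → w ∈ AttrN G T n}

def Attr (G : GameGraph V) (T : Set V) : Set V := {x | ∃ n, x ∈ AttrN G T n}

lemma attrN_mono (G : GameGraph V) (T : Set V) {m n : ℕ} (h : m ≤ n) :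
    AttrN G T m ⊆ AttrN G T n := by
  induction n with
  | zero => cases Nat.le_zero.1 h; exact fun _ hx => hx
  | succ n ih =>
      rcases Nat.lt_or_ge m (n + 1) with h' | h'
      · exact fun x hx => Or.inl (Or.inl (ih (Nat.lt_succ_iff.1 h') hx))
      · have : m = n + 1 := le_antisymm h h'
        subst this; exact fun _ hx => hx

noncomputable def rank (G : GameGraph V) (T : Set V) (x : V) : ℕ :=
  if h : ∃ n, x ∈ AttrN G T n then Nat.find h else 0

lemma rank_mem {G : GameGraph V} {T : Set V} {x : V} (hx : x ∈ Attr G T) :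
    x ∈ AttrN G T (rank G T x) := by
  have hx' : ∃ n, x ∈ AttrN G T n := hx
  rw [rank, dif_pos hx']
  exact Nat.find_spec hx'

lemma rank_le {G : GameGraph V} {T : Set V} {x : V} {n : ℕ} (hx : x ∈ AttrN G T n) :
    rank G T x ≤ n := by
  have he : ∃ m, x ∈ AttrN G T m := ⟨n, hx⟩
  rw [rank, dif_pos he]
  exact Nat.find_le hx

lemma attr_T {G : GameGraph V} {T : Set V} {x : V} (hx : x ∈ T) : x ∈ Attr G T := ⟨0, hx⟩

lemma attr_V2_all [Fintype V] {G : GameGraph V} {T : Set V} {x : V} (hx : x ∈ G.V2)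
    (h : ∀ w, G.E x w → w ∈ Attr G T) : x ∈ Attr G T := by
  classical
  set N := Finset.univ.sup (rank G T) with hN
  refine ⟨N + 1, Or.inr ⟨hx, fun w hw => ?_⟩⟩
  have hwA := h w hw
  have h1 : w ∈ AttrN G T (rank G T w) := rank_mem hwA
  exact attrN_mono G T (Finset.le_sup (Finset.mem_univ w)) h1

lemma not_attr_avoid [Fintype V] {G : GameGraph V} (hG : G.WellFormed) {T : Set V} {v : V}
    (hv : v ∉ Attr G T) : v ∈ AvoidSet G T := by
  classical
  set f2 : Strat V := fun _ x => if h : ∃ w, G.E x w ∧ w ∉ Attr G T then Classical.choose h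
    else dflt G x with hf2def
  have hf2 : G.IsStrategy2 f2 := by
    intro h x _
    rw [hf2def]
    by_cases hex : ∃ w, G.E x w ∧ w ∉ Attr G T
    · simp only [dif_pos hex]; exact (Classical.choose_spec hex).1
    · simp only [dif_neg hex]; exact dflt_spec G hG x
  refine ⟨f2, hf2, ?_⟩
  intro f1 hf1 n
  have key : ∀ m, G.outcomeFrom f1 f2 v m ∉ Attr G T := by
    intro m
    induction m with
    | zero => exact hv
    | succ m ih =>
        set x := G.outcomeFrom f1 f2 v m with hxdef
        rw [outcomeFrom_succ]
        by_cases hx1 : x ∈ G.V1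
        · rw [if_pos hx1]
          intro hcon
          obtain ⟨n', hn'⟩ := hcon
          exact ih ⟨n' + 1, Or.inl (Or.inr ⟨hx1, _, hf1 _ x hx1, hn'⟩)⟩
        · rw [if_neg hx1]
          have hx2 := mem_V2 hG hx1
          by_cases hex : ∃ w, G.E x w ∧ w ∉ Attr G T
          · show (if h : ∃ w, G.E x w ∧ w ∉ Attr G T then Classical.choose h else dflt G x)
              ∉ Attr G T
            rw [dif_pos hex]
            exact (Classical.choose_spec hex).2
          · exfalso
            apply ih
            refine attr_V2_all hx2 ?_
            intro w hw
            by_contra hcon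
            exact hex ⟨w, hw, hcon⟩
  intro hT
  exact key n (attr_T hT)

noncomputable def astrat (G : GameGraph V) (T : Set V) : Strat V := fun _ x =>
  if h : ∃ w, G.E x w ∧ w ∈ Attr G T ∧ rank G T w < rank G T x then Classical.choose h
  else dflt G x

lemma astrat_strategy1 {G : GameGraph V} (hG : G.WellFormed) (T : Set V) :
    G.IsStrategy1 (astrat G T) := by
  intro h x _
  rw [astrat]
  by_cases hex : ∃ w, G.E x w ∧ w ∈ Attr G T ∧ rank G T w < rank G T x
  · simp only [dif_pos hex]; exact (Classical.choose_spec hex).1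
  · simp only [dif_neg hex]; exact dflt_spec G hG x

lemma astrat_shift (G : GameGraph V) (T : Set V) (h : List V) :
    shiftS (astrat G T) h = astrat G T := rfl

lemma attr_reach {G : GameGraph V} (hG : G.WellFormed) {T : Set V} :
    ∀ r (x : V), rank G T x = r → x ∈ Attr G T → ∀ f2, G.IsStrategy2 f2 →
      ∃ n, G.outcomeFrom (astrat G T) f2 x n ∈ T := by
  intro r
  induction r using Nat.strong_induction_on with
  | _ r ih =>
    intro x hr hx f2 hf2
    by_cases hxT : x ∈ T
    · exact ⟨0, hxT⟩
    have hrpos : 0 < rank G T x := by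
      rcases Nat.eq_zero_or_pos (rank G T x) with h0 | h0
      · exfalso; exact hxT (by have := rank_mem hx; rwa [h0] at this)
      · exact h0
    have hmem : x ∈ AttrN G T (rank G T x) := rank_mem hx
    have hnot : x ∉ AttrN G T (rank G T x - 1) := by
      intro hcon
      have := rank_le hcon
      omega
    -- decompose membership at level `rank x = (rank x - 1) + 1`
    have hdec : x ∈ AttrN G T ((rank G T x - 1) + 1) := by
      have : (rank G T x - 1) + 1 = rank G T x := by omega
      rwa [this]
    have hstep : ∃ y, (if x ∈ G.V1 then astrat G T [] x else f2 [] x) = y ∧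
        y ∈ AttrN G T (rank G T x - 1) := by
      rcases hdec with (h1 | h1) | h1
      · exact absurd h1 hnot
      · obtain ⟨hx1, w, hw, hwA⟩ := h1
        have hex : ∃ w, G.E x w ∧ w ∈ Attr G T ∧ rank G T w < rank G T x :=
          ⟨w, hw, ⟨_, hwA⟩, lt_of_le_of_lt (rank_le hwA) (by omega)⟩
        refine ⟨astrat G T [] x, by rw [if_pos hx1], ?_⟩
        show astrat G T [] x ∈ AttrN G T (rank G T x - 1)
        rw [astrat, dif_pos hex]
        obtain ⟨hE', hA', hrlt⟩ := Classical.choose_spec hex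
        have := rank_mem hA'
        exact attrN_mono G T (by omega) this
      · obtain ⟨hx2, hall⟩ := h1
        exact ⟨f2 [] x, by rw [if_neg (not_V1 hG hx2)], hall (f2 [] x) (hf2 [] x hx2)⟩
    obtain ⟨y, hy, hyA⟩ := hstep
    have hyAttr : y ∈ Attr G T := ⟨_, hyA⟩
    have hylt : rank G T y < r := by
      have := rank_le hyA
      omega
    have h1 : G.run (astrat G T) f2 x 1 = ([x], y) := by
      rw [run_succ]
      show (([] : List V) ++ [x], if x ∈ G.V1 then astrat G T [] x else f2 [] x) = ([x], y)
      rw [hy]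
      rfl
    obtain ⟨m, hm⟩ := ih (rank G T y) hylt y rfl hyAttr (shiftS f2 [x])
      (shiftS_strategy2 hf2 [x])
    refine ⟨1 + m, ?_⟩
    rw [outcomeFrom_shift G _ f2 x 1 m, h1]
    exact hm

/-! #### `withInit` transparency -/

lemma run_withInit (G : GameGraph V) (u : V) (f1 f2 : Strat V) (w : V) (n : ℕ) :
    (G.withInit u).run f1 f2 w n = G.run f1 f2 w n := by
  induction n with
  | zero => rfl
  | succ n ih => rw [run_succ, run_succ, ih]; rfl

lemma outcome_withInit (G : GameGraph V) (u : V) (f1 f2 : Strat V) :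
    (G.withInit u).outcome f1 f2 = G.outcomeFrom f1 f2 u := by
  funext n
  show ((G.withInit u).run f1 f2 u n).2 = (G.run f1 f2 u n).2
  rw [run_withInit]

lemma isStrategy1_withInit {G : GameGraph V} {u : V} {f : Strat V} :
    (G.withInit u).IsStrategy1 f ↔ G.IsStrategy1 f := Iff.rfl

lemma isStrategy2_withInit {G : GameGraph V} {u : V} {f : Strat V} :
    (G.withInit u).IsStrategy2 f ↔ G.IsStrategy2 f := Iff.rfl

/-! #### Fork families and the composed "reach a fork, then cover" strategy -/

def Tset (G : GameGraph V) (γ : ObjKind) (k : ℕ) (β : Finset (Set V)) : Set V :=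
  {u | ForkVertex G γ k β u}

noncomputable def forkFam (G : GameGraph V) (γ : ObjKind) (k : ℕ) (β : Finset (Set V))
    (t : V) : Fin k → Strat V :=
  if h : ∃ F : Fin k → Strat V, (∀ i, (G.withInit t).IsStrategy1 (F i)) ∧
      IsCovering (G.withInit t) γ k β F then Classical.choose h
  else fun _ _ x => dflt G x

lemma forkFam_strategy1 {G : GameGraph V} (hG : G.WellFormed) (γ : ObjKind) (k : ℕ)
    (β : Finset (Set V)) (t : V) (i : Fin k) : G.IsStrategy1 (forkFam G γ k β t i) := by
  rw [forkFam]
  by_cases h : ∃ F : Fin k → Strat V, (∀ i, (G.withInit t).IsStrategy1 (F i)) ∧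
      IsCovering (G.withInit t) γ k β F
  · simp only [dif_pos h]
    exact (Classical.choose_spec h).1 i
  · simp only [dif_neg h]
    exact fun hh x hx => dflt_spec G hG x

lemma forkFam_cover {G : GameGraph V} {γ : ObjKind} {k : ℕ} {β : Finset (Set V)} {t : V}
    (ht : t ∈ Tset G γ k β) : IsCovering (G.withInit t) γ k β (forkFam G γ k β t) := by
  obtain ⟨-, l, -, -, F, h1, h2, -⟩ := ht
  have h : ∃ F : Fin k → Strat V, (∀ i, (G.withInit t).IsStrategy1 (F i)) ∧
      IsCovering (G.withInit t) γ k β F := ⟨F, h1, h2⟩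
  rw [forkFam, dif_pos h]
  exact (Classical.choose_spec h).2

lemma fidx_getD {P : V → Prop} {s : List V} (h : fidx P s < s.length) (d : V) :
    P (s.getD (fidx P s) d) := by
  rw [List.getD_eq_getElem s d h]
  have := @List.findIdx_getElem _ (fun y => decide (P y)) s h
  exact of_decide_eq_true this

noncomputable def postStrat (G : GameGraph V) (γ : ObjKind) (k : ℕ) (β : Finset (Set V))
    (i : Fin k) : Strat V := fun h x =>
  if fidx (· ∈ Tset G γ k β) (h ++ [x]) < (h ++ [x]).length then
    forkFam G γ k β ((h ++ [x]).getD (fidx (· ∈ Tset G γ k β) (h ++ [x])) x) i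
      (h.drop (fidx (· ∈ Tset G γ k β) (h ++ [x]))) x
  else astrat G (Tset G γ k β) h x

lemma postStrat_strategy1 {G : GameGraph V} (hG : G.WellFormed) (γ : ObjKind) (k : ℕ)
    (β : Finset (Set V)) (i : Fin k) : G.IsStrategy1 (postStrat G γ k β i) := by
  intro h x hx
  rw [postStrat]
  by_cases hc : fidx (· ∈ Tset G γ k β) (h ++ [x]) < (h ++ [x]).length
  · rw [if_pos hc]; exact forkFam_strategy1 hG γ k β _ i _ x hx
  · rw [if_neg hc]; exact astrat_strategy1 hG _ _ x hx

/-- Key evaluation: on a history of the form `H ++ rel` where `H` has no forks and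
`rel ++ [x]` starts at a fork `t`, `postStrat` plays the fork family of `t`. -/
lemma postStrat_eq_fork {G : GameGraph V} (γ : ObjKind) (k : ℕ) (β : Finset (Set V))
    (i : Fin k) (H rel : List V) (x t : V) (τ : ℕ → V) (m : ℕ)
    (hH : ∀ y ∈ H, y ∉ Tset G γ k β)
    (hrel : rel = (List.range m).map τ) (hx : x = τ m) (ht : τ 0 = t)
    (htT : t ∈ Tset G γ k β) :
    postStrat G γ k β i (H ++ rel) x = forkFam G γ k β t i rel x := by
  have hs : (H ++ rel) ++ [x] = H ++ (List.range (m + 1)).map τ := by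
    rw [List.append_assoc, hrel, hx, hist_snoc]
  have hfi : fidx (· ∈ Tset G γ k β) ((H ++ rel) ++ [x]) = H.length + 0 := by
    rw [hs, fidx_append_no _ _ _ hH]
    congr 1
    exact fidx_mapRange _ τ (by omega) (ht ▸ htT) (by omega)
  have hlen : H.length + 0 < ((H ++ rel) ++ [x]).length := by
    simp [hrel]
  have hgetD : ((H ++ rel) ++ [x]).getD (H.length + 0) x = t := by
    rw [List.append_assoc, List.getD_append_right H _ x _ (by omega)]
    have : H.length + 0 - H.length = 0 := by omega
    rw [this, hrel, hx, hist_snoc, getD_mapRange τ (by omega), ht]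
  have hdrop : (H ++ rel).drop (H.length + 0) = rel := by
    rw [List.drop_append]
    simp
  rw [postStrat, hfi, if_pos hlen, hgetD, hdrop]

/-- On a history with no fork anywhere, `postStrat` plays the attractor strategy. -/
lemma postStrat_eq_astrat {G : GameGraph V} (γ : ObjKind) (k : ℕ) (β : Finset (Set V))
    (i : Fin k) (h : List V) (x : V)
    (hno : ∀ y ∈ h ++ [x], y ∉ Tset G γ k β) :
    postStrat G γ k β i h x = astrat G (Tset G γ k β) h x := by
  have hfi : fidx (· ∈ Tset G γ k β) (h ++ [x]) = (h ++ [x]).length :=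
    fidx_eq_len _ _ hno
  rw [postStrat, hfi, if_neg (lt_irrefl _)]

/-- The core composition: from any vertex of the attractor of the fork set, the
composed strategies `postStrat` cover every objective against any strategy of
Player 2. -/
lemma core [Fintype V] {G : GameGraph V} (hG : G.WellFormed) (γ : ObjKind) (k : ℕ)
    (β : Finset (Set V)) {w : V} (hw : w ∈ Attr G (Tset G γ k β)) {f2 : Strat V}
    (hf2 : G.IsStrategy2 f2) :
    ∀ α ∈ β, ∃ i : Fin k, SatObj γ (G.outcomeFrom (postStrat G γ k β i) f2 w) α := by
  classical
  intro α hα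
  set T := Tset G γ k β with hTdef
  set σ := G.outcomeFrom (astrat G T) f2 w with hσdef
  obtain ⟨n0, hn0⟩ := attr_reach hG (rank G T w) w rfl hw f2 hf2
  have hex : ∃ n, σ n ∈ T := ⟨n0, hn0⟩
  set Q := Nat.find hex with hQdef
  have hQT : σ Q ∈ T := Nat.find_spec hex
  have hQmin : ∀ m < Q, σ m ∉ T := fun m hm => Nat.find_min hex hm
  -- Step 1: all agents follow the attractor play up to time Q.
  have claim1 : ∀ i : Fin k, G.run (postStrat G γ k β i) f2 w Q = G.run (astrat G T) f2 w Q := by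
    intro i
    apply run_congr
    intro m' hm'
    refine ⟨?_, fun _ => rfl⟩
    intro _
    have hno : ∀ y ∈ (List.range m').map σ ++ [σ m'], y ∉ Tset G γ k β := by
      intro y hy
      rw [hist_snoc] at hy
      obtain ⟨j, hj, rfl⟩ := by simpa [List.mem_map, List.mem_range] using hy
      exact hQmin j (by omega)
    have hcur : (G.run (astrat G T) f2 w m').2 = σ m' := rfl
    rw [run_fst, hcur]
    exact postStrat_eq_astrat γ k β i _ _ hno
  set t := σ Q with htdef
  have htT : t ∈ T := hQT
  set hQ : List V := (List.range Q).map σ with hhQdef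
  have hrunQ : ∀ i : Fin k, G.run (postStrat G γ k β i) f2 w Q = (hQ, t) := by
    intro i
    rw [claim1 i, Prod.ext_iff]
    exact ⟨run_fst _ _ _ _ _, rfl⟩
  have hHno : ∀ y ∈ hQ, y ∉ T := by
    intro y hy
    obtain ⟨j, hj, rfl⟩ := by simpa [hhQdef, List.mem_map, List.mem_range] using hy
    exact hQmin j hj
  -- Step 2: after time Q agent i follows the fork family for t.
  have claim2 : ∀ (i : Fin k) (m : ℕ),
      G.run (shiftS (postStrat G γ k β i) hQ) (shiftS f2 hQ) t m =
        G.run (forkFam G γ k β t i) (shiftS f2 hQ) t m := by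
    intro i m
    apply run_congr
    intro m' hm'
    refine ⟨?_, fun _ => rfl⟩
    intro _
    set τ : ℕ → V := G.outcomeFrom (forkFam G γ k β t i) (shiftS f2 hQ) t with hτdef
    have hcur : (G.run (forkFam G γ k β t i) (shiftS f2 hQ) t m').2 = τ m' := rfl
    rw [run_fst, hcur]
    show postStrat G γ k β i (hQ ++ (List.range m').map τ) (τ m') = _
    rw [postStrat_eq_fork γ k β i hQ _ (τ m') t τ m' hHno rfl rfl rfl htT]
  -- conclude
  have hcov := forkFam_cover htT (shiftS f2 hQ) (shiftS_strategy2 hf2 hQ) α hα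
  obtain ⟨i, hi⟩ := hcov
  refine ⟨i, ?_⟩
  rw [outcome_withInit] at hi
  have htail : ∀ m, G.outcomeFrom (postStrat G γ k β i) f2 w (Q + m) =
      G.outcomeFrom (forkFam G γ k β t i) (shiftS f2 hQ) t m := by
    intro m
    rw [outcomeFrom_shift G _ f2 w Q m, hrunQ i]
    show (G.run (shiftS (postStrat G γ k β i) hQ) (shiftS f2 hQ) t m).2 = _
    rw [claim2 i m]
    rfl
  have := (satObj_tail γ (G.outcomeFrom (postStrat G γ k β i) f2 w) α Q).1 ?_
  · exact this
  · have heq : (fun m => G.outcomeFrom (postStrat G γ k β i) f2 w (Q + m)) =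
        G.outcomeFrom (forkFam G γ k β t i) (shiftS f2 hQ) t := funext htail
    rw [heq]
    exact hi

/-- From any vertex of the attractor of the fork set, Coverer wins. -/
lemma covWins_of_attr [Fintype V] {G : GameGraph V} (hG : G.WellFormed) (γ : ObjKind)
    (k : ℕ) (β : Finset (Set V)) {v : V} (hv : v ∈ Attr G (Tset G γ k β)) :
    CovererWins (G.withInit v) γ k β := by
  refine ⟨postStrat G γ k β, fun i => (isStrategy1_withInit).2 (postStrat_strategy1 hG γ k β i), ?_⟩
  intro f2 hf2 α hα
  obtain ⟨i, hi⟩ := core hG γ k β hv ((isStrategy2_withInit (u := v)).1 hf2) α hα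
  refine ⟨i, ?_⟩
  rw [outcome_withInit]
  exact hi

/-! #### Forward direction: from a `k`-agent win inside the avoid set to a
one-agent win in the restricted game -/

lemma restrictedWin_of_covWins [Fintype V] {G : GameGraph V} (hG : G.WellFormed)
    (γ : ObjKind) (k : ℕ) (β : Finset (Set V)) (hk : 1 ≤ k) {v : V}
    (hv : v ∈ AvoidSet G (Tset G γ k β))
    (hwin : CovererWins (G.withInit v) γ k β) :
    CovererWins ((G.restrict (AvoidSet G (Tset G γ k β))).withInit v) γ 1 β := by
  classical
  set U := AvoidSet G (Tset G γ k β) with hUdef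
  set R := G.restrict U with hRdef
  obtain ⟨F, hF1, hFcov⟩ := hwin
  have hF1' : ∀ i, G.IsStrategy1 (F i) := hF1
  set i0 : Fin k := ⟨0, hk⟩ with hi0def
  set g : Strat V := F i0 with hgdef
  have hgR : R.IsStrategy1 g := by
    intro h x hx
    obtain ⟨hx1, hxU⟩ := hx
    exact ⟨hF1' i0 h x hx1, hxU, avoid_succ_V1 hG hxU hx1 (hF1' i0 h x hx1)⟩
  refine ⟨fun _ => g, fun _ => hgR, ?_⟩
  intro f2' hf2' α hα
  have hf2'' : R.IsStrategy2 f2' := hf2'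
  -- extend f2' to a Player-2 strategy of G
  set f2 : Strat V := fun h x => if x ∈ U then f2' h x else dflt G x with hf2def
  have hf2 : G.IsStrategy2 f2 := by
    intro h x hx
    by_cases hxU : x ∈ U
    · have : R.E x (f2' h x) := hf2'' h x ⟨hx, hxU⟩
      show G.E x (if x ∈ U then f2' h x else dflt G x)
      rw [if_pos hxU]
      exact this.1
    · show G.E x (if x ∈ U then f2' h x else dflt G x)
      rw [if_neg hxU]
      exact dflt_spec G hG x
  -- the invariant: all agents together, following the restricted run, inside U
  have inv : ∀ n, (∀ i, G.run (F i) f2 v n = G.run (F i0) f2 v n) ∧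
      G.run (F i0) f2 v n = R.run g f2' v n ∧ (G.run (F i0) f2 v n).2 ∈ U := by
    intro n
    induction n with
    | zero => exact ⟨fun i => rfl, rfl, hv⟩
    | succ n ih =>
        obtain ⟨ha, hb, hc⟩ := ih
        by_cases hx1 : (G.run (F i0) f2 v n).2 ∈ G.V1
        · -- Player 1 position: all agents must agree (else it would be a fork)
          have hall : ∀ i, F i (G.run (F i0) f2 v n).1 (G.run (F i0) f2 v n).2
              = F i0 (G.run (F i0) f2 v n).1 (G.run (F i0) f2 v n).2 := by
            by_contra hcon
            push_neg at hcon
            obtain ⟨i, hne⟩ := hcon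
            set p1 := (G.run (F i0) f2 v n).1 with hp1
            set x := (G.run (F i0) f2 v n).2 with hpx
            have hlen1 : p1.length = n := run_fst_length G (F i0) f2 v n
            -- the shifted family covers from x
            have hcovx : IsCovering (G.withInit x) γ k β (fun j => shiftS (F j) p1) := by
              intro f2c hf2c αc hαc
              set f2v : Strat V := fun y z =>
                if p1 <+: y then f2c (y.drop p1.length) z else f2 y z with hf2vdef
              have hf2v : G.IsStrategy2 f2v := by
                intro y z hz
                show G.E z (if p1 <+: y then f2c (y.drop p1.length) z else f2 y z)
                by_cases hp : p1 <+: y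
                · rw [if_pos hp]; exact hf2c _ z hz
                · rw [if_neg hp]; exact hf2 y z hz
              have hrn : ∀ j, G.run (F j) f2v v n = G.run (F j) f2 v n := by
                intro j
                apply run_congr
                intro m hm
                refine ⟨fun _ => rfl, fun _ => ?_⟩
                have hlm : (G.run (F j) f2 v m).1.length = m := run_fst_length G (F j) f2 v m
                have hnp : ¬ (p1 <+: (G.run (F j) f2 v m).1) := by
                  intro hpre
                  have := hpre.length_le
                  omega
                show (if p1 <+: (G.run (F j) f2 v m).1 then _ else f2 _ _) = f2 _ _
                rw [if_neg hnp]
              obtain ⟨j, hj⟩ := hFcov f2v hf2v αc hαc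
              refine ⟨j, ?_⟩
              rw [outcome_withInit] at hj ⊢
              have hsh : shiftS f2v p1 = f2c := by
                funext y z
                show (if p1 <+: p1 ++ y then f2c ((p1 ++ y).drop p1.length) z else f2 (p1 ++ y) z)
                  = f2c y z
                rw [if_pos (List.prefix_append p1 y), List.drop_left]
              have htail : ∀ m, G.outcomeFrom (F j) f2v v (n + m)
                  = G.outcomeFrom (shiftS (F j) p1) f2c x m := by
                intro m
                rw [outcomeFrom_shift G _ f2v v n m, hrn j, ha j]
                rw [← hp1, ← hpx, hsh]
              have hfun : (fun m => G.outcomeFrom (F j) f2v v (n + m))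
                  = G.outcomeFrom (shiftS (F j) p1) f2c x := funext htail
              rw [← hfun]
              exact (satObj_tail γ _ αc n).2 hj
            have hmemim : ∀ j : Fin k, F j p1 x ∈
                (Finset.univ.image fun jj => (shiftS (F jj) p1) [] x) := by
              intro j
              refine Finset.mem_image.2 ⟨j, Finset.mem_univ j, ?_⟩
              show F j (p1 ++ []) x = F j p1 x
              rw [List.append_nil]
            have hfork : ForkVertex G γ k β x := by
              refine ⟨hx1, (Finset.univ.image fun jj => (shiftS (F jj) p1) [] x).card, ?_, ?_,
                fun jj => shiftS (F jj) p1, fun jj => shiftS_strategy1 (hF1' jj) p1, hcovx, rfl⟩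
              · exact Finset.one_lt_card.2 ⟨F i p1 x, hmemim i, F i0 p1 x, hmemim i0, hne⟩
              · exact le_trans Finset.card_image_le (by simp)
            exact (avoid_not_mem hG hc) hfork
          refine ⟨?_, ?_, ?_⟩
          · intro i
            rw [run_succ, run_succ, ha i, if_pos hx1, if_pos hx1, hall i]
          · rw [run_succ, run_succ (G := R), ← hb, if_pos hx1]
            have hxR : (G.run (F i0) f2 v n).2 ∈ R.V1 := ⟨hx1, hc⟩
            rw [if_pos hxR]
          · have : (G.run (F i0) f2 v (n+1)).2
                = F i0 (G.run (F i0) f2 v n).1 (G.run (F i0) f2 v n).2 := by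
              rw [run_succ, if_pos hx1]
            rw [this]
            exact avoid_succ_V1 hG hc hx1 (hF1' i0 _ _ hx1)
        · -- Player 2 position
          have hx2 : (G.run (F i0) f2 v n).2 ∈ G.V2 := mem_V2 hG hx1
          have hmove : f2 (G.run (F i0) f2 v n).1 (G.run (F i0) f2 v n).2
              = f2' (G.run (F i0) f2 v n).1 (G.run (F i0) f2 v n).2 := by
            show (if (G.run (F i0) f2 v n).2 ∈ U then _ else _) = _
            rw [if_pos hc]
          have hmU : f2' (G.run (F i0) f2 v n).1 (G.run (F i0) f2 v n).2 ∈ U :=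
            (hf2'' _ _ ⟨hx2, hc⟩).2.2
          refine ⟨?_, ?_, ?_⟩
          · intro i
            rw [run_succ, run_succ, ha i]
            simp only [if_neg hx1]
          · rw [run_succ, run_succ (G := R), ← hb, if_neg hx1]
            have hxR : (G.run (F i0) f2 v n).2 ∉ R.V1 := fun hh => hx1 hh.1
            rw [if_neg hxR, hmove]
          · have : (G.run (F i0) f2 v (n+1)).2
                = f2 (G.run (F i0) f2 v n).1 (G.run (F i0) f2 v n).2 := by
              rw [run_succ, if_neg hx1]
            rw [this, hmove]
            exact hmU
  obtain ⟨i, hi⟩ := hFcov f2 hf2 α hα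
  refine ⟨0, ?_⟩
  rw [outcome_withInit] at hi ⊢
  have heq : G.outcomeFrom (F i) f2 v = R.outcomeFrom g f2' v := by
    funext n
    show (G.run (F i) f2 v n).2 = (R.run g f2' v n).2
    rw [(inv n).1 i, (inv n).2.1]
  rw [← heq]
  exact hi

/-! #### Backward direction: lifting a one-agent restricted win -/

noncomputable def liftStrat (G : GameGraph V) (γ : ObjKind) (k : ℕ) (β : Finset (Set V))
    (U : Set V) (g : Strat V) (i : Fin k) : Strat V := fun h x =>
  if fidx (· ∈ Tset G γ k β) (h ++ [x]) < (h ++ [x]).length then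
    forkFam G γ k β ((h ++ [x]).getD (fidx (· ∈ Tset G γ k β) (h ++ [x])) x) i
      (h.drop (fidx (· ∈ Tset G γ k β) (h ++ [x]))) x
  else if fidx (· ∉ U) (h ++ [x]) < (h ++ [x]).length then astrat G (Tset G γ k β) h x
  else g h x

/-- When the whole history (including the current vertex) lies in the avoid set,
`liftStrat` plays `g`. -/
lemma liftStrat_eq_g {G : GameGraph V} (hG : G.WellFormed) (γ : ObjKind) (k : ℕ)
    (β : Finset (Set V)) (g : Strat V) (i : Fin k) (h : List V) (x : V)
    (hall : ∀ y ∈ h ++ [x], y ∈ AvoidSet G (Tset G γ k β)) :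
    liftStrat G γ k β (AvoidSet G (Tset G γ k β)) g i h x = g h x := by
  have h1 : fidx (· ∈ Tset G γ k β) (h ++ [x]) = (h ++ [x]).length :=
    fidx_eq_len _ _ (fun y hy => avoid_not_mem hG (hall y hy))
  have h2 : fidx (· ∉ AvoidSet G (Tset G γ k β)) (h ++ [x]) = (h ++ [x]).length :=
    fidx_eq_len _ _ (fun y hy hny => hny (hall y hy))
  rw [liftStrat, h1, if_neg (lt_irrefl _), h2, if_neg (lt_irrefl _)]

/-- After the play has left the avoid set, `liftStrat` behaves (relative to the
prefix `H`) exactly like `postStrat`. -/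
lemma liftStrat_eq_post {G : GameGraph V} (γ : ObjKind) (k : ℕ) (β : Finset (Set V))
    (U : Set V) (g : Strat V) (i : Fin k) (H : List V) (τ : ℕ → V) (m : ℕ)
    (hH : ∀ y ∈ H, y ∉ Tset G γ k β) (hw : τ 0 ∉ U) :
    liftStrat G γ k β U g i (H ++ (List.range m).map τ) (τ m)
      = postStrat G γ k β i ((List.range m).map τ) (τ m) := by
  set rel : List V := (List.range m).map τ with hreldef
  set x : V := τ m with hxdef
  have hs : (H ++ rel) ++ [x] = H ++ (rel ++ [x]) := by rw [List.append_assoc]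
  have hsnoc : rel ++ [x] = (List.range (m + 1)).map τ := hist_snoc τ m
  have hlenrel : (rel ++ [x]).length = m + 1 := by simp [hreldef]
  have hτ0mem : τ 0 ∈ rel ++ [x] := by
    rw [hsnoc]
    exact List.mem_map.2 ⟨0, List.mem_range.2 (Nat.succ_pos m), rfl⟩
  by_cases hT : fidx (· ∈ Tset G γ k β) (rel ++ [x]) < (rel ++ [x]).length
  · -- fork branch on both sides
    set q' := fidx (· ∈ Tset G γ k β) (rel ++ [x]) with hq'def
    have hglob : fidx (· ∈ Tset G γ k β) ((H ++ rel) ++ [x]) = H.length + q' := by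
      rw [hs, fidx_append_no _ _ _ hH]
    have hgloblt : H.length + q' < ((H ++ rel) ++ [x]).length := by
      have : ((H ++ rel) ++ [x]).length = H.length + (rel ++ [x]).length := by simp
      omega
    have hgetD : ((H ++ rel) ++ [x]).getD (H.length + q') x = (rel ++ [x]).getD q' x := by
      rw [hs, List.getD_append_right H _ x _ (by omega)]
      congr 1
      omega
    have hdrop : (H ++ rel).drop (H.length + q') = rel.drop q' := by simp [List.drop_append]
    rw [liftStrat, postStrat, hglob, if_pos hgloblt, if_pos hT, hgetD, hdrop]
  · -- attractor branch on both sides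
    have hge : fidx (· ∈ Tset G γ k β) (rel ++ [x]) = (rel ++ [x]).length := by
      have := List.findIdx_le_length (p := fun y => decide (y ∈ Tset G γ k β)) (xs := rel ++ [x])
      have h2 : fidx (· ∈ Tset G γ k β) (rel ++ [x]) ≤ (rel ++ [x]).length := this
      omega
    have hglob : fidx (· ∈ Tset G γ k β) ((H ++ rel) ++ [x])
        = H.length + (rel ++ [x]).length := by
      rw [hs, fidx_append_no _ _ _ hH, hge]
    have hnoglob : ¬ fidx (· ∈ Tset G γ k β) ((H ++ rel) ++ [x])
        < ((H ++ rel) ++ [x]).length := by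
      have : ((H ++ rel) ++ [x]).length = H.length + (rel ++ [x]).length := by simp
      omega
    have hUexit : fidx (· ∉ U) ((H ++ rel) ++ [x]) < ((H ++ rel) ++ [x]).length := by
      refine fidx_lt_of_mem (· ∉ U) ?_ hw
      rw [hs]
      exact List.mem_append_right H hτ0mem
    rw [liftStrat, postStrat, if_neg hnoglob, if_neg hT, if_pos hUexit]
    rfl

lemma liftStrat_strategy1 [Fintype V] {G : GameGraph V} (hG : G.WellFormed) (γ : ObjKind)
    (k : ℕ) (β : Finset (Set V)) {g : Strat V}
    (hg : (G.restrict (AvoidSet G (Tset G γ k β))).IsStrategy1 g) (i : Fin k) :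
    G.IsStrategy1 (liftStrat G γ k β (AvoidSet G (Tset G γ k β)) g i) := by
  intro h x hx
  rw [liftStrat]
  by_cases h1 : fidx (· ∈ Tset G γ k β) (h ++ [x]) < (h ++ [x]).length
  · rw [if_pos h1]
    exact forkFam_strategy1 hG γ k β _ i _ x hx
  · rw [if_neg h1]
    by_cases h2 : fidx (· ∉ AvoidSet G (Tset G γ k β)) (h ++ [x]) < (h ++ [x]).length
    · rw [if_pos h2]
      exact astrat_strategy1 hG _ _ x hx
    · rw [if_neg h2]
      have hxU : x ∈ AvoidSet G (Tset G γ k β) := by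
        by_contra hxn
        exact h2 (fidx_lt_of_mem (· ∉ AvoidSet G (Tset G γ k β))
          (List.mem_append_right h (List.mem_singleton_self x)) hxn)
      exact (hg h x ⟨hx, hxU⟩).1

lemma covWins_lift [Fintype V] {G : GameGraph V} (hG : G.WellFormed) (γ : ObjKind)
    (k : ℕ) (β : Finset (Set V)) (hk : 1 ≤ k) {v : V}
    (hv : v ∈ AvoidSet G (Tset G γ k β))
    (hres : CovererWins ((G.restrict (AvoidSet G (Tset G γ k β))).withInit v) γ 1 β) :
    CovererWins (G.withInit v) γ k β := by
  classical
  set U := AvoidSet G (Tset G γ k β) with hUdef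
  set R := G.restrict U with hRdef
  obtain ⟨Fr, hFr1, hFrcov⟩ := hres
  set g : Strat V := Fr 0 with hgdef
  have hgR : R.IsStrategy1 g := hFr1 0
  set B : Fin k → Strat V := liftStrat G γ k β U g with hBdef
  refine ⟨B, fun i => liftStrat_strategy1 hG γ k β hgR i, ?_⟩
  intro f2 hf2 α hα
  have hf2G : G.IsStrategy2 f2 := hf2
  -- the restricted response strategy
  set usucc : V → V := fun x => if h : ∃ w, G.E x w ∧ w ∈ U then Classical.choose h else x
    with husuccdef
  set f2' : Strat V := fun h x =>
    if G.E x (f2 h x) ∧ x ∈ U ∧ f2 h x ∈ U then f2 h x else usucc x with hf2'def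
  have husucc_mem : ∀ x ∈ U, usucc x ∈ U := by
    intro x hx
    rw [husuccdef]
    by_cases hex : ∃ w, G.E x w ∧ w ∈ U
    · simp only [dif_pos hex]; exact (Classical.choose_spec hex).2
    · simp only [dif_neg hex]; exact hx
  have hf2'mem : ∀ h x, x ∈ U → f2' h x ∈ U := by
    intro h x hx
    rw [hf2'def]
    by_cases hc : G.E x (f2 h x) ∧ x ∈ U ∧ f2 h x ∈ U
    · simp only [if_pos hc]; exact hc.2.2
    · simp only [if_neg hc]; exact husucc_mem x hx
  have hf2' : R.IsStrategy2 f2' := by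
    intro h x hx
    obtain ⟨hx2, hxU⟩ := hx
    show R.E x (if G.E x (f2 h x) ∧ x ∈ U ∧ f2 h x ∈ U then f2 h x else usucc x)
    by_cases hc : G.E x (f2 h x) ∧ x ∈ U ∧ f2 h x ∈ U
    · rw [if_pos hc]; exact ⟨hc.1, hc.2.1, hc.2.2⟩
    · rw [if_neg hc]
      have hex : ∃ w, G.E x w ∧ w ∈ U := avoid_succ_V2 hG hxU hx2
      show R.E x (if h : ∃ w, G.E x w ∧ w ∈ U then Classical.choose h else x)
      rw [dif_pos hex]
      exact ⟨(Classical.choose_spec hex).1, hxU, (Classical.choose_spec hex).2⟩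
  -- the restricted run stays in U
  have hσU : ∀ n, (R.run g f2' v n).2 ∈ U := by
    intro n
    induction n with
    | zero => exact hv
    | succ n ih =>
        rw [run_succ]
        by_cases hy : (R.run g f2' v n).2 ∈ R.V1
        · show (if (R.run g f2' v n).2 ∈ R.V1 then _ else _) ∈ U
          rw [if_pos hy]
          exact (hgR _ _ hy).2.2
        · show (if (R.run g f2' v n).2 ∈ R.V1 then _ else _) ∈ U
          rw [if_neg hy]
          exact hf2'mem _ _ ih
  -- the matching condition
  set C : ℕ → Prop := fun n => (R.run g f2' v n).2 ∈ G.V1 ∨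
    f2 (R.run g f2' v n).1 (R.run g f2' v n).2 ∈ U with hCdef
  have hmatch : ∀ m, (∀ m' < m, C m') → ∀ i, G.run (B i) f2 v m = R.run g f2' v m := by
    intro m hm i
    apply run_congr₂
    intro m' hm'
    have hqU : (R.run g f2' v m').2 ∈ U := hσU m'
    refine ⟨⟨fun h1 => ⟨h1, hqU⟩, fun h1 => h1.1⟩, ?_, ?_⟩
    · intro h1
      have hallU : ∀ y ∈ (R.run g f2' v m').1 ++ [(R.run g f2' v m').2], y ∈ U := by
        rw [run_fst]
        have hcur : (R.run g f2' v m').2 = R.outcomeFrom g f2' v m' := rfl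
        rw [hcur, hist_snoc]
        intro y hy
        obtain ⟨j, hj, rfl⟩ := by simpa [List.mem_map, List.mem_range] using hy
        exact hσU j
      exact liftStrat_eq_g hG γ k β g i _ _ hallU
    · intro h1
      have hC := hm m' hm'
      have hfU : f2 (R.run g f2' v m').1 (R.run g f2' v m').2 ∈ U := by
        rcases hC with hC | hC
        · exact absurd hC h1
        · exact hC
      have hx2 : (R.run g f2' v m').2 ∈ G.V2 := mem_V2 hG h1
      show f2 _ _ = (if G.E _ (f2 _ _) ∧ _ ∈ U ∧ f2 _ _ ∈ U then f2 _ _ else usucc _)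
      rw [if_pos ⟨hf2G _ _ hx2, hqU, hfU⟩]
  by_cases hC : ∀ n, C n
  · -- the play never leaves U: it is the restricted play
    obtain ⟨i1, hi1⟩ := hFrcov f2' hf2' α hα
    have hi10 : Fr i1 = g := by rw [hgdef, Subsingleton.elim i1 0]
    refine ⟨⟨0, hk⟩, ?_⟩
    rw [outcome_withInit]
    rw [outcome_withInit, hi10] at hi1
    have heq : G.outcomeFrom (B ⟨0, hk⟩) f2 v = R.outcomeFrom g f2' v := by
      funext n
      show (G.run (B ⟨0, hk⟩) f2 v n).2 = (R.run g f2' v n).2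
      rw [hmatch n (fun m' _ => hC m') ⟨0, hk⟩]
    rw [heq]
    exact hi1
  · -- Player 2 leaves U at some least time p; continue with `postStrat`
    have hCn : ∃ n, ¬ C n := by push_neg at hC; exact hC
    set p := Nat.find hCn with hpdef
    have hp : ¬ C p := Nat.find_spec hCn
    have hpmin : ∀ m' < p, C m' := fun m' hm' => not_not.1 (Nat.find_min hCn hm')
    have hx1 : (R.run g f2' v p).2 ∉ G.V1 := fun hh => hp (Or.inl hh)
    set w : V := f2 (R.run g f2' v p).1 (R.run g f2' v p).2 with hwdef
    have hwU : w ∉ U := fun hh => hp (Or.inr hh)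
    have hwAttr : w ∈ Attr G (Tset G γ k β) := by
      by_contra hcon
      exact hwU (not_attr_avoid hG hcon)
    have hrunp : ∀ i, G.run (B i) f2 v p = R.run g f2' v p := hmatch p hpmin
    set H : List V := (R.run g f2' v p).1 ++ [(R.run g f2' v p).2] with hHdef
    have hrunp1 : ∀ i, G.run (B i) f2 v (p + 1) = (H, w) := by
      intro i
      rw [run_succ, hrunp i, if_neg hx1]
    have hHU : ∀ y ∈ H, y ∈ U := by
      rw [hHdef, run_fst]
      have hcur : (R.run g f2' v p).2 = R.outcomeFrom g f2' v p := rfl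
      rw [hcur, hist_snoc]
      intro y hy
      obtain ⟨j, hj, rfl⟩ := by simpa [List.mem_map, List.mem_range] using hy
      exact hσU j
    have hHnoT : ∀ y ∈ H, y ∉ Tset G γ k β := fun y hy => avoid_not_mem hG (hHU y hy)
    have hpost : ∀ (i : Fin k) (m : ℕ),
        G.run (shiftS (B i) H) (shiftS f2 H) w m
          = G.run (postStrat G γ k β i) (shiftS f2 H) w m := by
      intro i m
      apply run_congr
      intro m' hm'
      refine ⟨?_, fun _ => rfl⟩
      intro _
      set τ : ℕ → V := G.outcomeFrom (postStrat G γ k β i) (shiftS f2 H) w with hτdef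
      have hcur : (G.run (postStrat G γ k β i) (shiftS f2 H) w m').2 = τ m' := rfl
      rw [run_fst, hcur]
      show liftStrat G γ k β U g i (H ++ (List.range m').map τ) (τ m')
        = postStrat G γ k β i ((List.range m').map τ) (τ m')
      exact liftStrat_eq_post γ k β U g i H τ m' hHnoT hwU
    obtain ⟨i, hi⟩ := core hG γ k β hwAttr (shiftS_strategy2 hf2G H) α hα
    refine ⟨i, ?_⟩
    rw [outcome_withInit]
    have htail : ∀ m, G.outcomeFrom (B i) f2 v ((p + 1) + m)
        = G.outcomeFrom (postStrat G γ k β i) (shiftS f2 H) w m := by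
      intro m
      rw [outcomeFrom_shift G _ f2 v (p + 1) m, hrunp1 i]
      show (G.run (shiftS (B i) H) (shiftS f2 H) w m).2 = _
      rw [hpost i m]
      rfl
    have hfun : (fun m => G.outcomeFrom (B i) f2 v ((p + 1) + m))
        = G.outcomeFrom (postStrat G γ k β i) (shiftS f2 H) w := funext htail
    have := (satObj_tail γ (G.outcomeFrom (B i) f2 v) α (p + 1)).1 (by rw [hfun]; exact hi)
    exact this

end S9

/-- Coverer has a covering strategy in (Gᵛ, k, β) iff v ∉ V_avoid, or
v ∈ V_avoid and Coverer has a covering strategy in the one-agent game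
(G_avoidᵛ, 1, β). -/
theorem stmt9 {V : Type u} [Fintype V] (γ : ObjKind) (G : GameGraph V)
    (hG : G.WellFormed) (k : ℕ) (hk : 1 ≤ k) (β : Finset (Set V)) (v : V) :
    CovererWins (G.withInit v) γ k β ↔
      (v ∉ AvoidSet G {u | ForkVertex G γ k β u} ∨
        (v ∈ AvoidSet G {u | ForkVertex G γ k β u} ∧
          CovererWins
            ((G.restrict (AvoidSet G {u | ForkVertex G γ k β u})).withInit v)
            γ 1 β)) := by
  classical
  constructor
  · intro hwin
    by_cases hv : v ∈ AvoidSet G {u | ForkVertex G γ k β u}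
    · exact Or.inr ⟨hv, S9.restrictedWin_of_covWins hG γ k β hk hv hwin⟩
    · exact Or.inl hv
  · rintro (hv | ⟨hv, hres⟩)
    · have hattr : v ∈ S9.Attr G (S9.Tset G γ k β) := by
        by_contra hcon
        exact hv (S9.not_attr_avoid hG hcon)
      exact S9.covWins_of_attr hG γ k β hattr
    · exact S9.covWins_lift hG γ k β hk hv hres
end

section
/- Let γ ∈ {Büchi, co-Büchi} and let (G, k, β) be a γ-coverage game. A Player-2 strategy f₂ is a disrupting strategy in (G, k, β) if and only if for every choice of k sets δ₁, …, δ_k ∈ Δ_{f₂} (repetitions allowed), δ₁ ∪ … ∪ δ_k ≠ β. -/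
open scoped Classical

universe u

variable {V : Type u}

/-- `sat(ρ, β)`: the set of objectives of `β` satisfied by the play `ρ`. -/
def satPlays (γ : ObjKind) (ρ : ℕ → V) (β : Finset (Set V)) : Set (Set V) :=
  {α | α ∈ β ∧ SatObj γ ρ α}

/-- `Δ_{f₂}`: the set of maximal elements, under set inclusion, of the family
`{sat(outcome(f₁, f₂), β) : f₁ a Player-1 strategy}`. -/
def DeltaFam (G : GameGraph V) (γ : ObjKind) (β : Finset (Set V)) (f2 : Strat V) :
    Set (Set (Set V)) :=
  {δ | (∃ f1, G.IsStrategy1 f1 ∧ satPlays γ (G.outcome f1 f2) β = δ) ∧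
    ∀ f1, G.IsStrategy1 f1 → δ ⊆ satPlays γ (G.outcome f1 f2) β →
      satPlays γ (G.outcome f1 f2) β = δ}

/-- a Player-2 strategy f₂ is disrupting in (G, k, β) iff for every
choice of k sets δ₁, …, δ_k ∈ Δ_{f₂} (repetitions allowed), δ₁ ∪ … ∪ δ_k ≠ β. -/
theorem stmt11 {V : Type u} [Fintype V] (γ : ObjKind) (G : GameGraph V)
    (hG : G.WellFormed) (k : ℕ) (hk : 1 ≤ k) (β : Finset (Set V))
    (f2 : Strat V) (hf2 : G.IsStrategy2 f2) :
    IsDisrupting G γ k β f2 ↔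
      ∀ δs : Fin k → Set (Set V), (∀ i, δs i ∈ DeltaFam G γ β f2) →
        (⋃ i, δs i) ≠ (β : Set (Set V)) := by
  classical
  constructor
  · intro hd δs hδ hEq
    obtain ⟨F, hF1, hFs⟩ : ∃ F : Fin k → Strat V, (∀ i, G.IsStrategy1 (F i)) ∧
        ∀ i, satPlays γ (G.outcome (F i) f2) β = δs i := by
      choose F h1 h2 using fun i => (hδ i).1
      exact ⟨F, h1, h2⟩
    obtain ⟨α, hαβ, hα⟩ := hd F hF1
    have hmem : α ∈ ⋃ i, δs i := by rw [hEq]; exact hαβ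
    obtain ⟨i, hi⟩ := Set.mem_iUnion.mp hmem
    rw [← hFs i] at hi
    exact hα i hi.2
  · intro h F hF1
    have key : ∀ i : Fin k, ∃ δ ∈ DeltaFam G γ β f2,
        satPlays γ (G.outcome (F i) f2) β ⊆ δ := by
      intro i
      set s0 := satPlays γ (G.outcome (F i) f2) β with hs0
      set T : Set (Set (Set V)) :=
        {x | (∃ f1, G.IsStrategy1 f1 ∧ satPlays γ (G.outcome f1 f2) β = x) ∧ s0 ⊆ x} with hT
      have hfin : T.Finite := Set.toFinite T
      have hne : T.Nonempty := ⟨s0, ⟨F i, hF1 i, rfl⟩, subset_rfl⟩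
      obtain ⟨δ, hδT, hmax⟩ := Set.Finite.exists_maximal hfin hne
      refine ⟨δ, ⟨hδT.1, ?_⟩, hδT.2⟩
      intro f1 hf1 hsub
      have hmem : satPlays γ (G.outcome f1 f2) β ∈ T :=
        ⟨⟨f1, hf1, rfl⟩, hδT.2.trans hsub⟩
      exact Set.Subset.antisymm (hmax hmem hsub) hsub
    choose δs hδs hsub using key
    have hne := h δs hδs
    have hex : ∃ α ∈ β, α ∉ ⋃ i, δs i := by
      by_contra hc
      push_neg at hc
      apply hne
      apply Set.Subset.antisymm
      · intro α hα
        obtain ⟨i, hi⟩ := Set.mem_iUnion.mp hα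
        obtain ⟨f1, _, hf⟩ := (hδs i).1
        rw [← hf] at hi
        exact hi.1
      · intro α hα
        exact hc α hα
    obtain ⟨α, hαβ, hα⟩ := hex
    refine ⟨α, hαβ, fun i hsat => ?_⟩
    exact hα (Set.mem_iUnion.mpr ⟨i, hsub i ⟨hαβ, hsat⟩⟩)
end
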